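/- arXiv:1606.02544 — 5 statements merged into one kernel-verified Lean document; each statement's English description precedes it below -/
import Mathlib

section
/- If m and n are positive integers and there exists a map λ : {+,-,0}^n \ {0} → {±1,...,±m} with λ(-x) = -λ(x) for all x and λ(x)+λ(y) ≠ 0 whenever x ⪯ y, then m ≥ n. -/
open Finset

/-- The partial order `⪯` on sign vectors: `x ⪯ y` iff every nonzero coordinate
of `x` agrees with `y`. -/
def SignLe {n : ℕ} (x y : Fin n → SignType) : Prop :=
  ∀ i, x i ≠ 0 → x i = y i

open scoped Classical


open scoped Classical

section AltOn
variable {ι κ : Type*} [DecidableEq ι] [DecidableEq κ]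

/-- The label set `ℓ` restricted to `s` is "alternating with parity `b`". -/
def AltOn (b : Bool) (s : Finset ι) (ℓ : ι → ℤ) : Prop :=
  (∀ k ∈ s, ∀ k' ∈ s, |ℓ k| = |ℓ k'| → k = k') ∧
    ∀ k ∈ s, (0 < ℓ k ↔ (Even ((s.filter (fun k' => |ℓ k'| < |ℓ k|)).card) ↔ b = true))

lemma altOn_congr_of {b : Bool} {s : Finset ι} {ℓ ℓ' : ι → ℤ}
    (h : ∀ k ∈ s, ℓ k = ℓ' k) : AltOn b s ℓ → AltOn b s ℓ' := by
  rintro ⟨h1, h2⟩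
  constructor
  · intro k hk k' hk' he
    exact h1 k hk k' hk' (by rw [h k hk, h k' hk']; exact he)
  · intro k hk
    have hc : (s.filter fun k' => |ℓ' k'| < |ℓ' k|) = (s.filter fun k' => |ℓ k'| < |ℓ k|) :=
      Finset.filter_congr (by intro k' hk'; rw [h k' hk', h k hk])
    rw [hc, ← h k hk]
    exact h2 k hk

lemma altOn_congr {b : Bool} {s : Finset ι} {ℓ ℓ' : ι → ℤ}
    (h : ∀ k ∈ s, ℓ k = ℓ' k) : AltOn b s ℓ ↔ AltOn b s ℓ' :=
  ⟨altOn_congr_of h, altOn_congr_of (fun k hk => (h k hk).symm)⟩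

lemma altOn_map (b : Bool) (s : Finset ι) (ℓ : ι → ℤ) (ℓ' : κ → ℤ) (e : ι ↪ κ)
    (hl : ∀ k ∈ s, ℓ' (e k) = ℓ k) : AltOn b (s.map e) ℓ' ↔ AltOn b s ℓ := by
  have hfil : ∀ k ∈ s, ((s.map e).filter (fun k' => |ℓ' k'| < |ℓ' (e k)|))
      = (s.filter (fun k' => |ℓ k'| < |ℓ k|)).map e := by
    intro k hk
    rw [Finset.filter_map]
    congr 1
    apply Finset.filter_congr
    intro k' hk'
    simp only [Function.comp_apply, hl k' hk', hl k hk]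
  constructor
  · rintro ⟨h1, h2⟩
    constructor
    · intro k hk k' hk' he
      exact e.injective (h1 (e k) (Finset.mem_map_of_mem e hk) (e k') (Finset.mem_map_of_mem e hk')
        (by rw [hl k hk, hl k' hk']; exact he))
    · intro k hk
      have := h2 (e k) (Finset.mem_map_of_mem e hk)
      rwa [hfil k hk, Finset.card_map, hl k hk] at this
  · rintro ⟨h1, h2⟩
    constructor
    · intro k hk k' hk' he
      obtain ⟨a, ha, rfl⟩ := Finset.mem_map.mp hk
      obtain ⟨a', ha', rfl⟩ := Finset.mem_map.mp hk'
      rw [hl a ha, hl a' ha'] at he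
      exact congrArg e (h1 a ha a' ha' he)
    · intro k hk
      obtain ⟨a, ha, rfl⟩ := Finset.mem_map.mp hk
      rw [hfil a ha, Finset.card_map, hl a ha]
      exact h2 a ha

lemma altOn_neg_of {b : Bool} {s : Finset ι} {ℓ : ι → ℤ} (hz : ∀ k ∈ s, ℓ k ≠ 0)
    (h : AltOn b s ℓ) : AltOn (!b) s (fun k => -ℓ k) := by
  obtain ⟨h1, h2⟩ := h
  constructor
  · intro k hk k' hk' he
    simp only [abs_neg] at he
    exact h1 k hk k' hk' he
  · intro k hk
    have hc : (s.filter fun k' => |(fun k => -ℓ k) k'| < |(fun k => -ℓ k) k|)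
        = (s.filter fun k' => |ℓ k'| < |ℓ k|) :=
      Finset.filter_congr (by intro k' _; simp [abs_neg])
    have hneg : (0 : ℤ) < -ℓ k ↔ ¬(0 < ℓ k) := by
      rcases (hz k hk).lt_or_gt with h | h
      · simp [neg_pos, h, not_lt, h.le]
      · constructor
        · intro hh; omega
        · intro hh; omega
    simp only [hc, hneg, h2 k hk]
    cases b <;> simp <;> tauto

lemma altOn_neg {b : Bool} {s : Finset ι} {ℓ : ι → ℤ} (hz : ∀ k ∈ s, ℓ k ≠ 0) :
    AltOn b s ℓ ↔ AltOn (!b) s (fun k => -ℓ k) := by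
  constructor
  · exact altOn_neg_of hz
  · intro h
    have hz' : ∀ k ∈ s, -ℓ k ≠ 0 := fun k hk => by simpa using hz k hk
    have := altOn_neg_of hz' h
    simp only [neg_neg, Bool.not_not] at this
    exact altOn_congr_of (fun k _ => rfl) this

lemma altOn_not_both {s : Finset ι} {ℓ : ι → ℤ} (hs : s.Nonempty)
    (h1 : AltOn true s ℓ) (h2 : AltOn false s ℓ) : False := by
  obtain ⟨k, hk⟩ := hs
  have a1 := h1.2 k hk
  have a2 := h2.2 k hk
  simp only [iff_true, iff_false] at a1 a2
  tauto

end AltOn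

section Pure
variable {ι : Type*} [Fintype ι] [LinearOrder ι]

lemma pure_parity [Nonempty ι] (T : ι → Prop) :
    (((univ : Finset ι).filter (fun p => ∀ q, q ≠ p → (T q ↔ q ≤ p))).card : ZMod 2)
      = if (∀ q, T q) ∨ (∀ q, ¬ T q) then 1 else 0 := by
  set G := (univ : Finset ι).filter (fun p => ∀ q, q ≠ p → (T q ↔ q ≤ p)) with hGdef
  have hmemG : ∀ p, p ∈ G ↔ ∀ q, q ≠ p → (T q ↔ q ≤ p) := by
    intro p; simp [hGdef]
  by_cases hall : ∀ q, T q
  · have : G = {(univ : Finset ι).max' univ_nonempty} := by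
      ext p
      rw [hmemG, Finset.mem_singleton]
      constructor
      · intro h
        by_contra hne
        have h1 := (h _ (Ne.symm hne)).mp (hall _)
        exact hne (le_antisymm (Finset.le_max' _ _ (mem_univ p)) h1)
      · rintro rfl q hq
        simp [hall q, Finset.le_max' _ _ (mem_univ q)]
    rw [this]
    simp [hall]
  by_cases hnone : ∀ q, ¬ T q
  · have : G = {(univ : Finset ι).min' univ_nonempty} := by
      ext p
      rw [hmemG, Finset.mem_singleton]
      constructor
      · intro h
        by_contra hne
        have h1 := (h _ (Ne.symm hne)).not.mp (hnone _)
        exact h1 (Finset.min'_le _ _ (mem_univ p))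
      · rintro rfl q hq
        constructor
        · intro hT; exact absurd hT (hnone q)
        · intro hle; exact absurd (le_antisymm hle (Finset.min'_le _ _ (mem_univ q))) hq
    rw [this]
    simp [hnone, not_forall.mpr ⟨Classical.choice ‹Nonempty ι›, fun h => hnone _ h⟩]
  -- mixed case
  push_neg at hnone
  obtain ⟨a, ha⟩ := hnone
  have hb : ∃ b, ¬ T b := by push_neg at hall; exact hall
  obtain ⟨b, hbT⟩ := hb
  have hcond : ¬((∀ q, T q) ∨ (∀ q, ¬ T q)) := by rintro (h | h); exacts [hbT (h b), h a ha]
  rw [if_neg hcond]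
  -- nothing strictly between two elements of G
  have between : ∀ u ∈ G, ∀ v ∈ G, ∀ q, ¬(u < q ∧ q < v) := by
    intro u hu v hv q ⟨huq, hqv⟩
    rw [hmemG] at hu hv
    have h1 : ¬ T q := fun hT => absurd ((hu q (ne_of_gt huq)).mp hT) (not_le.mpr huq)
    exact h1 ((hv q (ne_of_lt hqv)).mpr hqv.le)
  by_cases hG : G = ∅
  · simp [hG]
  obtain ⟨p, hp⟩ := Finset.nonempty_of_ne_empty hG
  -- partner
  have hpartner : ∃ p', p' ∈ G ∧ p' ≠ p := by
    by_cases hTp : T p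
    · -- go up
      have hptop : p ≠ (univ : Finset ι).max' univ_nonempty := by
        rintro rfl
        apply hbT
        by_cases hbp : b = (univ : Finset ι).max' univ_nonempty
        · rw [hbp]; exact hTp
        · exact ((hmemG _).mp hp b hbp).mpr (Finset.le_max' _ _ (mem_univ b))
      have hS : ((univ : Finset ι).filter (fun q => p < q)).Nonempty := by
        refine ⟨(univ : Finset ι).max' univ_nonempty, ?_⟩
        simp [lt_of_le_of_ne (Finset.le_max' _ _ (mem_univ p)) hptop]
      set p' := ((univ : Finset ι).filter (fun q => p < q)).min' hS with hp'def
      have hpp' : p < p' := by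
        have h := Finset.min'_mem _ hS
        simp only [Finset.mem_filter] at h
        exact h.2
      refine ⟨p', (hmemG _).mpr ?_, ne_of_gt hpp'⟩
      intro q hq
      by_cases hqp : q = p
      · subst hqp; simp [hTp, hpp'.le]
      constructor
      · intro hT
        exact le_trans (((hmemG _).mp hp q hqp).mp hT) hpp'.le
      · intro hle
        have hlt : q < p' := lt_of_le_of_ne hle hq
        have : ¬ p < q := fun hpq =>
          absurd (Finset.min'_le _ q (by simp [hpq])) (not_le.mpr hlt)
        exact ((hmemG _).mp hp q hqp).mpr (not_lt.mp this)
    · -- go down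
      have hpbot : p ≠ (univ : Finset ι).min' univ_nonempty := by
        intro hpeq
        by_cases hap : a = p
        · exact hTp (hap ▸ ha)
        · have h1 : a ≤ p := ((hmemG _).mp hp a hap).mp ha
          have h2 : p ≤ a := hpeq ▸ Finset.min'_le _ _ (mem_univ a)
          exact hap (le_antisymm h1 h2)
      have hS : ((univ : Finset ι).filter (fun q => q < p)).Nonempty := by
        refine ⟨(univ : Finset ι).min' univ_nonempty, ?_⟩
        simp [lt_of_le_of_ne (Finset.min'_le _ _ (mem_univ p)) (Ne.symm hpbot)]
      set p' := ((univ : Finset ι).filter (fun q => q < p)).max' hS with hp'def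
      have hpp' : p' < p := by
        have h := Finset.max'_mem _ hS
        simp only [Finset.mem_filter] at h
        exact h.2
      refine ⟨p', (hmemG _).mpr ?_, ne_of_lt hpp'⟩
      intro q hq
      by_cases hqp : q = p
      · subst hqp
        exact ⟨fun hT => absurd hT hTp, fun hle => absurd (lt_of_le_of_lt hle hpp') (lt_irrefl _)⟩
      constructor
      · intro hT
        have h1 : q ≤ p := ((hmemG _).mp hp q hqp).mp hT
        have h2 : q < p := lt_of_le_of_ne h1 hqp
        exact Finset.le_max' _ q (by simp [h2])
      · intro hle
        exact ((hmemG _).mp hp q hqp).mpr (le_trans hle hpp'.le)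
  obtain ⟨p', hp', hne⟩ := hpartner
  have hGeq : G = {p, p'} := by
    apply Finset.Subset.antisymm
    · intro x hx
      simp only [Finset.mem_insert, Finset.mem_singleton]
      by_contra hcon
      push_neg at hcon
      obtain ⟨hxp, hxp'⟩ := hcon
      rcases lt_trichotomy x p with h | h | h
      · rcases lt_trichotomy x p' with h2 | h2 | h2
        · rcases lt_trichotomy p' p with h3 | h3 | h3
          · exact between x hx p hp p' ⟨h2, h3⟩
          · exact hne h3
          · exact between x hx p' hp' p ⟨h, h3⟩
        · exact hxp' h2
        · exact between p' hp' p hp x ⟨h2, h⟩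
      · exact hxp h
      · rcases lt_trichotomy x p' with h2 | h2 | h2
        · rcases lt_trichotomy p p' with h3 | h3 | h3
          · exact between p hp p' hp' x ⟨h, h2⟩
          · exact hne h3.symm
          · exact between p hp p' hp' x ⟨h, h2⟩
        · exact hxp' h2
        · rcases lt_trichotomy p' p with h3 | h3 | h3
          · exact between p' hp' x hx p ⟨h3, h⟩
          · exact hne h3
          · exact between p hp x hx p' ⟨h3, h2⟩
    · intro x hx
      simp only [Finset.mem_insert, Finset.mem_singleton] at hx
      rcases hx with rfl | rfl
      · exact hp
      · exact hp'
  rw [hGeq, Finset.card_pair (Ne.symm hne)]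
  decide
end Pure

lemma involution_parity {α : Type*} [DecidableEq α] (g : α → α) (S : Finset α)
    (hmem : ∀ x ∈ S, g x ∈ S) (hinv : ∀ x ∈ S, g (g x) = x) :
    (S.card : ZMod 2) = ((S.filter fun x => g x = x).card : ZMod 2) := by
  induction S using Finset.strongInduction with
  | _ S ih =>
  by_cases hfix : ∀ x ∈ S, g x = x
  · rw [Finset.filter_true_of_mem hfix]
  · push_neg at hfix
    obtain ⟨x, hx, hgx⟩ := hfix
    have hgxS : g x ∈ S := hmem x hx
    have hgxx : g x ≠ x := hgx
    set S' := (S.erase x).erase (g x) with hS'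
    have hS'sub : S' ⊆ S := fun y hy =>
      Finset.mem_of_mem_erase (Finset.mem_of_mem_erase hy)
    have hS'ssub : S' ⊂ S := by
      refine Finset.ssubset_iff_of_subset hS'sub |>.mpr ⟨x, hx, ?_⟩
      simp [hS']
    have hmemS' : ∀ y, y ∈ S' ↔ y ∈ S ∧ y ≠ x ∧ y ≠ g x := by
      intro y; simp [hS', Finset.mem_erase]; tauto
    have hmem' : ∀ y ∈ S', g y ∈ S' := by
      intro y hy
      rw [hmemS'] at hy ⊢
      obtain ⟨hyS, hyx, hygx⟩ := hy
      refine ⟨hmem y hyS, ?_, ?_⟩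
      · intro h; exact hygx ((congrArg g h).symm.trans (hinv y hyS)).symm
      · intro h
        have := congrArg g h
        rw [hinv y hyS, hinv x hx] at this
        exact hyx this
    have hinv' : ∀ y ∈ S', g (g y) = y := fun y hy => hinv y (hS'sub hy)
    have hcard : S.card = S'.card + 2 := by
      rw [hS', Finset.card_erase_of_mem (Finset.mem_erase.mpr ⟨hgxx, hgxS⟩),
        Finset.card_erase_of_mem hx]
      have h1 : 1 ≤ S.card := Finset.card_pos.mpr ⟨x, hx⟩
      have h2 : 2 ≤ S.card := Finset.one_lt_card.mpr ⟨x, hx, g x, hgxS, fun h => hgxx h.symm⟩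
      omega
    have hfil : S.filter (fun y => g y = y) = S'.filter (fun y => g y = y) := by
      ext y
      simp only [Finset.mem_filter, hmemS']
      constructor
      · rintro ⟨hyS, hfy⟩
        refine ⟨⟨hyS, ?_, ?_⟩, hfy⟩
        · rintro rfl; exact hgx hfy
        · rintro rfl; rw [hinv x hx] at hfy; exact hgx hfy.symm
      · rintro ⟨⟨hyS, _, _⟩, hfy⟩; exact ⟨hyS, hfy⟩
    rw [hcard, hfil]
    push_cast
    rw [ih S' hS'ssub hmem' hinv']
    have h2 : (2 : ZMod 2) = 0 := by decide
    rw [h2, add_zero]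


lemma facet_parity {n : ℕ} (hn : 0 < n) (ℓ : Fin n → ℤ) (hno : ∀ k k', ℓ k + ℓ k' ≠ 0) :
    (((univ : Finset (Fin n)).filter fun j => AltOn true ((univ : Finset (Fin n)).erase j) ℓ).card : ZMod 2)
      = if (AltOn true (univ : Finset (Fin n)) ℓ ∨ AltOn false (univ : Finset (Fin n)) ℓ) then 1 else 0 := by
  by_cases hinj : ∀ a b : Fin n, |ℓ a| = |ℓ b| → a = b
  · -- injective case
    have hne : Nonempty (Fin n) := ⟨⟨0, hn⟩⟩
    have hmain : ∀ j q : Fin n, q ≠ j →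
        ((0 < ℓ q ↔ (Even ((((univ : Finset (Fin n)).erase j).filter
            (fun k' => |ℓ k'| < |ℓ q|)).card) ↔ true = true))
          ↔ (((0 : ℤ) < ℓ q ↔ Even (((univ : Finset (Fin n)).filter
            (fun k' => |ℓ k'| < |ℓ q|)).card)) ↔ |ℓ q| ≤ |ℓ j|)) := by
      intro j q hq
      rw [Finset.filter_erase]
      by_cases hL : |ℓ j| < |ℓ q|
      · have hjmem : j ∈ (univ : Finset (Fin n)).filter (fun k' => |ℓ k'| < |ℓ q|) :=
          mem_filter.mpr ⟨mem_univ j, hL⟩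
        rw [Finset.card_erase_of_mem hjmem]
        have h1 : 1 ≤ ((univ : Finset (Fin n)).filter (fun k' => |ℓ k'| < |ℓ q|)).card :=
          Finset.card_pos.mpr ⟨j, hjmem⟩
        have hparity : Even (((univ : Finset (Fin n)).filter (fun k' => |ℓ k'| < |ℓ q|)).card - 1)
            ↔ ¬ Even (((univ : Finset (Fin n)).filter (fun k' => |ℓ k'| < |ℓ q|)).card) := by
          rw [Nat.even_sub h1]
          simp
        have hL' : ¬ (|ℓ q| ≤ |ℓ j|) := not_le.mpr hL
        tauto
      · rw [Finset.erase_eq_of_notMem (by simp [hL])]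
        have hL' : |ℓ q| ≤ |ℓ j| := not_lt.mp hL
        tauto
    have hiff1 : ∀ j : Fin n, (AltOn true ((univ : Finset (Fin n)).erase j) ℓ ↔
        ∀ q, q ≠ j → (((0 : ℤ) < ℓ q ↔ Even (((univ : Finset (Fin n)).filter
          (fun k' => |ℓ k'| < |ℓ q|)).card)) ↔ |ℓ q| ≤ |ℓ j|)) := by
      intro j
      constructor
      · rintro ⟨_, h2⟩ q hq
        exact (hmain j q hq).mp (h2 q (Finset.mem_erase.mpr ⟨hq, mem_univ q⟩))
      · intro h
        refine ⟨fun k _ k' _ he => hinj k k' he, fun k hk => ?_⟩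
        have hkj := (Finset.mem_erase.mp hk).1
        exact (hmain j k hkj).mpr (h k hkj)
    have hiff2 : (AltOn true (univ : Finset (Fin n)) ℓ ↔
        ∀ q, ((0 : ℤ) < ℓ q ↔ Even (((univ : Finset (Fin n)).filter
          (fun k' => |ℓ k'| < |ℓ q|)).card))) := by
      constructor
      · rintro ⟨_, h2⟩ q
        have := h2 q (mem_univ q)
        tauto
      · intro h
        refine ⟨fun k _ k' _ he => hinj k k' he, fun k _ => ?_⟩
        have := h k
        tauto
    have hiff3 : (AltOn false (univ : Finset (Fin n)) ℓ ↔
        ∀ q, ¬ ((0 : ℤ) < ℓ q ↔ Even (((univ : Finset (Fin n)).filter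
          (fun k' => |ℓ k'| < |ℓ q|)).card))) := by
      constructor
      · rintro ⟨_, h2⟩ q
        have := h2 q (mem_univ q)
        simp only [Bool.false_eq_true, iff_false] at this
        tauto
      · intro h
        refine ⟨fun k _ k' _ he => hinj k k' he, fun k _ => ?_⟩
        have := h k
        simp only [Bool.false_eq_true, iff_false]
        tauto
    letI lo : LinearOrder (Fin n) := LinearOrder.lift' (fun k => |ℓ k|) (fun a b h => hinj a b h)
    have hpp := @pure_parity (Fin n) _ lo hne
      (fun q => ((0 : ℤ) < ℓ q ↔ Even (((univ : Finset (Fin n)).filter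
          (fun k' => |ℓ k'| < |ℓ q|)).card)))
    rw [Finset.filter_congr (fun j ( _ : j ∈ (univ : Finset (Fin n))) => hiff1 j)]
    rw [if_congr (or_congr hiff2 hiff3) rfl rfl]
    convert hpp using 4
    exact Iff.rfl
  · -- collision case
    push_neg at hinj
    obtain ⟨a, b, habs, hab⟩ := hinj
    have hval : ℓ a = ℓ b := by
      rcases abs_eq_abs.mp habs with h | h
      · exact h
      · exact absurd (by rw [h]; ring) (hno a b)
    have hnotalt : ∀ bb : Bool, ¬ AltOn bb (univ : Finset (Fin n)) ℓ := by
      intro bb hA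
      exact hab (hA.1 a (mem_univ a) b (mem_univ b) habs)
    rw [if_neg (by rintro (h | h) <;> exact hnotalt _ h)]
    have hGsub : ∀ j ∈ (univ : Finset (Fin n)).filter
        (fun j => AltOn true ((univ : Finset (Fin n)).erase j) ℓ), j = a ∨ j = b := by
      intro j hj
      have hA := (Finset.mem_filter.mp hj).2
      by_contra hcon
      push_neg at hcon
      exact hab (hA.1 a (Finset.mem_erase.mpr ⟨Ne.symm hcon.1, mem_univ a⟩)
        b (Finset.mem_erase.mpr ⟨Ne.symm hcon.2, mem_univ b⟩) habs)
    have hmapeq : ((univ : Finset (Fin n)).erase a).map (Equiv.swap a b).toEmbedding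
        = (univ : Finset (Fin n)).erase b := by
      ext x
      simp only [Finset.mem_map, Finset.mem_erase, mem_univ, and_true,
        Equiv.coe_toEmbedding]
      constructor
      · rintro ⟨y, hy, rfl⟩
        intro h
        apply hy
        have := congrArg (Equiv.swap a b) h
        rw [Equiv.swap_apply_self, Equiv.swap_apply_right] at this
        exact this
      · intro hx
        refine ⟨Equiv.swap a b x, ?_, by simp⟩
        intro h
        apply hx
        have := congrArg (Equiv.swap a b) h
        rw [Equiv.swap_apply_self, Equiv.swap_apply_left] at this
        exact this
    have hswap : AltOn true ((univ : Finset (Fin n)).erase b) ℓ ↔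
        AltOn true ((univ : Finset (Fin n)).erase a) ℓ := by
      rw [← hmapeq]
      apply altOn_map
      intro k hk
      simp only [Equiv.toEmbedding_apply]
      rcases eq_or_ne k b with rfl | hkb
      · rw [Equiv.swap_apply_right]
        exact hval
      · rw [Equiv.swap_apply_of_ne_of_ne (Finset.mem_erase.mp hk).1 hkb]
    by_cases haG : AltOn true ((univ : Finset (Fin n)).erase a) ℓ
    · have hGeq : (univ : Finset (Fin n)).filter
          (fun j => AltOn true ((univ : Finset (Fin n)).erase j) ℓ) = {a, b} := by
        apply Finset.Subset.antisymm
        · intro j hj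
          simp only [Finset.mem_insert, Finset.mem_singleton]
          exact hGsub j hj
        · intro j hj
          simp only [Finset.mem_insert, Finset.mem_singleton] at hj
          rcases hj with rfl | rfl
          · exact Finset.mem_filter.mpr ⟨mem_univ j, haG⟩
          · exact Finset.mem_filter.mpr ⟨mem_univ j, hswap.mpr haG⟩
      rw [hGeq, Finset.card_pair hab]
      decide
    · have hGeq : (univ : Finset (Fin n)).filter
          (fun j => AltOn true ((univ : Finset (Fin n)).erase j) ℓ) = ∅ := by
        rw [Finset.eq_empty_iff_forall_notMem]
        intro j hj
        rcases hGsub j hj with rfl | rfl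
        · exact haG (Finset.mem_filter.mp hj).2
        · exact haG (hswap.mp (Finset.mem_filter.mp hj).2)
      rw [hGeq]
      simp

/-- The `k`-th vector (from the top) of the maximal chain encoded by `(σ, ε)`:
its support is `{σ k, σ (k+1), …}`, with signs given by `ε`. -/
def vecAt {n : ℕ} (f : Equiv.Perm (Fin n) × (Fin n → Bool)) (k : Fin n) : Fin n → SignType :=
  fun i => if k ≤ f.1.symm i then (if f.2 i then 1 else -1) else 0

lemma vecAt_ne_zero {n : ℕ} (f : Equiv.Perm (Fin n) × (Fin n → Bool)) (k : Fin n) :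
    vecAt f k ≠ 0 := by
  intro h
  have := congrFun h (f.1 k)
  simp only [vecAt, Equiv.symm_apply_apply, le_refl, if_true, Pi.zero_apply] at this
  split_ifs at this <;> exact absurd this (by decide)

lemma signle_vecAt {n : ℕ} (f : Equiv.Perm (Fin n) × (Fin n → Bool)) {k k' : Fin n}
    (h : k ≤ k') : SignLe (vecAt f k') (vecAt f k) := by
  intro i hi
  unfold vecAt at hi ⊢
  by_cases hk' : k' ≤ f.1.symm i
  · rw [if_pos hk', if_pos (le_trans h hk')]
  · rw [if_neg hk'] at hi
    exact absurd rfl hi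

section WithLam
variable {n : ℕ} (lam : {x : Fin n → SignType // x ≠ 0} → ℤ)

/-- Labels along the chain encoded by `f`. -/
def lab (f : Equiv.Perm (Fin n) × (Fin n → Bool)) (k : Fin n) : ℤ :=
  lam ⟨vecAt f k, vecAt_ne_zero f k⟩

lemma lab_no_comp
    (hcomp : ∀ x y : {x : Fin n → SignType // x ≠ 0},
      SignLe (x : Fin n → SignType) (y : Fin n → SignType) → lam x + lam y ≠ 0)
    (f : Equiv.Perm (Fin n) × (Fin n → Bool)) (k k' : Fin n) :
    lab lam f k + lab lam f k' ≠ 0 := by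
  rcases le_total k k' with h | h
  · have := hcomp ⟨vecAt f k', vecAt_ne_zero f k'⟩ ⟨vecAt f k, vecAt_ne_zero f k⟩
      (signle_vecAt f h)
    intro hs
    apply this
    unfold lab at hs
    linarith
  · exact hcomp ⟨vecAt f k, vecAt_ne_zero f k⟩ ⟨vecAt f k', vecAt_ne_zero f k'⟩
      (signle_vecAt f h)

lemma lab_ne_zero
    (hcomp : ∀ x y : {x : Fin n → SignType // x ≠ 0},
      SignLe (x : Fin n → SignType) (y : Fin n → SignType) → lam x + lam y ≠ 0)
    (f : Equiv.Perm (Fin n) × (Fin n → Bool)) (k : Fin n) : lab lam f k ≠ 0 := by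
  have := lab_no_comp lam hcomp f k k
  intro h
  rw [h] at this
  simp at this

end WithLam

lemma vecAt_negate {n : ℕ} (σ : Equiv.Perm (Fin n)) (ε : Fin n → Bool) (k : Fin n) :
    vecAt (σ, fun i => ! ε i) k = fun i => - vecAt (σ, ε) k i := by
  funext i
  unfold vecAt
  by_cases h : k ≤ σ.symm i
  · rw [if_pos h, if_pos h]
    cases hε : ε i <;> simp [hε]
  · rw [if_neg h, if_neg h]
    simp

lemma vecAt_swap {n : ℕ} (σ : Equiv.Perm (Fin n)) (ε : Fin n → Bool) {j : Fin n} (hj : 1 ≤ (j : ℕ))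
    (pj : Fin n) (hpj : (pj : ℕ) = (j : ℕ) - 1) {k : Fin n} (hk : k ≠ j) :
    vecAt (σ * Equiv.swap pj j, ε) k = vecAt (σ, ε) k := by
  funext i
  unfold vecAt
  have hsymm : (σ * Equiv.swap pj j).symm i = Equiv.swap pj j (σ.symm i) := by
    simp [Equiv.Perm.mul_def, Equiv.symm_trans_apply, Equiv.symm_swap]
  rw [hsymm]
  have hcond : (k ≤ Equiv.swap pj j (σ.symm i)) ↔ (k ≤ σ.symm i) := by
    rcases eq_or_ne (σ.symm i) pj with he | hne1
    · rw [he, Equiv.swap_apply_left]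
      rw [Fin.le_def, Fin.le_def]
      have hkj : (k : ℕ) ≠ (j : ℕ) := fun h => hk (Fin.ext h)
      omega
    · rcases eq_or_ne (σ.symm i) j with he2 | hne2
      · rw [he2, Equiv.swap_apply_right]
        rw [Fin.le_def, Fin.le_def]
        have hkj : (k : ℕ) ≠ (j : ℕ) := fun h => hk (Fin.ext h)
        omega
      · rw [Equiv.swap_apply_of_ne_of_ne hne1 hne2]
  rw [if_congr hcond rfl rfl]

lemma vecAt_flip {n : ℕ} (σ : Equiv.Perm (Fin n)) (ε : Fin n → Bool) (c : Bool) (z : Fin n)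
    {k : Fin n} (hk : ¬ k ≤ z) :
    vecAt (σ, Function.update ε (σ z) c) k = vecAt (σ, ε) k := by
  funext i
  unfold vecAt
  dsimp only
  rcases eq_or_ne i (σ z) with rfl | hne
  · have h0 : σ.symm (σ z) = z := Equiv.symm_apply_apply σ z
    rw [h0, if_neg hk, if_neg hk]
  · simp only [Function.update_of_ne hne]

lemma prodExt {α β : Type*} {p q : α × β} (h1 : p.1 = q.1) (h2 : p.2 = q.2) : p = q := by
  cases p; cases q; cases h1; cases h2; rfl


theorem fan_count : ∀ (n : ℕ), 0 < n →
    ∀ (lam : {x : Fin n → SignType // x ≠ 0} → ℤ),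
    (∀ x y : {x : Fin n → SignType // x ≠ 0},
      (y : Fin n → SignType) = (fun i => -(x : Fin n → SignType) i) → lam y = -lam x) →
    (∀ x y : {x : Fin n → SignType // x ≠ 0},
      SignLe (x : Fin n → SignType) (y : Fin n → SignType) → lam x + lam y ≠ 0) →
    (((univ : Finset (Equiv.Perm (Fin n) × (Fin n → Bool))).filter
        (fun f => AltOn true (univ : Finset (Fin n)) (lab lam f))).card : ZMod 2) = 1 := by
  intro n
  induction n with
  | zero => intro h; exact absurd h (by omega)
  | succ m ih =>
    intro _ lam hanti hcomp
    haveI hsub1 : Subsingleton (Fin 1) := ⟨fun a b => Fin.ext (by omega)⟩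
    rcases Nat.eq_zero_or_pos m with rfl | hm
    · -- base case n = 1
      have hxpne : (fun _ => 1 : Fin 1 → SignType) ≠ 0 := by
        intro h; exact absurd (congrFun h 0) (by decide)
      have hxmne : (fun _ => -1 : Fin 1 → SignType) ≠ 0 := by
        intro h; exact absurd (congrFun h 0) (by decide)
      set xp : {x : Fin 1 → SignType // x ≠ 0} := ⟨fun _ => 1, hxpne⟩ with hxp
      set xm : {x : Fin 1 → SignType // x ≠ 0} := ⟨fun _ => -1, hxmne⟩ with hxm
      have hlamne : lam xp ≠ 0 := by
        have h := hcomp xp xp (fun i hi => rfl)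
        intro hz; rw [hz] at h; simp at h
      have hlm : lam xm = - lam xp := hanti xp xm rfl
      have hvec : ∀ f : Equiv.Perm (Fin 1) × (Fin 1 → Bool),
          (⟨vecAt f 0, vecAt_ne_zero f 0⟩ : {x : Fin 1 → SignType // x ≠ 0})
            = if f.2 0 = true then xp else xm := by
        intro f
        by_cases h : f.2 0 = true
        · rw [if_pos h]
          apply Subtype.ext
          funext i
          have hi : i = 0 := Subsingleton.elim i 0
          subst hi
          show (if (0 : Fin 1) ≤ f.1.symm 0 then (if f.2 0 = true then (1 : SignType) else -1)
            else 0) = 1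
          rw [Subsingleton.elim (f.1.symm 0) 0]
          simp [h]
        · rw [if_neg h]
          apply Subtype.ext
          funext i
          have hi : i = 0 := Subsingleton.elim i 0
          subst hi
          show (if (0 : Fin 1) ≤ f.1.symm 0 then (if f.2 0 = true then (1 : SignType) else -1)
            else 0) = -1
          rw [Subsingleton.elim (f.1.symm 0) 0]
          simp [h]
      have hAlt1 : ∀ ℓ : Fin 1 → ℤ, (AltOn true (univ : Finset (Fin 1)) ℓ ↔ 0 < ℓ 0) := by
        intro ℓ
        have hfe : (univ : Finset (Fin 1)).filter (fun k' => |ℓ k'| < |ℓ 0|) = ∅ := by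
          rw [Finset.eq_empty_iff_forall_notMem]
          intro k hk
          rw [Finset.mem_filter, Subsingleton.elim k 0] at hk
          exact absurd hk.2 (lt_irrefl _)
        constructor
        · rintro ⟨_, h2⟩
          have := h2 0 (mem_univ 0)
          rw [hfe] at this
          simpa using this
        · intro h
          refine ⟨fun k _ k' _ _ => Subsingleton.elim k k', fun k _ => ?_⟩
          rw [Subsingleton.elim k 0, hfe]
          simpa using h
      have hval : ∀ f : Equiv.Perm (Fin 1) × (Fin 1 → Bool),
          lab lam f 0 = if f.2 0 = true then lam xp else lam xm := by
        intro f
        unfold lab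
        rw [hvec f]
        by_cases h : f.2 0 = true <;> simp [h]
      by_cases hpos : 0 < lam xp
      · have hset : ((univ : Finset (Equiv.Perm (Fin 1) × (Fin 1 → Bool))).filter
            (fun f => AltOn true (univ : Finset (Fin 1)) (lab lam f)))
            = {(1, fun _ => true)} := by
          ext f
          simp only [Finset.mem_filter, mem_univ, true_and, Finset.mem_singleton]
          rw [hAlt1, hval]
          constructor
          · intro h
            have hf2 : f.2 0 = true := by
              by_contra hc
              rw [if_neg hc, hlm] at h
              omega
            have hσ : f.1 = 1 := Equiv.ext fun i => Subsingleton.elim _ _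
            have hε : f.2 = fun _ => true := funext fun i => by
              rw [Subsingleton.elim i 0]; exact hf2
            rw [← hσ, ← hε]
          · rintro rfl
            simpa using hpos
        rw [hset, Finset.card_singleton]
        simp
      · have hneg : (0 : ℤ) < lam xm := by
          rw [hlm]
          rcases lt_trichotomy (lam xp) 0 with h | h | h
          · omega
          · exact absurd h hlamne
          · exact absurd h hpos
        have hset : ((univ : Finset (Equiv.Perm (Fin 1) × (Fin 1 → Bool))).filter
            (fun f => AltOn true (univ : Finset (Fin 1)) (lab lam f)))
            = {(1, fun _ => false)} := by
          ext f
          simp only [Finset.mem_filter, mem_univ, true_and, Finset.mem_singleton]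
          rw [hAlt1, hval]
          constructor
          · intro h
            have hf2 : f.2 0 = false := by
              by_contra hc
              rw [if_pos (by simpa using hc)] at h
              exact hpos h
            have hσ : f.1 = 1 := Equiv.ext fun i => Subsingleton.elim _ _
            have hε : f.2 = fun _ => false := funext fun i => by
              rw [Subsingleton.elim i 0]; exact hf2
            rw [← hσ, ← hε]
          · rintro rfl
            simpa using hneg
        rw [hset, Finset.card_singleton]
        simp
    · -- inductive step: n = m + 1, 0 < m
      have hzero : (0 : Fin (m+1)) ∈ (univ : Finset (Fin (m+1))) := mem_univ 0
      have hz : ∀ (f : Equiv.Perm (Fin (m+1)) × (Fin (m+1) → Bool)) k, lab lam f k ≠ 0 :=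
        fun f k => lab_ne_zero lam hcomp f k
      -- abbreviations (as propositions/finsets)
      set A := (univ : Finset (Equiv.Perm (Fin (m+1)) × (Fin (m+1) → Bool))).filter
        (fun f => AltOn true (univ : Finset (Fin (m+1))) (lab lam f)) with hAdef
      set U := (univ : Finset (Equiv.Perm (Fin (m+1)) × (Fin (m+1) → Bool))).filter
        (fun f => f.2 0 = true ∧ (AltOn true (univ : Finset (Fin (m+1))) (lab lam f)
          ∨ AltOn false (univ : Finset (Fin (m+1))) (lab lam f))) with hUdef
      set T := (univ : Finset ((Equiv.Perm (Fin (m+1)) × (Fin (m+1) → Bool)) × Fin (m+1))).filter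
        (fun x => x.1.2 0 = true ∧ AltOn true ((univ : Finset (Fin (m+1))).erase x.2)
          (lab lam x.1)) with hTdef
      set B := (univ : Finset ((Equiv.Perm (Fin (m+1)) × (Fin (m+1) → Bool)) × Fin (m+1))).filter
        (fun x => (x.1.2 0 = true ∧ AltOn true ((univ : Finset (Fin (m+1))).erase x.2)
          (lab lam x.1)) ∧ (x.2 = 0 ∧ x.1.1 0 = 0)) with hBdef
      -- labels of the negated chain
      have hlabneg : ∀ (f : Equiv.Perm (Fin (m+1)) × (Fin (m+1) → Bool)) k,
          lab lam (f.1, fun i => ! f.2 i) k = - lab lam f k := by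
        intro f k
        unfold lab
        apply hanti
        show vecAt (f.1, fun i => ! f.2 i) k = _
        rw [vecAt_negate f.1 f.2 k]
      -- STEP 1 : A.card = U.card
      have step1 : A.card = U.card := by
        have hA2 : A = (univ.filter fun f => f.2 0 = true
              ∧ AltOn true (univ : Finset (Fin (m+1))) (lab lam f))
            ∪ (univ.filter fun f => ¬ (f.2 0 = true)
              ∧ AltOn true (univ : Finset (Fin (m+1))) (lab lam f)) := by
          ext f
          simp only [hAdef, Finset.mem_union, Finset.mem_filter, mem_univ, true_and]
          tauto
        have hU2 : U = (univ.filter fun f => f.2 0 = true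
              ∧ AltOn true (univ : Finset (Fin (m+1))) (lab lam f))
            ∪ (univ.filter fun f => f.2 0 = true
              ∧ AltOn false (univ : Finset (Fin (m+1))) (lab lam f)) := by
          ext f
          simp only [hUdef, Finset.mem_union, Finset.mem_filter, mem_univ, true_and]
          tauto
        have hdA : Disjoint (univ.filter fun f => f.2 0 = true
              ∧ AltOn true (univ : Finset (Fin (m+1))) (lab lam f))
            (univ.filter fun f => ¬ (f.2 0 = true)
              ∧ AltOn true (univ : Finset (Fin (m+1))) (lab lam f)) := by
          rw [Finset.disjoint_left]
          intro f h1 h2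
          rw [Finset.mem_filter] at h1 h2
          tauto
        have hdU : Disjoint (univ.filter fun f => f.2 0 = true
              ∧ AltOn true (univ : Finset (Fin (m+1))) (lab lam f))
            (univ.filter fun f => f.2 0 = true
              ∧ AltOn false (univ : Finset (Fin (m+1))) (lab lam f)) := by
          rw [Finset.disjoint_left]
          intro f h1 h2
          rw [Finset.mem_filter] at h1 h2
          exact altOn_not_both ⟨0, hzero⟩ h1.2.2 h2.2.2
        rw [hA2, hU2, Finset.card_union_of_disjoint hdA, Finset.card_union_of_disjoint hdU]
        congr 1
        -- bijection by negating all the signs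
        refine Finset.card_bij' (fun f _ => (f.1, fun i => ! f.2 i))
          (fun f _ => (f.1, fun i => ! f.2 i)) ?_ ?_ ?_ ?_
        · intro f hf
          rw [Finset.mem_filter] at hf ⊢
          obtain ⟨-, hε, halt⟩ := hf
          refine ⟨mem_univ _, ?_, ?_⟩
          · show (! f.2 0) = true
            simp only [Bool.not_eq_true'] at hε ⊢
            simpa using hε
          · have h1 := altOn_neg_of (fun k _ => hz f k) halt
            exact altOn_congr_of (fun k _ => (hlabneg f k).symm) h1
        · intro f hf
          rw [Finset.mem_filter] at hf ⊢
          obtain ⟨-, hε, halt⟩ := hf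
          refine ⟨mem_univ _, ?_, ?_⟩
          · show ¬ (! f.2 0) = true
            simp [hε]
          · have h1 := altOn_neg_of (fun k _ => hz f k) halt
            exact altOn_congr_of (fun k _ => (hlabneg f k).symm) h1
        · intro f _
          show ((f.1, fun i => ! f.2 i).1, fun i => ! (fun i => ! f.2 i) i) = f
          exact prodExt rfl (funext fun i => Bool.not_not _)
        · intro f _
          show ((f.1, fun i => ! f.2 i).1, fun i => ! (fun i => ! f.2 i) i) = f
          exact prodExt rfl (funext fun i => Bool.not_not _)
      -- STEP 2 : T.card ≡ U.card
      have step2 : (T.card : ZMod 2) = (U.card : ZMod 2) := by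
        have hTsum : T.card = ∑ f ∈ (univ : Finset (Equiv.Perm (Fin (m+1)) × (Fin (m+1) → Bool))),
            ((univ : Finset (Fin (m+1))).filter (fun j => f.2 0 = true
              ∧ AltOn true ((univ : Finset (Fin (m+1))).erase j) (lab lam f))).card := by
          rw [Finset.card_eq_sum_card_fiberwise
            (f := Prod.fst) (t := univ) (fun x _ => mem_univ x.1)]
          apply Finset.sum_congr rfl
          intro f _
          apply Finset.card_bij (fun x _ => x.2)
          · intro x hx
            rw [Finset.mem_filter] at hx
            obtain ⟨hxT, hx1⟩ := hx
            rw [hTdef, Finset.mem_filter] at hxT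
            rw [Finset.mem_filter]
            rw [hx1] at hxT
            exact ⟨mem_univ _, hxT.2⟩
          · intro x hx y hy hxy
            rw [Finset.mem_filter] at hx hy
            exact prodExt (hx.2.trans hy.2.symm) hxy
          · intro j hj
            rw [Finset.mem_filter] at hj
            refine ⟨(f, j), ?_, rfl⟩
            rw [Finset.mem_filter, hTdef, Finset.mem_filter]
            exact ⟨⟨mem_univ _, hj.2⟩, rfl⟩
        have hfib : ∀ f : Equiv.Perm (Fin (m+1)) × (Fin (m+1) → Bool),
            ((((univ : Finset (Fin (m+1))).filter (fun j => f.2 0 = true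
              ∧ AltOn true ((univ : Finset (Fin (m+1))).erase j) (lab lam f))).card : ZMod 2))
            = if (f.2 0 = true ∧ (AltOn true (univ : Finset (Fin (m+1))) (lab lam f)
                ∨ AltOn false (univ : Finset (Fin (m+1))) (lab lam f))) then 1 else 0 := by
          intro f
          by_cases hε : f.2 0 = true
          · simp only [hε, true_and]
            exact facet_parity (Nat.succ_pos m) (lab lam f) (lab_no_comp lam hcomp f)
          · rw [Finset.filter_false_of_mem (fun j _ => by simp [hε]), if_neg (by tauto)]
            simp
        rw [hTsum]
        push_cast
        rw [Finset.sum_congr rfl (fun f _ => hfib f), Finset.sum_boole, hUdef]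
      -- STEP 3 : T.card ≡ B.card  via an involution
      have step3 : (T.card : ZMod 2) = (B.card : ZMod 2) := by
        set g : (Equiv.Perm (Fin (m+1)) × (Fin (m+1) → Bool)) × Fin (m+1)
            → (Equiv.Perm (Fin (m+1)) × (Fin (m+1) → Bool)) × Fin (m+1) :=
          fun x => if x.2 = 0 then
              (if x.1.1 0 = 0 then x
                else ((x.1.1, Function.update x.1.2 (x.1.1 0) (! x.1.2 (x.1.1 0))), x.2))
            else ((x.1.1 * Equiv.swap ⟨(x.2 : ℕ) - 1,
                lt_of_le_of_lt (Nat.sub_le _ _) x.2.isLt⟩ x.2, x.1.2), x.2) with hgdef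
        have hlab_swap : ∀ (σ : Equiv.Perm (Fin (m+1))) (ε : Fin (m+1) → Bool)
            (j : Fin (m+1)) (hj : j ≠ 0) (k : Fin (m+1)) (hk : k ≠ j),
            lab lam (σ * Equiv.swap ⟨(j : ℕ) - 1,
              lt_of_le_of_lt (Nat.sub_le _ _) j.isLt⟩ j, ε) k = lab lam (σ, ε) k := by
          intro σ ε j hj k hk
          unfold lab
          congr 1
          apply Subtype.ext
          exact vecAt_swap σ ε (by
            have := Fin.pos_iff_ne_zero.mpr hj
            omega) _ rfl hk
        have hlab_flip : ∀ (σ : Equiv.Perm (Fin (m+1))) (ε : Fin (m+1) → Bool) (c : Bool)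
            (k : Fin (m+1)) (hk : k ≠ 0),
            lab lam (σ, Function.update ε (σ 0) c) k = lab lam (σ, ε) k := by
          intro σ ε c k hk
          unfold lab
          congr 1
          apply Subtype.ext
          exact vecAt_flip σ ε c 0 (by
            intro hle
            exact hk (Fin.le_zero_iff.mp hle))
        have hgT : ∀ x ∈ T, g x ∈ T := by
          intro x hx
          rw [hTdef, Finset.mem_filter] at hx ⊢
          obtain ⟨-, hε, halt⟩ := hx
          refine ⟨mem_univ _, ?_⟩
          simp only [hgdef]
          by_cases hj : x.2 = 0
          · rw [if_pos hj]
            by_cases hσ : x.1.1 0 = 0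
            · rw [if_pos hσ]
              exact ⟨hε, halt⟩
            · rw [if_neg hσ]
              constructor
              · show Function.update x.1.2 (x.1.1 0) (! x.1.2 (x.1.1 0)) 0 = true
                rw [Function.update_of_ne (Ne.symm hσ)]
                exact hε
              · refine altOn_congr_of (fun k hk => ?_) halt
                rw [Finset.mem_erase, hj] at hk
                exact (hlab_flip x.1.1 x.1.2 _ k hk.1).symm
          · rw [if_neg hj]
            refine ⟨hε, ?_⟩
            refine altOn_congr_of (fun k hk => ?_) halt
            rw [Finset.mem_erase] at hk
            exact (hlab_swap x.1.1 x.1.2 x.2 hj k hk.1).symm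
        have hgg : ∀ x ∈ T, g (g x) = x := by
          intro x _
          by_cases hj : x.2 = 0
          · by_cases hσ : x.1.1 0 = 0
            · simp only [hgdef, hj, eq_self_iff_true, if_true, hσ]
            · simp only [hgdef, hj, eq_self_iff_true, if_true, if_neg hσ]
              refine prodExt (prodExt rfl ?_) hj.symm
              show Function.update (Function.update x.1.2 (x.1.1 0) (! x.1.2 (x.1.1 0))) (x.1.1 0)
                (! Function.update x.1.2 (x.1.1 0) (! x.1.2 (x.1.1 0)) (x.1.1 0)) = x.1.2
              simp [Function.update_self, Bool.not_not, Function.update_idem,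
                Function.update_eq_self]
          · simp only [hgdef, if_neg hj]
            refine prodExt (prodExt ?_ rfl) rfl
            show (x.1.1 * Equiv.swap _ x.2) * Equiv.swap _ x.2 = x.1.1
            rw [mul_assoc, Equiv.swap_mul_self, mul_one]
        have hfix : ∀ x ∈ T, (g x = x ↔ (x.2 = 0 ∧ x.1.1 0 = 0)) := by
          intro x _
          constructor
          · intro hgx
            by_cases hj : x.2 = 0
            · refine ⟨hj, ?_⟩
              by_contra hσ
              simp only [hgdef, hj, eq_self_iff_true, if_true, if_neg hσ] at hgx
              have hεeq := congrFun (congrArg Prod.snd (congrArg Prod.fst hgx)) (x.1.1 0)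
              dsimp only at hεeq
              rw [Function.update_self] at hεeq
              exact (Bool.not_ne_self _) hεeq
            · exfalso
              simp only [hgdef, if_neg hj] at hgx
              have hσeq := congrArg Prod.fst (congrArg Prod.fst hgx)
              dsimp only at hσeq
              have hj1 : 1 ≤ (x.2 : ℕ) := by
                have := Fin.pos_iff_ne_zero.mpr hj
                omega
              have happ := congrArg (fun τ : Equiv.Perm (Fin (m+1)) =>
                τ (⟨(x.2 : ℕ) - 1, lt_of_le_of_lt (Nat.sub_le _ _) x.2.isLt⟩ : Fin (m+1))) hσeq
              simp only [Equiv.Perm.mul_apply, Equiv.swap_apply_left] at happ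
              have := x.1.1.injective happ
              have hval := congrArg Fin.val this
              simp at hval
              omega
          · rintro ⟨hj, hσ⟩
            simp only [hgdef, hj, hσ, eq_self_iff_true, if_true]
        have hBfix : B = T.filter (fun x => g x = x) := by
          ext x
          rw [hBdef, Finset.mem_filter, Finset.mem_filter, hTdef, Finset.mem_filter]
          constructor
          · rintro ⟨h1, h2, h3⟩
            exact ⟨⟨h1, h2⟩, (hfix x (by rw [hTdef, Finset.mem_filter]; exact ⟨h1, h2⟩)).mpr h3⟩
          · rintro ⟨⟨h1, h2⟩, h4⟩
            exact ⟨h1, h2, (hfix x (by rw [hTdef, Finset.mem_filter]; exact ⟨h1, h2⟩)).mp h4⟩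
        rw [hBfix]
        exact involution_parity g T hgT hgg
      -- STEP 4 : B.card = A'.card for the restricted labelling, which is 1 by induction
      have hconsne : ∀ x : {x : Fin m → SignType // x ≠ 0},
          (Fin.cons 0 x.1 : Fin (m+1) → SignType) ≠ 0 := by
        intro x h
        obtain ⟨i, hi⟩ := Function.ne_iff.mp x.2
        apply hi
        have := congrFun h i.succ
        rwa [Fin.cons_succ] at this
      set lam' : {x : Fin m → SignType // x ≠ 0} → ℤ :=
        fun x => lam ⟨Fin.cons 0 x.1, hconsne x⟩ with hlam'def
      have hanti' : ∀ x y : {x : Fin m → SignType // x ≠ 0},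
          (y : Fin m → SignType) = (fun i => -(x : Fin m → SignType) i) → lam' y = -lam' x := by
        intro x y h
        apply hanti
        show (Fin.cons 0 y.1 : Fin (m+1) → SignType)
          = fun i => -((Fin.cons 0 x.1 : Fin (m+1) → SignType) i)
        funext i
        rcases Fin.eq_zero_or_eq_succ i with rfl | ⟨i', rfl⟩
        · rw [Fin.cons_zero, Fin.cons_zero]
          decide
        · rw [Fin.cons_succ, Fin.cons_succ]
          exact congrFun h i'
      have hcomp' : ∀ x y : {x : Fin m → SignType // x ≠ 0},
          SignLe (x : Fin m → SignType) (y : Fin m → SignType) → lam' x + lam' y ≠ 0 := by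
        intro x y h
        apply hcomp
        intro i hi
        have hi' : (Fin.cons 0 x.1 : Fin (m+1) → SignType) i ≠ 0 := hi
        show (Fin.cons 0 x.1 : Fin (m+1) → SignType) i
          = (Fin.cons 0 y.1 : Fin (m+1) → SignType) i
        rcases Fin.eq_zero_or_eq_succ i with rfl | ⟨i', rfl⟩
        · rw [Fin.cons_zero] at hi'
          exact absurd rfl hi'
        · rw [Fin.cons_succ] at hi'
          rw [Fin.cons_succ, Fin.cons_succ]
          exact h i' hi'
      have hveccons : ∀ (σ' : Equiv.Perm (Fin m)) (ε' : Fin m → Bool) (k : Fin m),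
          vecAt (Equiv.Perm.decomposeFin.symm (0, σ'), Fin.cons true ε') k.succ
            = Fin.cons 0 (vecAt (σ', ε') k) := by
        intro σ' ε' k
        funext i
        rcases Fin.eq_zero_or_eq_succ i with rfl | ⟨i', rfl⟩
        · have h0 : (Equiv.Perm.decomposeFin.symm (0, σ')).symm 0 = 0 := by
            rw [Equiv.symm_apply_eq]
            exact (Equiv.Perm.decomposeFin_symm_apply_zero 0 σ').symm
          simp only [vecAt, h0, Fin.cons_zero]
          rw [if_neg (by
            intro hle
            exact (Fin.succ_ne_zero k) (Fin.le_zero_iff.mp hle))]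
        · have hs : (Equiv.Perm.decomposeFin.symm (0, σ')).symm i'.succ = (σ'.symm i').succ := by
            rw [Equiv.symm_apply_eq, Equiv.Perm.decomposeFin_symm_apply_succ, Equiv.swap_self,
              Equiv.refl_apply, Equiv.apply_symm_apply]
          simp only [vecAt, hs, Fin.cons_succ, Fin.succ_le_succ_iff]
      have hlabcons : ∀ (σ' : Equiv.Perm (Fin m)) (ε' : Fin m → Bool) (k : Fin m),
          lab lam (Equiv.Perm.decomposeFin.symm (0, σ'), Fin.cons true ε') k.succ
            = lab lam' (σ', ε') k := by
        intro σ' ε' k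
        show lam _ = lam _
        exact congrArg lam (Subtype.ext (hveccons σ' ε' k))
      have hmapsucc : (univ : Finset (Fin m)).map (Fin.succEmb m)
          = (univ : Finset (Fin (m+1))).erase 0 := by
        ext i
        rw [Finset.mem_map, Finset.mem_erase]
        constructor
        · rintro ⟨a, -, rfl⟩
          exact ⟨Fin.succ_ne_zero a, mem_univ _⟩
        · rintro ⟨hne, -⟩
          obtain ⟨a, ha⟩ := Fin.exists_succ_eq.mpr hne
          exact ⟨a, mem_univ _, ha⟩
      have hAltiff : ∀ (σ' : Equiv.Perm (Fin m)) (ε' : Fin m → Bool),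
          (AltOn true ((univ : Finset (Fin (m+1))).erase 0)
            (lab lam (Equiv.Perm.decomposeFin.symm (0, σ'), Fin.cons true ε'))
          ↔ AltOn true (univ : Finset (Fin m)) (lab lam' (σ', ε'))) := by
        intro σ' ε'
        rw [← hmapsucc]
        exact altOn_map _ _ _ _ (Fin.succEmb m) (fun k _ => hlabcons σ' ε' k)
      have step4 : B.card = ((univ : Finset (Equiv.Perm (Fin m) × (Fin m → Bool))).filter
          (fun f => AltOn true (univ : Finset (Fin m)) (lab lam' f))).card := by
        refine Finset.card_bij'
          (fun x _ => ((Equiv.Perm.decomposeFin x.1.1).2, fun i => x.1.2 i.succ))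
          (fun f' _ => ((Equiv.Perm.decomposeFin.symm (0, f'.1), Fin.cons true f'.2), 0))
          ?_ ?_ ?_ ?_
        · -- i maps B into A'
          intro x hx
          rw [hBdef, Finset.mem_filter] at hx
          obtain ⟨-, ⟨hε, halt⟩, hj, hσ⟩ := hx
          rw [Finset.mem_filter]
          refine ⟨mem_univ _, ?_⟩
          have hp1 : (Equiv.Perm.decomposeFin x.1.1).1 = 0 := by
            have h1 : Equiv.Perm.decomposeFin.symm ((Equiv.Perm.decomposeFin x.1.1).1,
                (Equiv.Perm.decomposeFin x.1.1).2) = x.1.1 :=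
              Equiv.symm_apply_apply _ _
            calc (Equiv.Perm.decomposeFin x.1.1).1
                = Equiv.Perm.decomposeFin.symm ((Equiv.Perm.decomposeFin x.1.1).1,
                    (Equiv.Perm.decomposeFin x.1.1).2) 0 :=
                  (Equiv.Perm.decomposeFin_symm_apply_zero _ _).symm
              _ = x.1.1 0 := by rw [h1]
              _ = 0 := hσ
          have hrecon : (Equiv.Perm.decomposeFin.symm (0, (Equiv.Perm.decomposeFin x.1.1).2),
              (Fin.cons true (fun i => x.1.2 i.succ) : Fin (m+1) → Bool)) = x.1 := by
            refine prodExt ?_ ?_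
            · show Equiv.Perm.decomposeFin.symm (0, (Equiv.Perm.decomposeFin x.1.1).2) = x.1.1
              rw [← hp1]
              exact Equiv.symm_apply_apply _ _
            · show (Fin.cons true (fun i => x.1.2 i.succ) : Fin (m+1) → Bool) = x.1.2
              funext i
              refine Fin.cases ?_ ?_ i
              · rw [Fin.cons_zero]; exact hε.symm
              · intro i'; rw [Fin.cons_succ]
          rw [← hAltiff]
          rw [hrecon]
          rw [hj] at halt
          exact halt
        · -- j maps A' into B
          intro f' hf'
          rw [Finset.mem_filter] at hf'
          rw [hBdef, Finset.mem_filter]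
          refine ⟨mem_univ _, ⟨?_, ?_⟩, rfl, ?_⟩
          · show (Fin.cons true f'.2 : Fin (m+1) → Bool) 0 = true
            rw [Fin.cons_zero]
          · show AltOn true ((univ : Finset (Fin (m+1))).erase 0) _
            exact (hAltiff f'.1 f'.2).mpr hf'.2
          · exact Equiv.Perm.decomposeFin_symm_apply_zero 0 f'.1
        · -- left inverse
          intro x hx
          rw [hBdef, Finset.mem_filter] at hx
          obtain ⟨-, ⟨hε, -⟩, hj, hσ⟩ := hx
          have hp1 : (Equiv.Perm.decomposeFin x.1.1).1 = 0 := by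
            have h1 : Equiv.Perm.decomposeFin.symm ((Equiv.Perm.decomposeFin x.1.1).1,
                (Equiv.Perm.decomposeFin x.1.1).2) = x.1.1 :=
              Equiv.symm_apply_apply _ _
            calc (Equiv.Perm.decomposeFin x.1.1).1
                = Equiv.Perm.decomposeFin.symm ((Equiv.Perm.decomposeFin x.1.1).1,
                    (Equiv.Perm.decomposeFin x.1.1).2) 0 :=
                  (Equiv.Perm.decomposeFin_symm_apply_zero _ _).symm
              _ = x.1.1 0 := by rw [h1]
              _ = 0 := hσ
          refine prodExt (prodExt ?_ ?_) ?_
          · show Equiv.Perm.decomposeFin.symm (0, (Equiv.Perm.decomposeFin x.1.1).2) = x.1.1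
            rw [← hp1]
            exact Equiv.symm_apply_apply _ _
          · show (Fin.cons true (fun i => x.1.2 i.succ) : Fin (m+1) → Bool) = x.1.2
            funext i
            refine Fin.cases ?_ ?_ i
            · rw [Fin.cons_zero]; exact hε.symm
            · intro i'; rw [Fin.cons_succ]
          · exact hj.symm
        · -- right inverse
          intro f' _
          refine prodExt ?_ ?_
          · show (Equiv.Perm.decomposeFin (Equiv.Perm.decomposeFin.symm (0, f'.1))).2 = f'.1
            rw [Equiv.apply_symm_apply]
          · show (fun i => (Fin.cons true f'.2 : Fin (m+1) → Bool) i.succ) = f'.2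
            funext i
            rw [Fin.cons_succ]
      -- assemble
      have ihres := ih hm lam' hanti' hcomp'
      calc (A.card : ZMod 2) = (U.card : ZMod 2) := by rw [step1]
        _ = (T.card : ZMod 2) := step2.symm
        _ = (B.card : ZMod 2) := step3
        _ = 1 := by rw [step4]; exact ihres

/-- If `m, n` are positive and there is a map `λ` from the nonzero sign vectors of
`{+,-,0}ⁿ` to `{±1,…,±m}` with `λ(-x) = -λ(x)` and `λ(x)+λ(y) ≠ 0` whenever
`x ⪯ y`, then `m ≥ n`. -/
theorem octahedral_fan_bound {n m : ℕ} (hn : 0 < n) (hm : 0 < m)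
    (lam : {x : Fin n → SignType // x ≠ 0} → ℤ)
    (hbd : ∀ x, 1 ≤ |lam x| ∧ |lam x| ≤ (m : ℤ))
    (hanti : ∀ x y : {x : Fin n → SignType // x ≠ 0},
      (y : Fin n → SignType) = (fun i => -(x : Fin n → SignType) i) → lam y = -lam x)
    (hcomp : ∀ x y : {x : Fin n → SignType // x ≠ 0},
      SignLe (x : Fin n → SignType) (y : Fin n → SignType) → lam x + lam y ≠ 0) :
    n ≤ m := by
  have hcount := fan_count n hn lam hanti hcomp
  have hA : ((univ : Finset (Equiv.Perm (Fin n) × (Fin n → Bool))).filter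
      (fun f => AltOn true (univ : Finset (Fin n)) (lab lam f))).Nonempty := by
    rw [← Finset.card_pos]
    by_contra h
    push_neg at h
    have h0 : ((univ : Finset (Equiv.Perm (Fin n) × (Fin n → Bool))).filter
        (fun f => AltOn true (univ : Finset (Fin n)) (lab lam f))).card = 0 := by omega
    rw [h0] at hcount
    exact absurd hcount (by decide)
  obtain ⟨f, hf⟩ := hA
  have halt : AltOn true (univ : Finset (Fin n)) (lab lam f) := (Finset.mem_filter.mp hf).2
  have hcard : (univ : Finset (Fin n)).card ≤ (Finset.Icc (1:ℤ) (m:ℤ)).card := by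
    apply Finset.card_le_card_of_injOn (fun k => |lab lam f k|)
    · intro k _
      rw [Finset.mem_coe, Finset.mem_Icc]
      exact hbd _
    · intro k hk k' hk' he
      exact halt.1 k hk k' hk' he
  rw [Finset.card_univ, Fintype.card_fin] at hcard
  rwa [Int.card_Icc, show ((m:ℤ) + 1 - 1) = (m:ℤ) by ring, Int.toNat_natCast] at hcard
end

section
/- Chen's lemma: let λ : ({+,-,0}^n \ {0}, ⪯) → Q_{n-1} be an order-preserving Z₂-map (i.e., λ(-x) = -λ(x), and x ⪯ y implies λ(x) ≤_{Q_{n-1}} λ(y) and λ(x) + λ(y) ≠ 0). Suppose there is γ ∈ [n] such that whenever x ≺ y, at most one of |λ(x)|, |λ(y)| equals γ. Then there exist chains x₁ ⪯ ⋯ ⪯ xₙ and y₁ ⪯ ⋯ ⪯ yₙ with λ(x_i) = (-1)^i i for all i, λ(y_i) = (-1)^i i for all i ≠ γ, and x_γ = -y_γ. -/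
open Finset

/-!
The chains of the conclusion are produced by Ky Fan's parity argument. Call a flag
`c₀ ⪯ ⋯ ⪯ c_{k-1}` of sign vectors supported on the first `k` coordinates, `|supp cᵢ| = i + 1`,
negatively alternating if `|λ cᵢ|` increases strictly and `λ cᵢ < 0` exactly for even `i`. The
number `N k` of such flags is odd. Indeed `N 0 = 1`, and to compare `N (m + 1)` with `N m` one
counts in two ways the pairs `(σ, i)` of a flag `σ` of length `m + 1` in the hemisphere `x_m ≥ 0`
whose `i`-th facet is negatively alternating:
* A facet of a hemisphere flag lies in exactly two hemisphere flags, unless it lies on the equator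
  `x_m = 0`; the unmatched pairs are the extensions of the flags counted by `N m`.
* A flag has at most two negatively alternating facets, and exactly one if and only if it is
  alternating; up to `x ↦ -x`, the alternating hemisphere flags are those counted by `N (m + 1)`.
For `k = n` the bounds `1 ≤ |λ| ≤ n` force `λ cᵢ = (-1)^(i+1) (i+1)`.

For Chen's lemma put `t = (-1)^(γ+1) (γ+1)` and apply this to the map `λ'` that negates `λ x = ±t`
exactly when the one of `x, -x` with value `t` sits at level `γ` of a chain with the alternating
values at all other levels. The hypothesis on `γ` keeps `λ'` order-preserving. An alternating chain
`d` for `λ'` is alternating for `λ` off level `γ`, so `z = d γ` has `λ z = -t` and `-z` sits at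
level `γ` of a chain `c` with the alternating values off level `γ`; as `λ (-z) = t`, `c` is
alternating for `λ` everywhere.
-/

theorem Finset.eq_union_sdiff_of_between {α : Type*} [DecidableEq α] {U S T W : Finset α}
    (hUS : U ⊆ S) (hSW : S ⊆ W) (hUT : U ⊆ T) (hTW : T ⊆ W) (hS : #S = #U + 1)
    (hT : #T = #U + 1) (hW : #W = #U + 2) (hST : S ≠ T) : S = U ∪ (W \ T) := by
  obtain ⟨b, hbS, hbT⟩ : ∃ b ∈ S, b ∉ T := by
    by_contra! h
    exact hST (eq_of_subset_of_card_le h (by omega))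
  obtain ⟨a, ha⟩ : ∃ a, W \ T = {a} := card_eq_one.1 (by rw [card_sdiff_of_subset hTW]; omega)
  have hab : b = a := mem_singleton.1 (ha ▸ mem_sdiff.2 ⟨hSW hbS, hbT⟩)
  symm
  refine eq_of_subset_of_card_le (union_subset hUS (by rw [ha, ← hab]; simpa)) ?_
  rw [card_union_of_disjoint (disjoint_sdiff.mono_left hUT), ha, card_singleton, hS]

theorem Finset.card_modEq_card_unpaired {α : Type*} (s : Finset α) (R : α → α → Prop)
    [DecidablePred fun a => ∀ b, ¬ R a b]
    (hmem : ∀ a ∈ s, ∀ b, R a b → b ∈ s) (hsymm : ∀ a b, R a b → R b a)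
    (hirrefl : ∀ a, ¬ R a a) (huniq : ∀ a ∈ s, ∀ b c, R a b → R a c → b = c) :
    #s ≡ #{a ∈ s | ∀ b, ¬ R a b} [MOD 2] := by
  classical
  choose! g hg using fun a (h : ∃ b, R a b) => h
  have hP : ∀ a ∈ {a ∈ s | ∃ b, R a b}, a ∈ s ∧ R a (g a) := fun a ha =>
    ⟨(mem_filter.1 ha).1, hg a (mem_filter.1 ha).2⟩
  have hsum : ∑ _a ∈ {a ∈ s | ∃ b, R a b}, (1 : ZMod 2) = 0 :=
    sum_involution (fun a _ => g a) (fun _ _ => by decide)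
      (fun a ha _ h => hirrefl a (by simpa [h] using (hP a ha).2))
      (fun a ha => mem_filter.2 ⟨hmem a (hP a ha).1 _ (hP a ha).2, a, hsymm _ _ (hP a ha).2⟩)
      (fun a ha => (huniq _ (hmem a (hP a ha).1 _ (hP a ha).2) _ _
        (hg _ ⟨a, hsymm _ _ (hP a ha).2⟩) (hsymm _ _ (hP a ha).2)))
  simp only [sum_const, nsmul_eq_mul, mul_one, ZMod.natCast_eq_zero_iff] at hsum
  rw [← card_filter_add_card_filter_not (p := fun a => ∃ b, R a b)]
  convert (Nat.modEq_zero_iff_dvd.2 hsum).add_right #{a ∈ s | ¬ ∃ b, R a b} using 1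
  simp only [not_exists, zero_add]

theorem SignType.eq_one_of_nonneg_of_ne_zero {a : SignType} (h0 : 0 ≤ a) (ha : a ≠ 0) : a = 1 := by
  decide +revert

theorem SignType.eq_or_eq_or_eq_of_ne_zero {a b c : SignType} (ha : a ≠ 0) (hb : b ≠ 0)
    (hc : c ≠ 0) : a = b ∨ a = c ∨ b = c := by
  decide +revert

theorem Fin.succAbove_castSucc_eq_succAbove_succ {m : ℕ} {p t : Fin m} (h : t ≠ p) :
    p.castSucc.succAbove t = p.succ.succAbove t := by
  rcases h.lt_or_gt with h | h
  · rw [Fin.succAbove_castSucc_of_lt _ _ h, Fin.succAbove_succ_of_le _ _ h.le]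
  · rw [Fin.succAbove_castSucc_of_le _ _ h.le, Fin.succAbove_succ_of_lt _ _ h]

theorem Fin.eq_update_of_removeNth_eq {m : ℕ} {α : Type*} {σ σ' : Fin (m + 1) → α} {i : Fin (m + 1)}
    (h : Fin.removeNth i σ = Fin.removeNth i σ') : σ' = Function.update σ i (σ' i) := by
  rw [← Fin.insertNth_removeNth, h, Fin.insertNth_self_removeNth]

theorem Fin.eq_val_add_one_of_strictMono {k : ℕ} {f : Fin k → ℤ} (hf : StrictMono f)
    (h1 : ∀ p, 1 ≤ f p) (hk : ∀ p, f p ≤ k) (p : Fin k) : f p = p + 1 := by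
  let g : Fin k → Fin k := fun q => ⟨(f q - 1).toNat, by have := h1 q; have := hk q; omega⟩
  have hg : StrictMono g := fun a b hab => by
    have := hf hab
    have := h1 a
    simp only [g, Fin.lt_def]
    omega
  have := congrArg Fin.val (hg.apply_eq (x := p))
  simp only [g] at this
  have := h1 p
  omega

theorem Int.eq_neg_one_pow_mul_of_abs_eq {a : ℤ} {p : ℕ} (habs : |a| = p + 1)
    (hsign : a < 0 ↔ Even p) : a = (-1) ^ (p + 1) * (p + 1) := by
  rcases Nat.even_or_odd p with he | ho
  · rw [he.add_one.neg_one_pow, abs_of_neg (hsign.2 he)] at *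
    linarith
  · have : 0 ≤ a := not_lt.1 fun h => Nat.not_even_iff_odd.2 ho (hsign.1 h)
    rw [ho.add_one.neg_one_pow, abs_of_nonneg this] at *
    linarith

namespace SignLe
variable {n : ℕ} {x y z : Fin n → SignType}

theorem refl (x : Fin n → SignType) : SignLe x x := fun _ _ => rfl

theorem trans (hxy : SignLe x y) (hyz : SignLe y z) : SignLe x z := fun i hi =>
  (hxy i hi).trans (hyz i (hxy i hi ▸ hi))

theorem neg (h : SignLe x y) : SignLe (-x) (-y) := fun i hi => by
  simp only [Pi.neg_apply, ne_eq, SignType.neg_eq_zero_iff, neg_inj] at hi ⊢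
  exact h i hi

end SignLe

namespace Chen

variable {n : ℕ}

/-! ### Sign vectors and flags -/

def signSupport (x : Fin n → SignType) : Finset (Fin n) := {i | x i ≠ 0}

@[simp]
theorem mem_signSupport {x : Fin n → SignType} {i : Fin n} : i ∈ signSupport x ↔ x i ≠ 0 := by
  simp [signSupport]

@[simp]
theorem signSupport_neg (x : Fin n → SignType) : signSupport (-x) = signSupport x := by
  ext; simp [SignType.neg_eq_zero_iff]

theorem signSupport_piecewise (w : Fin n → SignType) (A : Finset (Fin n)) :
    signSupport (A.piecewise w 0) = A ∩ signSupport w := by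
  ext i; by_cases hi : i ∈ A <;> simp [hi]

theorem signLe_piecewise (w : Fin n → SignType) (A : Finset (Fin n)) :
    SignLe (A.piecewise w 0) w := fun i hi => by
  by_cases h : i ∈ A <;> simp_all

namespace SignLe

variable {x y w : Fin n → SignType}

theorem signSupport_subset (h : SignLe x y) : signSupport x ⊆ signSupport y := fun i hi => by
  rw [mem_signSupport] at hi ⊢
  exact h i hi ▸ hi

theorem eq_piecewise (h : SignLe x w) : x = (signSupport x).piecewise w 0 := by
  funext i
  by_cases hi : x i = 0
  · simp [hi]
  · rw [Finset.piecewise_eq_of_mem _ _ _ (mem_signSupport.2 hi)]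
    exact h i hi

theorem eq_of_signSupport_eq (hx : SignLe x w) (hy : SignLe y w)
    (hxy : signSupport x = signSupport y) : x = y := by
  rw [eq_piecewise hx, eq_piecewise hy, hxy]

theorem le_piecewise (hxw : SignLe x w) {A : Finset (Fin n)} (hA : signSupport x ⊆ A) :
    SignLe x (A.piecewise w 0) := fun i hi => by
  rw [Finset.piecewise_eq_of_mem _ _ _ (hA (mem_signSupport.2 hi))]
  exact hxw i hi

theorem eq_of_apply_eq {u z z' : Fin n → SignType} {j₀ : Fin n} (hu : SignLe u z)
    (hu' : SignLe u z') (hS : signSupport z = signSupport z')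
    (hj₀ : signSupport z \ signSupport u ⊆ {j₀}) (h : z j₀ = z' j₀) : z = z' := by
  funext j
  by_cases hj : j = j₀
  · exact hj ▸ h
  by_cases huj : u j = 0
  · by_cases hzj : z j = 0
    · have : z' j = 0 := by
        by_contra h'
        exact (mem_signSupport.1 (hS ▸ mem_signSupport.2 h')) hzj
      rw [hzj, this]
    · exact absurd (mem_singleton.1 (hj₀ (by simp [hzj, huj]))) hj
  · exact (hu j huj).symm.trans (hu' j huj)

end SignLe

abbrev NzSignVec (n : ℕ) := {x : Fin n → SignType // x ≠ 0}

instance : InvolutiveNeg (NzSignVec n) where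
  neg x := ⟨-x.1, fun h => x.2 (funext fun i => SignType.neg_eq_zero_iff.1 (congrFun h i))⟩
  neg_neg x := Subtype.ext (neg_neg x.1)

@[simp]
theorem NzSignVec.coe_neg (x : NzSignVec n) : ((-x : NzSignVec n) : Fin n → SignType) = -x.1 :=
  rfl

theorem NzSignVec.ext_signSupport {w : Fin n → SignType} {x y : NzSignVec n} (hx : SignLe x.1 w)
    (hy : SignLe y.1 w) (hxy : signSupport x.1 = signSupport y.1) : x = y :=
  Subtype.ext (SignLe.eq_of_signSupport_eq hx hy hxy)

def coordsBelow (n k : ℕ) : Finset (Fin n) := {j | (j : ℕ) < k}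

theorem card_coordsBelow_le (n k : ℕ) : #(coordsBelow n k) ≤ k := by
  rw [coordsBelow, Fin.card_filter_val_lt]; omega

def SupportedBelow (k : ℕ) (x : Fin n → SignType) : Prop := ∀ j, x j ≠ 0 → (j : ℕ) < k

namespace SupportedBelow

variable {k : ℕ} {x y : Fin n → SignType}

theorem of_signLe (hy : SupportedBelow k y) (hxy : SignLe x y) : SupportedBelow k x :=
  fun j hj => hy j (hxy j hj ▸ hj)

theorem neg (hx : SupportedBelow k x) : SupportedBelow k (-x) :=
  fun j hj => hx j (by simpa [SignType.neg_eq_zero_iff] using hj)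

theorem signSupport_subset (hx : SupportedBelow k x) :
    signSupport x ⊆ coordsBelow n k := fun j hj => by
  simpa [coordsBelow] using hx j (mem_signSupport.1 hj)

theorem card_signSupport_le (hx : SupportedBelow k x) : #(signSupport x) ≤ k :=
  (card_le_card (signSupport_subset hx)).trans (card_coordsBelow_le n k)

theorem signSupport_eq (hx : SupportedBelow k x) (hk : k ≤ #(signSupport x)) :
    signSupport x = coordsBelow n k :=
  eq_of_subset_of_card_le (signSupport_subset hx) ((card_coordsBelow_le n k).trans hk)

end SupportedBelow

def IsSignChain {k : ℕ} (c : Fin k → NzSignVec n) : Prop :=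
  ∀ p q, p ≤ q → SignLe (c p).1 (c q).1

def IsSignFlag {k : ℕ} (c : Fin k → NzSignVec n) : Prop :=
  IsSignChain c ∧ ∀ p, #(signSupport (c p).1) = p + 1

theorem IsSignFlag.neg {k : ℕ} {c : Fin k → NzSignVec n} (hc : IsSignFlag c) :
    IsSignFlag (fun p => -c p) :=
  ⟨fun p q hpq => SignLe.neg (hc.1 p q hpq), fun p => by simpa using hc.2 p⟩

theorem IsSignFlag.init {m : ℕ} {σ : Fin (m + 1) → NzSignVec n} (hσ : IsSignFlag σ) :
    IsSignFlag (Fin.init σ) :=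
  ⟨fun p q hpq => hσ.1 p.castSucc q.castSucc (Fin.castSucc_le_castSucc_iff.2 hpq),
    fun p => hσ.2 p.castSucc⟩

theorem IsSignFlag.update {m : ℕ} {σ : Fin (m + 1) → NzSignVec n} (hσ : IsSignFlag σ)
    {i : Fin (m + 1)} {z : NzSignVec n} (hlt : ∀ q < i, SignLe (σ q).1 z.1)
    (hgt : ∀ q, i < q → SignLe z.1 (σ q).1) (hz : #(signSupport z.1) = i + 1) :
    IsSignFlag (Function.update σ i z) := by
  refine ⟨fun p q hpq => ?_, fun p => ?_⟩
  · simp only [Function.update_apply]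
    split_ifs with hp hq hq
    · exact SignLe.refl _
    · exact hgt q (hp ▸ lt_of_le_of_ne hpq (Ne.symm (hp ▸ hq)))
    · exact hlt p (lt_of_le_of_ne (hq ▸ hpq) hp)
    · exact hσ.1 p q hpq
  · rcases eq_or_ne p i with rfl | hp
    · simpa using hz
    · simpa [hp] using hσ.2 p

theorem IsSignFlag.snoc {m : ℕ} {τ : Fin m → NzSignVec n} (hτ : IsSignFlag τ) {z : NzSignVec n}
    (hτz : ∀ q, SignLe (τ q).1 z.1) (hz : #(signSupport z.1) = m + 1) :
    IsSignFlag (Fin.snoc τ z : Fin (m + 1) → NzSignVec n) := by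
  refine ⟨fun p q hpq => ?_, fun p => ?_⟩
  · induction q using Fin.lastCases with
    | last =>
      induction p using Fin.lastCases with
      | last => simpa using SignLe.refl z.1
      | cast p => simpa using hτz p
    | cast q =>
      induction p using Fin.lastCases with
      | last => exact absurd hpq (by simp)
      | cast p => simpa using hτ.1 p q (Fin.castSucc_le_castSucc_iff.1 hpq)
  · induction p using Fin.lastCases with
    | last => simpa using hz
    | cast p => simpa using hτ.2 p

section Join

variable {k : ℕ} {c : Fin k → NzSignVec n} {i : ℕ}

/-- The largest of the first `i` members of a chain, or `0` if `i = 0`. -/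
def chainJoin (c : Fin k → NzSignVec n) (i : ℕ) : Fin n → SignType :=
  if h : 0 < i ∧ i ≤ k then (c ⟨i - 1, by omega⟩).1 else 0

theorem signLe_chainJoin (hc : IsSignChain c) (hi : i ≤ k) {q : Fin k} (hq : (q : ℕ) < i) :
    SignLe (c q).1 (chainJoin c i) := by
  rw [chainJoin, dif_pos ⟨by omega, hi⟩]
  exact hc _ _ (by rw [Fin.le_def]; simp only; omega)

theorem chainJoin_signLe {y : Fin n → SignType}
    (hy : ∀ q : Fin k, (q : ℕ) < i → SignLe (c q).1 y) : SignLe (chainJoin c i) y := by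
  unfold chainJoin
  split_ifs with h
  · exact hy _ (by simp; omega)
  · exact fun j hj => absurd rfl hj

theorem card_signSupport_chainJoin (hc : IsSignFlag c) (hi : i ≤ k) :
    #(signSupport (chainJoin c i)) = i := by
  unfold chainJoin
  split_ifs with h
  · rw [hc.2]; simp; omega
  · have : i = 0 := by omega
    simp [signSupport, this]

theorem supportedBelow_chainJoin {l : ℕ}
    (hc : ∀ q : Fin k, (q : ℕ) < i → SupportedBelow l (c q).1) :
    SupportedBelow l (chainJoin c i) := by
  unfold chainJoin
  split_ifs with h
  · exact hc _ (by simp; omega)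
  · exact fun j hj => absurd rfl hj

end Join

-- `(j : ℕ) = m` instead of `j = ⟨m, _⟩`, so that no proof of `m < n` is needed.
def InUpperHemisphere (m : ℕ) (x : Fin n → SignType) : Prop :=
  SupportedBelow (m + 1) x ∧ ∀ j : Fin n, (j : ℕ) = m → 0 ≤ x j

theorem InUpperHemisphere.of_signLe {m : ℕ} {x y : Fin n → SignType}
    (hy : InUpperHemisphere m y) (hxy : SignLe x y) : InUpperHemisphere m x := by
  refine ⟨SupportedBelow.of_signLe hy.1 hxy, fun j hj => ?_⟩
  by_cases hx : x j = 0
  · exact hx ▸ le_rfl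
  · exact hxy j hx ▸ hy.2 j hj

def IsHemiFlag (m : ℕ) (σ : Fin (m + 1) → NzSignVec n) : Prop :=
  IsSignFlag σ ∧ ∀ p, InUpperHemisphere m (σ p).1

/-! ### Completing a facet of a hemisphere flag -/

section HemiFlag

variable {m : ℕ} {σ : Fin (m + 1) → NzSignVec n}

theorem IsHemiFlag.update_castSucc_iff (hσ : IsHemiFlag m σ) (p : Fin m) (z : NzSignVec n) :
    IsHemiFlag m (Function.update σ p.castSucc z) ↔ SignLe (chainJoin σ p) z.1 ∧
      SignLe z.1 (σ p.succ).1 ∧ #(signSupport z.1) = p + 1 := by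
  constructor
  · rintro ⟨⟨hchain, hcard⟩, -⟩
    refine ⟨chainJoin_signLe fun q hq => ?_, ?_, by simpa using hcard p.castSucc⟩
    · have hqp : q ≠ p.castSucc := Fin.ne_of_lt (by rw [Fin.lt_def]; simpa using hq)
      simpa [hqp] using hchain q p.castSucc (by rw [Fin.le_def]; simp; omega)
    · simpa [(Fin.castSucc_lt_succ (i := p)).ne'] using
        hchain p.castSucc p.succ Fin.castSucc_lt_succ.le
  · rintro ⟨hlow, hhigh, hcard⟩
    refine ⟨hσ.1.update (fun q hq => ?_) (fun q hq => ?_) (by simpa using hcard), fun r => ?_⟩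
    · exact SignLe.trans (signLe_chainJoin hσ.1.1 (by omega) (by simpa [Fin.lt_def] using hq))
        hlow
    · exact SignLe.trans hhigh (hσ.1.1 _ _ (Fin.castSucc_lt_iff_succ_le.1 hq))
    · rcases eq_or_ne r p.castSucc with rfl | hr
      · simpa using (hσ.2 p.succ).of_signLe hhigh
      · simpa [hr] using hσ.2 r

theorem IsHemiFlag.update_last_iff (hσ : IsHemiFlag m σ) (z : NzSignVec n) :
    IsHemiFlag m (Function.update σ (Fin.last m) z) ↔ SignLe (chainJoin σ m) z.1 ∧
      InUpperHemisphere m z.1 ∧ #(signSupport z.1) = m + 1 := by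
  constructor
  · rintro ⟨⟨hchain, hcard⟩, hhemi⟩
    refine ⟨chainJoin_signLe fun q hq => ?_, by simpa using hhemi (Fin.last m),
      by simpa using hcard (Fin.last m)⟩
    have hq' : q ≠ Fin.last m := Fin.ne_of_lt (by rw [Fin.lt_def]; simpa using hq)
    simpa [hq'] using hchain q (Fin.last m) (Fin.le_last q)
  · rintro ⟨hlow, hhemi, hcard⟩
    refine ⟨hσ.1.update (fun q hq => ?_) (fun q hq => absurd hq (not_lt.2 (Fin.le_last q)))
      (by simpa using hcard), fun r => ?_⟩
    · exact SignLe.trans (signLe_chainJoin hσ.1.1 (by omega) (by simpa [Fin.lt_def] using hq))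
        hlow
    · rcases eq_or_ne r (Fin.last m) with rfl | hr
      · simpa using hhemi
      · simpa [hr] using hσ.2 r

theorem IsHemiFlag.exists_ne_update_castSucc (hσ : IsHemiFlag m σ) (p : Fin m) :
    ∃ z ≠ σ p.castSucc, IsHemiFlag m (Function.update σ p.castSucc z) := by
  obtain ⟨hu, hw, hS⟩ := (hσ.update_castSucc_iff p _).1 (by rwa [Function.update_eq_self])
  set U := signSupport (chainJoin σ p)
  set S := signSupport (σ p.castSucc).1
  set W := signSupport (σ p.succ).1
  have hUcard : #U = p := card_signSupport_chainJoin hσ.1 (by omega)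
  have hWcard : #W = p + 2 := by simpa using hσ.1.2 p.succ
  have hUS : U ⊆ S := SignLe.signSupport_subset hu
  have hSW : S ⊆ W := SignLe.signSupport_subset hw
  have hA : #(U ∪ (W \ S)) = p + 1 := by
    rw [card_union_of_disjoint (disjoint_sdiff.mono_left hUS), card_sdiff_of_subset hSW]
    omega
  have hAW : U ∪ (W \ S) ⊆ W := union_subset (hUS.trans hSW) sdiff_subset
  have hsupp : signSupport ((U ∪ (W \ S)).piecewise (σ p.succ).1 0) = U ∪ (W \ S) := by
    rw [signSupport_piecewise, inter_eq_left.2 hAW]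
  have hne0 : (U ∪ (W \ S)).piecewise (σ p.succ).1 0 ≠ 0 := fun h0 => by
    simp [h0, signSupport] at hsupp
    rw [← hsupp] at hA
    simp at hA
  refine ⟨⟨_, hne0⟩, fun h => ?_, (hσ.update_castSucc_iff p _).2
    ⟨SignLe.le_piecewise (SignLe.trans hu hw) subset_union_left, signLe_piecewise _ _, by
      rw [hsupp, hA]⟩⟩
  obtain ⟨a, ha⟩ : (W \ S).Nonempty := by
    rw [← card_pos, card_sdiff_of_subset hSW]; omega
  have haA : a ∈ signSupport ((U ∪ (W \ S)).piecewise (σ p.succ).1 0) :=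
    by rw [hsupp]; exact mem_union_right _ ha
  have hval : (U ∪ (W \ S)).piecewise (σ p.succ).1 0 = (σ p.castSucc).1 := congrArg Subtype.val h
  rw [hval] at haA
  exact (mem_sdiff.1 ha).2 haA

theorem IsHemiFlag.eq_or_eq_or_eq_of_update_castSucc (hσ : IsHemiFlag m σ) (p : Fin m)
    {z₁ z₂ z₃ : NzSignVec n} (h₁ : IsHemiFlag m (Function.update σ p.castSucc z₁))
    (h₂ : IsHemiFlag m (Function.update σ p.castSucc z₂))
    (h₃ : IsHemiFlag m (Function.update σ p.castSucc z₃)) : z₁ = z₂ ∨ z₁ = z₃ ∨ z₂ = z₃ := by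
  set U := signSupport (chainJoin σ p)
  set W := signSupport (σ p.succ).1
  have hU : #U = p := card_signSupport_chainJoin hσ.1 (by omega)
  have hW : #W = p + 2 := by simpa using hσ.1.2 p.succ
  have key : ∀ {x y : NzSignVec n}, IsHemiFlag m (Function.update σ p.castSucc x) →
      IsHemiFlag m (Function.update σ p.castSucc y) → x ≠ y →
        signSupport y.1 = U ∪ (W \ signSupport x.1) := by
    intro x y hx hy hxy
    obtain ⟨hux, hxw, hx⟩ := (hσ.update_castSucc_iff p x).1 hx
    obtain ⟨huy, hyw, hy⟩ := (hσ.update_castSucc_iff p y).1 hy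
    exact Finset.eq_union_sdiff_of_between (SignLe.signSupport_subset huy)
      (SignLe.signSupport_subset hyw) (SignLe.signSupport_subset hux)
      (SignLe.signSupport_subset hxw) (by omega) (by omega) (by omega)
      fun h => hxy (NzSignVec.ext_signSupport hxw hyw h.symm)
  by_contra! h
  exact h.2.2 (NzSignVec.ext_signSupport ((hσ.update_castSucc_iff p z₂).1 h₂).2.1
    ((hσ.update_castSucc_iff p z₃).1 h₃).2.1 ((key h₁ h₂ h.1).trans (key h₁ h₃ h.2.1).symm))

theorem IsHemiFlag.signSupport_eq_of_update_last (hσ : IsHemiFlag m σ) {z : NzSignVec n}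
    (hz : IsHemiFlag m (Function.update σ (Fin.last m) z)) :
    signSupport z.1 = coordsBelow n (m + 1) := by
  obtain ⟨-, hH, hcard⟩ := (hσ.update_last_iff z).1 hz
  exact SupportedBelow.signSupport_eq hH.1 hcard.ge

theorem IsHemiFlag.eq_or_eq_or_eq_of_update_last (hσ : IsHemiFlag m σ)
    {z₁ z₂ z₃ : NzSignVec n} (h₁ : IsHemiFlag m (Function.update σ (Fin.last m) z₁))
    (h₂ : IsHemiFlag m (Function.update σ (Fin.last m) z₂))
    (h₃ : IsHemiFlag m (Function.update σ (Fin.last m) z₃)) : z₁ = z₂ ∨ z₁ = z₃ ∨ z₂ = z₃ := by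
  set U := signSupport (chainJoin σ m)
  have hU : #U = m := card_signSupport_chainJoin hσ.1 (by omega)
  have hUz : U ⊆ signSupport z₁.1 :=
    SignLe.signSupport_subset ((hσ.update_last_iff z₁).1 h₁).1
  obtain ⟨j₀, hj₀⟩ : ∃ j₀, signSupport z₁.1 \ U = {j₀} := card_eq_one.1 (by
    rw [card_sdiff_of_subset hUz, ((hσ.update_last_iff z₁).1 h₁).2.2, hU]; omega)
  have hj₀mem : ∀ {x : NzSignVec n}, IsHemiFlag m (Function.update σ (Fin.last m) x) →
      x.1 j₀ ≠ 0 := fun hx => by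
    have : j₀ ∈ signSupport z₁.1 := (mem_sdiff.1 (hj₀ ▸ mem_singleton_self j₀)).1
    rwa [hσ.signSupport_eq_of_update_last h₁, ← hσ.signSupport_eq_of_update_last hx,
      mem_signSupport] at this
  have key : ∀ {x y : NzSignVec n}, IsHemiFlag m (Function.update σ (Fin.last m) x) →
      IsHemiFlag m (Function.update σ (Fin.last m) y) → x.1 j₀ = y.1 j₀ → x = y := by
    intro x y hx hy hxy
    refine Subtype.ext (SignLe.eq_of_apply_eq ((hσ.update_last_iff x).1 hx).1
      ((hσ.update_last_iff y).1 hy).1 ?_ ?_ hxy)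
    · rw [hσ.signSupport_eq_of_update_last hx, hσ.signSupport_eq_of_update_last hy]
    · rw [hσ.signSupport_eq_of_update_last hx, ← hσ.signSupport_eq_of_update_last h₁, hj₀]
  rcases SignType.eq_or_eq_or_eq_of_ne_zero (hj₀mem h₁) (hj₀mem h₂) (hj₀mem h₃) with h | h | h
  · exact Or.inl (key h₁ h₂ h)
  · exact Or.inr (Or.inl (key h₁ h₃ h))
  · exact Or.inr (Or.inr (key h₂ h₃ h))

theorem IsHemiFlag.eq_or_eq_or_eq_of_update (hσ : IsHemiFlag m σ) (i : Fin (m + 1))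
    {z₁ z₂ z₃ : NzSignVec n} (h₁ : IsHemiFlag m (Function.update σ i z₁))
    (h₂ : IsHemiFlag m (Function.update σ i z₂)) (h₃ : IsHemiFlag m (Function.update σ i z₃)) :
    z₁ = z₂ ∨ z₁ = z₃ ∨ z₂ = z₃ := by
  induction i using Fin.lastCases with
  | last => exact hσ.eq_or_eq_or_eq_of_update_last h₁ h₂ h₃
  | cast p => exact hσ.eq_or_eq_or_eq_of_update_castSucc p h₁ h₂ h₃

def IsEquatorFacet (m : ℕ) (σ : Fin (m + 1) → NzSignVec n) (i : Fin (m + 1)) : Prop :=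
  ∀ t : Fin m, SupportedBelow m (Fin.removeNth i σ t).1

theorem IsHemiFlag.eq_last_of_isEquatorFacet (hσ : IsHemiFlag m σ) {i : Fin (m + 1)}
    (h : IsEquatorFacet m σ i) : i = Fin.last m := by
  by_contra hi
  obtain ⟨t, ht⟩ := Fin.exists_succAbove_eq (Ne.symm hi)
  have := SupportedBelow.card_signSupport_le (h t)
  rw [Fin.removeNth_apply, ht, hσ.1.2] at this
  simp at this

theorem IsHemiFlag.eq_of_update_of_isEquatorFacet (hσ : IsHemiFlag m σ) {i : Fin (m + 1)}
    (h : IsEquatorFacet m σ i) {z : NzSignVec n} (hz : IsHemiFlag m (Function.update σ i z)) :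
    z = σ i := by
  obtain rfl := hσ.eq_last_of_isEquatorFacet h
  have hσ' : IsHemiFlag m (Function.update σ (Fin.last m) (σ (Fin.last m))) := by
    rwa [Function.update_eq_self]
  set U := signSupport (chainJoin σ m)
  have hU : U = coordsBelow n m :=
    SupportedBelow.signSupport_eq (supportedBelow_chainJoin fun q hq => by
      simpa [Fin.init] using h ⟨q, hq⟩) (card_signSupport_chainJoin hσ.1 (by omega)).ge
  have hzS := hσ.signSupport_eq_of_update_last hz
  have hσS := hσ.signSupport_eq_of_update_last hσ'
  obtain ⟨j₀, hj₀⟩ : ∃ j₀, signSupport z.1 \ U = {j₀} := card_eq_one.1 (by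
    rw [card_sdiff_of_subset (SignLe.signSupport_subset ((hσ.update_last_iff z).1 hz).1),
      ((hσ.update_last_iff z).1 hz).2.2, card_signSupport_chainJoin hσ.1 (by omega)]
    omega)
  have hj₀m : (j₀ : ℕ) = m := by
    have := hj₀ ▸ mem_singleton_self j₀
    rw [hzS, hU] at this
    simp [coordsBelow] at this
    omega
  have hone : ∀ {x : NzSignVec n}, IsHemiFlag m (Function.update σ (Fin.last m) x) →
      x.1 j₀ = 1 := fun hx => by
    obtain ⟨-, hH, -⟩ := (hσ.update_last_iff _).1 hx
    refine SignType.eq_one_of_nonneg_of_ne_zero (hH.2 j₀ hj₀m) (mem_signSupport.1 ?_)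
    rw [hσ.signSupport_eq_of_update_last hx]
    simp [coordsBelow]
    omega
  refine Subtype.ext (SignLe.eq_of_apply_eq ((hσ.update_last_iff z).1 hz).1
    ((hσ.update_last_iff _).1 hσ').1 (hzS.trans hσS.symm) hj₀.subset
    ((hone hz).trans (hone hσ').symm))

theorem IsHemiFlag.exists_ne_update_last (hσ : IsHemiFlag m σ)
    (h : ¬ IsEquatorFacet m σ (Fin.last m)) :
    ∃ z ≠ σ (Fin.last m), IsHemiFlag m (Function.update σ (Fin.last m) z) := by
  have hσ' : IsHemiFlag m (Function.update σ (Fin.last m) (σ (Fin.last m))) := by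
    rwa [Function.update_eq_self]
  obtain ⟨hu, hH, hcard⟩ := (hσ.update_last_iff _).1 hσ'
  set x := (σ (Fin.last m)).1
  set U := signSupport (chainJoin σ m)
  obtain ⟨j₀, hj₀⟩ : ∃ j₀, signSupport x \ U = {j₀} := card_eq_one.1 (by
    rw [card_sdiff_of_subset (SignLe.signSupport_subset hu), hcard,
      card_signSupport_chainJoin hσ.1 (by omega)]
    omega)
  obtain ⟨hj₀x, hj₀U⟩ := mem_sdiff.1 (hj₀ ▸ mem_singleton_self j₀)
  rw [mem_signSupport] at hj₀x
  rw [mem_signSupport, not_not] at hj₀U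
  have htop : ∀ j : Fin n, (j : ℕ) = m → j ≠ j₀ := by
    simp only [IsEquatorFacet, SupportedBelow, Fin.removeNth_apply, Fin.succAbove_last,
      not_forall] at h
    obtain ⟨t, j, hj, hjm⟩ := h
    have hjm : (j : ℕ) = m := by have := (hσ.2 t.castSucc).1 j hj; omega
    intro j' hj' hj'₀
    have : j' = j := Fin.ext (hj'.trans hjm.symm)
    subst this hj'₀
    exact hj ((signLe_chainJoin hσ.1.1 (by omega) (by simp) j' hj).trans hj₀U)
  set y := Function.update x j₀ (-x j₀)
  have hy : ∀ j, y j ≠ 0 ↔ x j ≠ 0 := fun j => by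
    rcases eq_or_ne j j₀ with rfl | hj
    · simp [y, SignType.neg_eq_zero_iff]
    · simp [y, hj]
  have hyx : signSupport y = signSupport x := by ext j; simpa using hy j
  have hy₀ : y ≠ 0 := fun h0 => (hy j₀).2 hj₀x (by simp [h0])
  refine ⟨⟨y, hy₀⟩, fun he => ?_, (hσ.update_last_iff _).2 ⟨fun j hj => ?_, ⟨fun j hj => ?_,
    fun j hj => ?_⟩, by simpa [hyx] using hcard⟩⟩
  · have := congrFun (congrArg Subtype.val he) j₀
    simp only [y, Function.update_self] at this
    exact hj₀x (SignType.neg_eq_self_iff.1 this)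
  · have : j ≠ j₀ := fun e => hj (e ▸ hj₀U)
    simp only [y, Function.update_of_ne this]
    exact hu j hj
  · exact hH.1 j ((hy j).1 hj)
  · simpa [y, Function.update_of_ne (htop j hj)] using hH.2 j hj

theorem IsHemiFlag.exists_ne_update (hσ : IsHemiFlag m σ) {i : Fin (m + 1)}
    (h : ¬ IsEquatorFacet m σ i) : ∃ z ≠ σ i, IsHemiFlag m (Function.update σ i z) := by
  induction i using Fin.lastCases with
  | last => exact hσ.exists_ne_update_last h
  | cast p => exact hσ.exists_ne_update_castSucc p

theorem SupportedBelow.inUpperHemisphere {x : Fin n → SignType} (hx : SupportedBelow m x) :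
    InUpperHemisphere m x := by
  refine ⟨fun j hj => (hx j hj).trans (Nat.lt_succ_self m), fun j hj => ?_⟩
  by_contra h
  exact absurd (hx j fun h0 => h (h0 ▸ le_rfl)) (by omega)

theorem exists_isHemiFlag_snoc (hmn : m < n) {τ : Fin m → NzSignVec n} (hτ : IsSignFlag τ)
    (hτm : ∀ q, SupportedBelow m (τ q).1) :
    ∃ z, IsHemiFlag m (Fin.snoc τ z : Fin (m + 1) → NzSignVec n) := by
  set u := chainJoin τ m
  have hu : SupportedBelow m u := supportedBelow_chainJoin fun q _ => hτm q
  have hum : u ⟨m, hmn⟩ = 0 := by by_contra h; exact absurd (hu _ h) (lt_irrefl m)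
  set x := Function.update u ⟨m, hmn⟩ 1
  have hux : SignLe u x := fun j hj => by
    have hjm : j ≠ ⟨m, hmn⟩ := by rintro rfl; exact hj hum
    simp [x, hjm]
  have hx : signSupport x = insert ⟨m, hmn⟩ (signSupport u) := by
    ext j
    rcases eq_or_ne j ⟨m, hmn⟩ with rfl | hj
    · simp [x]
    · simp [x, hj]
  have hx0 : x ≠ 0 := fun h => by simpa [x] using congrFun h ⟨m, hmn⟩
  refine ⟨⟨x, hx0⟩, hτ.snoc (fun q => SignLe.trans (signLe_chainJoin hτ.1 le_rfl q.2) hux) ?_,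
    fun p => ?_⟩
  · rw [hx, card_insert_of_notMem (by simpa using hum), card_signSupport_chainJoin hτ le_rfl]
  induction p using Fin.lastCases with
  | last =>
    refine ⟨fun j hj => ?_, fun j hj => ?_⟩
    · rcases eq_or_ne j ⟨m, hmn⟩ with rfl | hj'
      · exact Nat.lt_succ_self m
      · exact (hu j (by simpa [x, hj'] using hj)).trans (Nat.lt_succ_self m)
    · obtain rfl : j = ⟨m, hmn⟩ := Fin.ext hj
      simp [x]
  | cast q => simpa using (hτm q).inUpperHemisphere

theorem IsSignFlag.forall_inUpperHemisphere_or_neg {c : Fin (m + 1) → NzSignVec n}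
    (hc : IsSignFlag c) (hc' : ∀ p, SupportedBelow (m + 1) (c p).1) :
    (∀ p, InUpperHemisphere m (c p).1) ∨ ∀ p, InUpperHemisphere m (-c p).1 := by
  by_cases htop : ∀ j : Fin n, (j : ℕ) = m → 0 ≤ (c (Fin.last m)).1 j
  · exact Or.inl fun p =>
      InUpperHemisphere.of_signLe ⟨hc' _, htop⟩ (hc.1 p _ (Fin.le_last p))
  · simp only [not_forall, not_le] at htop
    obtain ⟨j, hj, hneg⟩ := htop
    refine Or.inr fun p => InUpperHemisphere.of_signLe ⟨(hc' _).neg, fun j' hj' => ?_⟩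
      (SignLe.neg (hc.1 p _ (Fin.le_last p)))
    obtain rfl : j' = j := Fin.ext (hj'.trans hj.symm)
    simp only [Pi.neg_apply]
    revert hneg
    generalize (c (Fin.last m)).1 j' = a
    decide +revert

theorem IsHemiFlag.not_forall_inUpperHemisphere_neg (hmn : m < n)
    {σ : Fin (m + 1) → NzSignVec n} (hσ : IsHemiFlag m σ) :
    ¬ ∀ p, InUpperHemisphere m (-σ p).1 := fun h => by
  have hmem : (⟨m, hmn⟩ : Fin n) ∈ signSupport (σ (Fin.last m)).1 := by
    rw [SupportedBelow.signSupport_eq (hσ.2 _).1 (by rw [hσ.1.2]; simp)]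
    simp [coordsBelow]
  have h₁ := (hσ.2 (Fin.last m)).2 ⟨m, hmn⟩ rfl
  have h₂ := (h (Fin.last m)).2 ⟨m, hmn⟩ rfl
  rw [mem_signSupport] at hmem
  simp only [NzSignVec.coe_neg, Pi.neg_apply] at h₂
  revert h₁ h₂ hmem
  generalize (σ (Fin.last m)).1 ⟨m, hmn⟩ = a
  decide +revert

end HemiFlag

/-! ### Negatively alternating sequences and their deletions -/

def IsNegAlternating {r : ℕ} (v : Fin r → ℤ) : Prop :=
  StrictMono (fun p => |v p|) ∧ ∀ p, v p < 0 ↔ Even (p : ℕ)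

section Alternating

variable {m : ℕ} {v : Fin (m + 1) → ℤ}

namespace IsNegAlternating

theorem neg_iff_of_removeNth {i q : Fin (m + 1)} (h : IsNegAlternating (Fin.removeNth i v))
    (hq : q ≠ i) : v q < 0 ↔ (Even (q : ℕ) ↔ q < i) := by
  obtain ⟨t, rfl⟩ := Fin.exists_succAbove_eq hq
  have ht := h.2 t
  rw [Fin.removeNth_apply] at ht
  rw [ht]
  rcases lt_or_ge t.castSucc i with hti | hti
  · rw [Fin.succAbove_of_castSucc_lt _ _ hti]
    simp [hti]
  · rw [Fin.succAbove_of_le_castSucc _ _ hti]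
    have : ¬ t.succ < i := fun h' => absurd (hti.trans_lt Fin.castSucc_lt_succ) h'.not_gt
    simp [this, Nat.even_add_one]

theorem lt_iff_lt_of_removeNth {i j q : Fin (m + 1)} (hi : IsNegAlternating (Fin.removeNth i v))
    (hj : IsNegAlternating (Fin.removeNth j v)) (hqi : q ≠ i) (hqj : q ≠ j) : q < i ↔ q < j := by
  have := (hi.neg_iff_of_removeNth hqi).symm.trans (hj.neg_iff_of_removeNth hqj)
  tauto

theorem adjacent_of_removeNth {i j : Fin (m + 1)} (hi : IsNegAlternating (Fin.removeNth i v))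
    (hj : IsNegAlternating (Fin.removeNth j v)) (hij : i < j) : (j : ℕ) = i + 1 := by
  by_contra hne
  have hq : (i : ℕ) + 1 < m + 1 := by have := j.isLt; rw [Fin.lt_def] at hij; omega
  have := lt_iff_lt_of_removeNth (q := ⟨i + 1, hq⟩) hi hj
    (by simp [Fin.ext_iff]) (by simp [Fin.ext_iff]; omega)
  rw [Fin.lt_def] at hij
  simp only [Fin.lt_def] at this
  omega

theorem eq_or_eq_or_eq_of_removeNth {i j k : Fin (m + 1)}
    (hi : IsNegAlternating (Fin.removeNth i v)) (hj : IsNegAlternating (Fin.removeNth j v))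
    (hk : IsNegAlternating (Fin.removeNth k v)) : i = j ∨ i = k ∨ j = k := by
  have adj : ∀ {a b : Fin (m + 1)}, IsNegAlternating (Fin.removeNth a v) →
      IsNegAlternating (Fin.removeNth b v) → a = b ∨ (b : ℕ) = a + 1 ∨ (a : ℕ) = b + 1 := by
    intro a b ha hb
    rcases lt_trichotomy a b with h | h | h
    · exact Or.inr (Or.inl (adjacent_of_removeNth ha hb h))
    · exact Or.inl h
    · exact Or.inr (Or.inr (adjacent_of_removeNth hb ha h))
  simp only [Fin.ext_iff]
  rcases adj hi hj with h₁ | h₁ | h₁ <;> rcases adj hi hk with h₂ | h₂ | h₂ <;>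
    rcases adj hj hk with h₃ | h₃ | h₃ <;> simp only [Fin.ext_iff] at * <;> omega

theorem removeNth_last (h : IsNegAlternating v) : IsNegAlternating (Fin.removeNth (Fin.last m) v) :=
  ⟨h.1.comp (Fin.strictMono_succAbove _), fun p => by simpa [Fin.init] using h.2 p.castSucc⟩

theorem eq_last_of_removeNth (h : IsNegAlternating v) {j : Fin (m + 1)}
    (hj : IsNegAlternating (Fin.removeNth j v)) : j = Fin.last m := by
  by_contra hne
  have hq : (j : ℕ) + 1 < m + 1 := by
    have := Fin.val_lt_last hne; omega
  have := hj.neg_iff_of_removeNth (q := ⟨j + 1, hq⟩) (by simp [Fin.ext_iff])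
  rw [h.2] at this
  have hlt : ¬ (⟨j + 1, hq⟩ : Fin (m + 1)) < j := by simp [Fin.lt_def]
  simp only [hlt, iff_false] at this
  exact iff_not_self this

theorem removeNth_zero_of_neg (h : IsNegAlternating (-v)) (hv : ∀ p, v p ≠ 0) :
    IsNegAlternating (Fin.removeNth 0 v) := by
  refine ⟨fun p q hpq => by simpa [Fin.tail] using h.1 (Fin.succ_lt_succ_iff.2 hpq), fun p => ?_⟩
  have := h.2 p.succ
  simp only [Pi.neg_apply, Left.neg_neg_iff, Fin.val_succ, Nat.even_add_one] at this
  simp only [Fin.removeNth_zero, Fin.tail]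
  have h0 := hv p.succ
  constructor
  · intro hneg
    by_contra he
    have := this.2 he
    omega
  · intro he
    by_contra hnn
    exact this.1 (by omega) he

theorem eq_zero_of_removeNth_of_neg (h : IsNegAlternating (-v)) {j : Fin (m + 1)}
    (hj : IsNegAlternating (Fin.removeNth j v)) : j = 0 := by
  by_contra hne
  have := hj.neg_iff_of_removeNth (Ne.symm hne)
  have h0 := h.2 0
  simp [Fin.pos_iff_ne_zero.2 hne] at this h0
  omega

theorem eq_or_eq_of_neg_iff {i : Fin (m + 1)}
    (hi : IsNegAlternating (Fin.removeNth i v)) {p : Fin m}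
    (hp : v p.castSucc < 0 ↔ v p.succ < 0) : i = p.castSucc ∨ i = p.succ := by
  by_contra! h
  have h₁ := hi.neg_iff_of_removeNth h.1.symm
  have h₂ := hi.neg_iff_of_removeNth h.2.symm
  have hlt : p.castSucc < i ↔ p.succ < i := by
    simp only [Fin.lt_def, Fin.val_castSucc, Fin.val_succ]
    have := Fin.val_ne_of_ne h.2
    simp only [Fin.val_succ] at this
    omega
  rw [hp, h₂, hlt, Fin.val_succ, Nat.even_add_one, Fin.val_castSucc] at h₁
  tauto

end IsNegAlternating

theorem isNegAlternating_or_of_alternating_sign (hv : ∀ p, v p ≠ 0)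
    (hmono : StrictMono fun p => |v p|)
    (halt : ∀ p : Fin m, v p.castSucc < 0 ↔ ¬ v p.succ < 0) :
    IsNegAlternating v ∨ IsNegAlternating (-v) := by
  have key : ∀ q : Fin (m + 1), v q < 0 ↔ (v 0 < 0 ↔ Even (q : ℕ)) := by
    intro q
    induction q using Fin.induction with
    | zero => simp
    | succ p ih =>
      rw [Fin.val_succ, Nat.even_add_one, ← not_iff_not, ← halt p, ih, Fin.val_castSucc]
      tauto
  by_cases h0 : v 0 < 0
  · exact Or.inl ⟨hmono, fun q => by simp [key q, h0]⟩
  · refine Or.inr ⟨by simpa using hmono, fun q => ?_⟩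
    have := hv q
    have := key q
    simp only [h0, false_iff] at this
    simp only [Pi.neg_apply, Left.neg_neg_iff]
    constructor
    · intro hq
      by_contra he
      have := this.2 he
      omega
    · intro he
      by_contra hq
      exact this.1 (by omega) he

theorem exists_swap_of_not_isNegAlternating (hv : ∀ p, v p ≠ 0)
    (hmono : ∀ p q, p < q → v p = v q ∨ |v p| < |v q|)
    (h : ¬ (IsNegAlternating v ∨ IsNegAlternating (-v))) :
    ∃ p : Fin m, (v p.castSucc < 0 ↔ v p.succ < 0) ∧
      (IsNegAlternating (Fin.removeNth p.castSucc v) ↔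
        IsNegAlternating (Fin.removeNth p.succ v)) := by
  by_cases hs : StrictMono fun p => |v p|
  · obtain ⟨p, hp⟩ : ∃ p : Fin m, ¬ (v p.castSucc < 0 ↔ ¬ v p.succ < 0) := by
      by_contra h'
      simp only [not_exists, not_not] at h'
      exact h (isNegAlternating_or_of_alternating_sign hv hs h')
    have hp' : v p.castSucc < 0 ↔ v p.succ < 0 := by tauto
    have hsign : ∀ t, v (p.castSucc.succAbove t) < 0 ↔ v (p.succ.succAbove t) < 0 := by
      intro t
      rcases eq_or_ne t p with rfl | ht
      · simp [hp'.symm]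
      · rw [Fin.succAbove_castSucc_eq_succAbove_succ ht]
    refine ⟨p, hp', fun h => ⟨hs.comp (Fin.strictMono_succAbove _), fun t => ?_⟩,
      fun h => ⟨hs.comp (Fin.strictMono_succAbove _), fun t => ?_⟩⟩
    · exact (hsign t).symm.trans (h.2 t)
    · exact (hsign t).trans (h.2 t)
  · obtain ⟨p, hp⟩ : ∃ p : Fin m, ¬ |v p.castSucc| < |v p.succ| := by
      by_contra! h'
      exact hs (Fin.strictMono_iff_lt_succ.2 h')
    have heq : v p.castSucc = v p.succ := (hmono _ _ Fin.castSucc_lt_succ).resolve_right hp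
    refine ⟨p, by rw [heq], ?_⟩
    have : Fin.removeNth p.castSucc v = Fin.removeNth p.succ v := by
      funext t
      rcases eq_or_ne t p with rfl | ht
      · simp [Fin.removeNth_apply, heq]
      · simp [Fin.removeNth_apply, Fin.succAbove_castSucc_eq_succAbove_succ ht]
    rw [this]

theorem isNegAlternating_or_of_unique (hv : ∀ p, v p ≠ 0)
    (hmono : ∀ p q, p < q → v p = v q ∨ |v p| < |v q|) {i : Fin (m + 1)}
    (hi : IsNegAlternating (Fin.removeNth i v))
    (huniq : ∀ j, IsNegAlternating (Fin.removeNth j v) → j = i) :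
    IsNegAlternating v ∨ IsNegAlternating (-v) := by
  by_contra h
  obtain ⟨p, hsign, hswap⟩ := exists_swap_of_not_isNegAlternating hv hmono h
  have hne : p.castSucc ≠ p.succ := Fin.castSucc_lt_succ.ne
  rcases hi.eq_or_eq_of_neg_iff hsign with rfl | rfl
  · exact hne (huniq _ (hswap.1 hi)).symm
  · exact hne (huniq _ (hswap.2 hi))

end Alternating

/-! ### Fan's parity count -/

section Counting

variable {m : ℕ} (lam : NzSignVec n → ℤ)

open Classical in
noncomputable def negAltFlags (k : ℕ) : Finset (Fin k → NzSignVec n) :=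
  {c | IsSignFlag c ∧ (∀ p, SupportedBelow k (c p).1) ∧ IsNegAlternating (lam ∘ c)}

open Classical in
noncomputable def hemiFacetPairs (m : ℕ) : Finset ((Fin (m + 1) → NzSignVec n) × Fin (m + 1)) :=
  {a | IsHemiFlag m a.1 ∧ IsNegAlternating (Fin.removeNth a.2 (lam ∘ a.1))}

open Classical in
noncomputable def altHemiFlags (m : ℕ) : Finset (Fin (m + 1) → NzSignVec n) :=
  {σ | IsHemiFlag m σ ∧ (IsNegAlternating (lam ∘ σ) ∨ IsNegAlternating (-(lam ∘ σ)))}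

def IsDeletionSwap (a b : (Fin (m + 1) → NzSignVec n) × Fin (m + 1)) : Prop :=
  a.1 = b.1 ∧ a.2 ≠ b.2 ∧ IsNegAlternating (Fin.removeNth a.2 (lam ∘ a.1)) ∧
    IsNegAlternating (Fin.removeNth b.2 (lam ∘ b.1))

def IsFacetSwap (a b : (Fin (m + 1) → NzSignVec n) × Fin (m + 1)) : Prop :=
  a.2 = b.2 ∧ a.1 ≠ b.1 ∧ IsHemiFlag m a.1 ∧ IsHemiFlag m b.1 ∧
    Fin.removeNth a.2 a.1 = Fin.removeNth a.2 b.1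

variable {lam}

@[simp]
theorem mem_negAltFlags {k : ℕ} {c : Fin k → NzSignVec n} : c ∈ negAltFlags lam k ↔
    IsSignFlag c ∧ (∀ p, SupportedBelow k (c p).1) ∧ IsNegAlternating (lam ∘ c) := by
  simp [negAltFlags]

@[simp]
theorem mem_hemiFacetPairs {a : (Fin (m + 1) → NzSignVec n) × Fin (m + 1)} :
    a ∈ hemiFacetPairs lam m ↔
      IsHemiFlag m a.1 ∧ IsNegAlternating (Fin.removeNth a.2 (lam ∘ a.1)) := by
  simp [hemiFacetPairs]

@[simp]
theorem mem_altHemiFlags {σ : Fin (m + 1) → NzSignVec n} : σ ∈ altHemiFlags lam m ↔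
    IsHemiFlag m σ ∧ (IsNegAlternating (lam ∘ σ) ∨ IsNegAlternating (-(lam ∘ σ))) := by
  simp [altHemiFlags]

theorem forall_not_isDeletionSwap_iff {a : (Fin (m + 1) → NzSignVec n) × Fin (m + 1)}
    (ha : a ∈ hemiFacetPairs lam m) : (∀ b, ¬ IsDeletionSwap lam a b) ↔
      ∀ j, IsNegAlternating (Fin.removeNth j (lam ∘ a.1)) → j = a.2 :=
  ⟨fun h j hj => by_contra fun hj' =>
      h (a.1, j) ⟨rfl, Ne.symm hj', (mem_hemiFacetPairs.1 ha).2, hj⟩,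
    fun h b hab => hab.2.1 (h b.2 (hab.1 ▸ hab.2.2.2)).symm⟩

open Classical in
theorem card_unpaired_isDeletionSwap (h0 : ∀ x, lam x ≠ 0)
    (hmono : ∀ x y : NzSignVec n, SignLe x.1 y.1 → lam x = lam y ∨ |lam x| < |lam y|) :
    #{a ∈ hemiFacetPairs lam m | ∀ b, ¬ IsDeletionSwap lam a b} = #(altHemiFlags lam m) := by
  refine card_bij (fun a _ => a.1) (fun a ha => ?_) (fun a ha b hb hab => ?_) (fun σ hσ => ?_)
  · obtain ⟨ha, hfree⟩ := mem_filter.1 ha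
    obtain ⟨hσ, hi⟩ := mem_hemiFacetPairs.1 ha
    exact mem_altHemiFlags.2 ⟨hσ, isNegAlternating_or_of_unique (fun p => h0 _)
      (fun p q hpq => hmono _ _ (hσ.1.1 p q hpq.le)) hi
      ((forall_not_isDeletionSwap_iff ha).1 hfree)⟩
  · obtain ⟨ha, hfree⟩ := mem_filter.1 ha
    obtain ⟨hb, -⟩ := mem_filter.1 hb
    exact Prod.ext hab ((forall_not_isDeletionSwap_iff ha).1 hfree b.2
      (hab ▸ (mem_hemiFacetPairs.1 hb).2)).symm
  · obtain ⟨hσ, hσalt | hσalt⟩ := mem_altHemiFlags.1 hσ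
    · have hmem : (σ, Fin.last m) ∈ hemiFacetPairs lam m :=
        mem_hemiFacetPairs.2 ⟨hσ, hσalt.removeNth_last⟩
      exact ⟨(σ, Fin.last m), mem_filter.2 ⟨hmem, (forall_not_isDeletionSwap_iff hmem).2
        fun j hj => hσalt.eq_last_of_removeNth hj⟩, rfl⟩
    · have hmem : (σ, 0) ∈ hemiFacetPairs lam m :=
        mem_hemiFacetPairs.2 ⟨hσ, hσalt.removeNth_zero_of_neg fun p => h0 _⟩
      exact ⟨(σ, 0), mem_filter.2 ⟨hmem, (forall_not_isDeletionSwap_iff hmem).2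
        fun j hj => hσalt.eq_zero_of_removeNth_of_neg hj⟩, rfl⟩

theorem card_hemiFacetPairs_modEq_altHemiFlags (h0 : ∀ x, lam x ≠ 0)
    (hmono : ∀ x y : NzSignVec n, SignLe x.1 y.1 → lam x = lam y ∨ |lam x| < |lam y|) :
    #(hemiFacetPairs lam m) ≡ #(altHemiFlags lam m) [MOD 2] := by
  classical
  rw [← card_unpaired_isDeletionSwap h0 hmono]
  refine Finset.card_modEq_card_unpaired _ (IsDeletionSwap lam) (fun a ha b hab => ?_)
    (fun a b h => ⟨h.1.symm, h.2.1.symm, h.2.2.2, h.2.2.1⟩) (fun a h => h.2.1 rfl)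
    (fun a _ b c hab hac => ?_)
  · exact mem_hemiFacetPairs.2 ⟨hab.1 ▸ (mem_hemiFacetPairs.1 ha).1, hab.2.2.2⟩
  · obtain ⟨σ, i⟩ := a
    obtain ⟨σ', j⟩ := b
    obtain ⟨σ'', k⟩ := c
    obtain ⟨rfl, hij, hi, hj⟩ := hab
    obtain ⟨rfl, hik, -, hk⟩ := hac
    rcases IsNegAlternating.eq_or_eq_or_eq_of_removeNth hi hj hk with h | h | h
    · exact absurd h hij
    · exact absurd h hik
    · exact Prod.ext rfl h

theorem forall_not_isFacetSwap_iff {a : (Fin (m + 1) → NzSignVec n) × Fin (m + 1)}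
    (ha : a ∈ hemiFacetPairs lam m) : (∀ b, ¬ IsFacetSwap a b) ↔ IsEquatorFacet m a.1 a.2 := by
  obtain ⟨σ, i⟩ := a
  have hσ := (mem_hemiFacetPairs.1 ha).1
  constructor
  · intro h
    by_contra hne
    obtain ⟨z, hz, hzσ⟩ := hσ.exists_ne_update hne
    refine h (Function.update σ i z, i)
      ⟨rfl, fun e => hz ?_, hσ, hzσ, (Fin.removeNth_update _ _ _).symm⟩
    simp only at e ⊢
    rw [e, Function.update_self]
  · rintro heq ⟨σ', j⟩ ⟨rfl, hne, -, hσ', hfacet⟩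
    have hσ'eq := Fin.eq_update_of_removeNth_eq hfacet
    rw [hσ'eq] at hσ'
    apply hne
    rw [hσ'eq, hσ.eq_of_update_of_isEquatorFacet heq hσ', Function.update_eq_self]

open Classical in
theorem card_unpaired_isFacetSwap (hmn : m < n) :
    #{a ∈ hemiFacetPairs lam m | ∀ b, ¬ IsFacetSwap a b} = #(negAltFlags lam m) := by
  have hunpaired : ∀ {a}, a ∈ {a ∈ hemiFacetPairs lam m | ∀ b, ¬ IsFacetSwap a b} →
      IsHemiFlag m a.1 ∧ a.2 = Fin.last m ∧ IsEquatorFacet m a.1 (Fin.last m) := fun ha => by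
    obtain ⟨ha, hfree⟩ := mem_filter.1 ha
    have hσ := (mem_hemiFacetPairs.1 ha).1
    have heq := (forall_not_isFacetSwap_iff ha).1 hfree
    have hlast := hσ.eq_last_of_isEquatorFacet heq
    exact ⟨hσ, hlast, hlast ▸ heq⟩
  refine card_bij (fun a _ => Fin.init a.1) (fun a ha => ?_) (fun a ha b hb hab => ?_)
    (fun τ hτ => ?_)
  · obtain ⟨hσ, hlast, heq⟩ := hunpaired ha
    have hNA := (mem_hemiFacetPairs.1 (mem_filter.1 ha).1).2
    rw [hlast, Fin.removeNth_last] at hNA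
    exact mem_negAltFlags.2 ⟨hσ.1.init, fun t => by simpa using heq t, hNA⟩
  · obtain ⟨hσ, hlast, heq⟩ := hunpaired ha
    obtain ⟨hσ', hlast', -⟩ := hunpaired hb
    have hb' := Fin.eq_update_of_removeNth_eq (i := Fin.last m) (σ := a.1) (σ' := b.1)
      (by simpa using hab)
    rw [hb'] at hσ'
    refine Prod.ext ?_ (hlast.trans hlast'.symm)
    rw [hb', hσ.eq_of_update_of_isEquatorFacet heq hσ', Function.update_eq_self]
  · obtain ⟨hτ, hτm, hNA⟩ := mem_negAltFlags.1 hτ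
    obtain ⟨z, hz⟩ := exists_isHemiFlag_snoc hmn hτ hτm
    have hmem : (Fin.snoc τ z, Fin.last m) ∈ hemiFacetPairs lam m :=
      mem_hemiFacetPairs.2 ⟨hz, by
        have : Fin.init (lam ∘ Fin.snoc τ z) = lam ∘ τ := by funext k; simp [Fin.init]
        rwa [Fin.removeNth_last, this]⟩
    refine ⟨(Fin.snoc τ z, Fin.last m), mem_filter.2 ⟨hmem, (forall_not_isFacetSwap_iff hmem).2
      fun t => by simpa using hτm t⟩, Fin.init_snoc _ _⟩

theorem card_hemiFacetPairs_modEq_negAltFlags (hmn : m < n) :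
    #(hemiFacetPairs lam m) ≡ #(negAltFlags lam m) [MOD 2] := by
  classical
  rw [← card_unpaired_isFacetSwap hmn]
  refine Finset.card_modEq_card_unpaired _ IsFacetSwap (fun a ha b hab => ?_)
    (fun a b h => ⟨h.1.symm, h.2.1.symm, h.2.2.2.1, h.2.2.1, h.1 ▸ h.2.2.2.2.symm⟩)
    (fun a h => h.2.1 rfl) (fun a ha b c hab hac => ?_)
  · obtain ⟨hi, -, -, hb, hfacet⟩ := hab
    refine mem_hemiFacetPairs.2 ⟨hb, ?_⟩
    have : Fin.removeNth a.2 (lam ∘ b.1) = lam ∘ Fin.removeNth a.2 b.1 := rfl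
    rw [← hi, this, ← hfacet]
    exact (mem_hemiFacetPairs.1 ha).2
  · obtain ⟨σ, i⟩ := a
    obtain ⟨σ', j⟩ := b
    obtain ⟨σ'', k⟩ := c
    obtain ⟨rfl, hne', hσ, hσ', hf'⟩ := hab
    obtain ⟨rfl, hne'', -, hσ'', hf''⟩ := hac
    dsimp only at hne' hσ hσ' hf' hne'' hσ'' hf''
    have e' := Fin.eq_update_of_removeNth_eq hf'
    have e'' := Fin.eq_update_of_removeNth_eq hf''
    rw [e'] at hσ'
    rw [e''] at hσ''
    rcases hσ.eq_or_eq_or_eq_of_update i (z₁ := σ i) (by rwa [Function.update_eq_self]) hσ'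
      hσ'' with h | h | h
    · exact absurd (by rw [e', ← h, Function.update_eq_self]) hne'
    · exact absurd (by rw [e'', ← h, Function.update_eq_self]) hne''
    · exact Prod.ext (by rw [e', e'', h]) rfl

theorem comp_neg_eq_neg_comp (hanti : ∀ x, lam (-x) = -lam x) {k : ℕ} (c : Fin k → NzSignVec n) :
    (lam ∘ fun p => -c p) = -(lam ∘ c) := funext fun p => hanti (c p)

open Classical in
theorem card_negAltFlags_succ (hmn : m < n) (hanti : ∀ x, lam (-x) = -lam x) :
    #(negAltFlags lam (m + 1)) = #(altHemiFlags lam m) := by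
  refine card_bij (fun c _ => if ∀ p, InUpperHemisphere m (c p).1 then c else fun p => -c p)
    (fun c hc => ?_) (fun c₁ hc₁ c₂ hc₂ h => ?_) (fun σ hσ => ?_)
  · obtain ⟨hc, hc', hNA⟩ := mem_negAltFlags.1 hc
    split_ifs with hH
    · exact mem_altHemiFlags.2 ⟨⟨hc, hH⟩, Or.inl hNA⟩
    · refine mem_altHemiFlags.2 ⟨⟨hc.neg, (hc.forall_inUpperHemisphere_or_neg hc').resolve_left hH⟩,
        Or.inr ?_⟩
      rwa [comp_neg_eq_neg_comp hanti, neg_neg]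
  · obtain ⟨-, -, hNA₁⟩ := mem_negAltFlags.1 hc₁
    obtain ⟨-, -, hNA₂⟩ := mem_negAltFlags.1 hc₂
    have hmixed : ∀ {c c' : Fin (m + 1) → NzSignVec n}, IsNegAlternating (lam ∘ c) →
        IsNegAlternating (lam ∘ c') → c ≠ fun p => -c' p := fun h h' he => by
      have h₀ := (h.2 0).2 (by simp)
      have h₀' := (h'.2 0).2 (by simp)
      simp only [he, Function.comp_apply, hanti] at h₀ h₀'
      omega
    split_ifs at h with h₁ h₂ h₂
    · exact h
    · exact absurd h (hmixed hNA₁ hNA₂)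
    · exact absurd h.symm (hmixed hNA₂ hNA₁)
    · funext p
      exact neg_injective (congrFun h p)
  · obtain ⟨hσ, hσalt | hσalt⟩ := mem_altHemiFlags.1 hσ
    · exact ⟨σ, mem_negAltFlags.2 ⟨hσ.1, fun p => (hσ.2 p).1, hσalt⟩, if_pos hσ.2⟩
    · refine ⟨fun p => -σ p, mem_negAltFlags.2 ⟨hσ.1.neg, fun p => (hσ.2 p).1.neg, ?_⟩, ?_⟩
      · rwa [comp_neg_eq_neg_comp hanti]
      · rw [if_neg (hσ.not_forall_inUpperHemisphere_neg hmn)]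
        simp

def altValue (i : Fin n) : ℤ := (-1) ^ ((i : ℕ) + 1) * ((i : ℕ) + 1)

theorem abs_altValue (i : Fin n) : |altValue i| = (i : ℕ) + 1 := by
  rw [altValue, abs_mul, abs_pow, abs_neg, abs_one, one_pow, one_mul]
  exact abs_of_nonneg (by positivity)

theorem altValue_ne_neg_self (i : Fin n) : altValue i ≠ -altValue i := fun h => by
  have := abs_altValue i
  rw [show altValue i = 0 by omega] at this
  simp at this
  omega

theorem negAltFlags_zero : negAltFlags lam 0 = univ := by
  ext c
  simp only [mem_negAltFlags, mem_univ, iff_true]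
  exact ⟨⟨fun p => p.elim0, fun p => p.elim0⟩, fun p => p.elim0, fun p => p.elim0, fun p => p.elim0⟩

theorem odd_card_negAltFlags (h0 : ∀ x, lam x ≠ 0) (hanti : ∀ x, lam (-x) = -lam x)
    (hmono : ∀ x y : NzSignVec n, SignLe x.1 y.1 → lam x = lam y ∨ |lam x| < |lam y|) :
    ∀ k ≤ n, Odd #(negAltFlags lam k)
  | 0, _ => by simp [negAltFlags_zero]
  | m + 1, hk => by
    have hstep := (card_hemiFacetPairs_modEq_altHemiFlags h0 hmono).symm.trans
      (card_hemiFacetPairs_modEq_negAltFlags hk)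
    have ih := odd_card_negAltFlags h0 hanti hmono m (by omega)
    rw [card_negAltFlags_succ hk hanti]
    rw [Nat.odd_iff] at ih ⊢
    exact Eq.trans hstep ih

theorem exists_isSignChain_eq_altValue (hbd : ∀ x, 1 ≤ |lam x| ∧ |lam x| ≤ n)
    (hanti : ∀ x, lam (-x) = -lam x)
    (hmono : ∀ x y : NzSignVec n, SignLe x.1 y.1 → lam x = lam y ∨ |lam x| < |lam y|) :
    ∃ c : Fin n → NzSignVec n, IsSignChain c ∧ ∀ i, lam (c i) = altValue i := by
  have h0 : ∀ x, lam x ≠ 0 := fun x h => by simpa [h] using (hbd x).1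
  obtain ⟨c, hc⟩ := card_pos.1 (odd_card_negAltFlags h0 hanti hmono n le_rfl).pos
  obtain ⟨hc, -, hNA⟩ := mem_negAltFlags.1 hc
  exact ⟨c, hc.1, fun i => Int.eq_neg_one_pow_mul_of_abs_eq
    (Fin.eq_val_add_one_of_strictMono hNA.1 (fun p => (hbd _).1) (fun p => (hbd _).2) i) (hNA.2 i)⟩

end Counting

/-! ### Modifying `λ` at level `γ` -/

section Flip

variable (lam : NzSignVec n → ℤ) (γ : Fin n)

def IsAlmostAltAt (x : NzSignVec n) : Prop :=
  ∃ d : Fin n → NzSignVec n, IsSignChain d ∧ (∀ i ≠ γ, lam (d i) = altValue i) ∧ d γ = x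

def FlipsAt (x : NzSignVec n) : Prop :=
  (lam x = altValue γ ∧ IsAlmostAltAt lam γ x) ∨ (lam x = -altValue γ ∧ IsAlmostAltAt lam γ (-x))

open Classical in
noncomputable def flipAt (x : NzSignVec n) : ℤ := if FlipsAt lam γ x then -lam x else lam x

variable {lam γ}

theorem abs_flipAt (x : NzSignVec n) : |flipAt lam γ x| = |lam x| := by
  unfold flipAt
  split_ifs <;> simp

theorem flipAt_of_abs_ne {x : NzSignVec n} (hx : |lam x| ≠ (γ : ℕ) + 1) :
    flipAt lam γ x = lam x := by
  refine if_neg fun h => hx ?_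
  rcases h with ⟨h, -⟩ | ⟨h, -⟩ <;> simp [h, abs_altValue]

theorem flipsAt_neg_iff (hanti : ∀ x, lam (-x) = -lam x) (x : NzSignVec n) :
    FlipsAt lam γ (-x) ↔ FlipsAt lam γ x := by
  simp only [FlipsAt, hanti, neg_neg, neg_eq_iff_eq_neg]
  tauto

theorem flipAt_neg (hanti : ∀ x, lam (-x) = -lam x) (x : NzSignVec n) :
    flipAt lam γ (-x) = -flipAt lam γ x := by
  unfold flipAt
  rw [flipsAt_neg_iff hanti, hanti]
  split_ifs <;> rfl

theorem flipAt_mono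
    (hmono : ∀ x y : NzSignVec n, SignLe x.1 y.1 → lam x = lam y ∨ |lam x| < |lam y|)
    (hγ : ∀ x y : NzSignVec n, SignLe x.1 y.1 → x ≠ y →
      ¬(|lam x| = (γ : ℕ) + 1 ∧ |lam y| = (γ : ℕ) + 1))
    {x y : NzSignVec n} (hxy : SignLe x.1 y.1) :
    flipAt lam γ x = flipAt lam γ y ∨ |flipAt lam γ x| < |flipAt lam γ y| := by
  rw [abs_flipAt, abs_flipAt]
  refine (hmono x y hxy).imp (fun heq => ?_) id
  rcases eq_or_ne x y with rfl | hne
  · rfl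
  have hx : |lam x| ≠ (γ : ℕ) + 1 := fun h => hγ x y hxy hne ⟨h, heq ▸ h⟩
  rw [flipAt_of_abs_ne hx, flipAt_of_abs_ne (heq ▸ hx), heq]

theorem IsAlmostAltAt.neg_of_flipAt_eq {z : NzSignVec n} (hz : IsAlmostAltAt lam γ z)
    (h : flipAt lam γ z = altValue γ) : lam z = -altValue γ ∧ IsAlmostAltAt lam γ (-z) := by
  unfold flipAt at h
  split_ifs at h with hflip
  · rcases hflip with ⟨h', -⟩ | h'
    · exact absurd (by linarith) (altValue_ne_neg_self γ)
    · exact h'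
  · exact absurd (Or.inl ⟨h, hz⟩) hflip

end Flip

end Chen

theorem chen_lemma_general {n : ℕ}
    (lam : {x : Fin n → SignType // x ≠ 0} → ℤ)
    (hbd : ∀ x, 1 ≤ |lam x| ∧ |lam x| ≤ (n : ℤ))
    (hanti : ∀ x y : {x : Fin n → SignType // x ≠ 0},
      (y : Fin n → SignType) = (fun i => -(x : Fin n → SignType) i) → lam y = -lam x)
    (hmono : ∀ x y : {x : Fin n → SignType // x ≠ 0},
      SignLe (x : Fin n → SignType) (y : Fin n → SignType) →
        (lam x = lam y ∨ |lam x| < |lam y|))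
    (γ : Fin n)
    (hγ : ∀ x y : {x : Fin n → SignType // x ≠ 0},
      SignLe (x : Fin n → SignType) (y : Fin n → SignType) → x ≠ y →
        ¬(|lam x| = (γ : ℕ) + 1 ∧ |lam y| = (γ : ℕ) + 1)) :
    ∃ c d : Fin n → {x : Fin n → SignType // x ≠ 0},
      (∀ i j : Fin n, i ≤ j → SignLe (c i : Fin n → SignType) (c j : Fin n → SignType)) ∧
      (∀ i j : Fin n, i ≤ j → SignLe (d i : Fin n → SignType) (d j : Fin n → SignType)) ∧
      (∀ i : Fin n, lam (c i) = (-1) ^ ((i : ℕ) + 1) * ((i : ℕ) + 1)) ∧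
      (∀ i : Fin n, i ≠ γ → lam (d i) = (-1) ^ ((i : ℕ) + 1) * ((i : ℕ) + 1)) ∧
      (c γ : Fin n → SignType) = (fun i => -(d γ : Fin n → SignType) i) := by
  have hanti' : ∀ x, lam (-x) = -lam x := fun x => hanti x (-x) rfl
  obtain ⟨d, hd, hdval⟩ := Chen.exists_isSignChain_eq_altValue (lam := Chen.flipAt lam γ)
    (fun x => by rw [Chen.abs_flipAt]; exact hbd x) (Chen.flipAt_neg hanti')
    (fun _ _ => Chen.flipAt_mono hmono hγ)
  have hdlam : ∀ i ≠ γ, lam (d i) = Chen.altValue i := fun i hi => by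
    rw [← hdval i, Chen.flipAt_of_abs_ne]
    rw [← Chen.abs_flipAt, hdval, Chen.abs_altValue]
    exact fun h => hi (Fin.ext (by omega))
  obtain ⟨hdγ, c, hc, hcval, hcγ⟩ :=
    Chen.IsAlmostAltAt.neg_of_flipAt_eq ⟨d, hd, hdlam, rfl⟩ (hdval γ)
  refine ⟨c, d, hc, hd, fun i => ?_, hdlam, by rw [hcγ]; rfl⟩
  rcases eq_or_ne i γ with rfl | hi
  · rw [hcγ, hanti', hdγ, neg_neg]
    rfl
  · exact hcval i hi

/-- Chen's lemma. Let `λ` be an order-preserving `ℤ₂`-map from the nonzero sign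
vectors of `{+,-,0}ⁿ` (ordered by `⪯`) to `Q_{n-1}` (the elements `{±1,…,±n}`
ordered by absolute value, with the involution `z ↦ -z`), and let `γ ∈ [n]`
(encoded as `γ : Fin n`, standing for `γ+1`) be such that whenever `x ≺ y`, at
most one of `|λ(x)|`, `|λ(y)|` equals `γ`. Then there are chains
`x₁ ⪯ ⋯ ⪯ xₙ` and `y₁ ⪯ ⋯ ⪯ yₙ` with `λ(xᵢ) = (-1)ⁱ i` for all `i`,
`λ(yᵢ) = (-1)ⁱ i` for `i ≠ γ`, and `x_γ = -y_γ`. -/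
theorem chen_lemma {n : ℕ} (hn : 0 < n)
    (lam : {x : Fin n → SignType // x ≠ 0} → ℤ)
    (hbd : ∀ x, 1 ≤ |lam x| ∧ |lam x| ≤ (n : ℤ))
    (hanti : ∀ x y : {x : Fin n → SignType // x ≠ 0},
      (y : Fin n → SignType) = (fun i => -(x : Fin n → SignType) i) → lam y = -lam x)
    (hmono : ∀ x y : {x : Fin n → SignType // x ≠ 0},
      SignLe (x : Fin n → SignType) (y : Fin n → SignType) →
        (lam x = lam y ∨ |lam x| < |lam y|))
    (hcomp : ∀ x y : {x : Fin n → SignType // x ≠ 0},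
      SignLe (x : Fin n → SignType) (y : Fin n → SignType) → lam x + lam y ≠ 0)
    (γ : Fin n)
    (hγ : ∀ x y : {x : Fin n → SignType // x ≠ 0},
      SignLe (x : Fin n → SignType) (y : Fin n → SignType) → x ≠ y →
        ¬(|lam x| = (γ : ℕ) + 1 ∧ |lam y| = (γ : ℕ) + 1)) :
    ∃ c d : Fin n → {x : Fin n → SignType // x ≠ 0},
      (∀ i j : Fin n, i ≤ j → SignLe (c i : Fin n → SignType) (c j : Fin n → SignType)) ∧
      (∀ i j : Fin n, i ≤ j → SignLe (d i : Fin n → SignType) (d j : Fin n → SignType)) ∧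
      (∀ i : Fin n, lam (c i) = (-1) ^ ((i : ℕ) + 1) * ((i : ℕ) + 1)) ∧
      (∀ i : Fin n, i ≠ γ → lam (d i) = (-1) ^ ((i : ℕ) + 1) * ((i : ℕ) + 1)) ∧
      (c γ : Fin n → SignType) = (fun i => -(d γ : Fin n → SignType) i) :=
  chen_lemma_general lam hbd hanti hmono γ hγ
end

section
/- Colorful K_{ℓ,m} theorem via cross-index: let G be a graph with χ(G) = Xind(Hom(K₂,G)) + 2 = t. Given any proper coloring c : V(G) → [t] and any bipartition I ∪ J = [t], I ∩ J = ∅, there exists a complete bipartite subgraph K_{|I|,|J|} of G with color set exactly I on one side and exactly J on the other side. -/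
/-!
If no colorful `K_{I,J}` existed, recording the colors of both sides of each `(A, B)` in
`Hom(K₂,G)` would give an order-preserving `ℤ₂`-map into the poset of pairs `(P, Q)` of
disjoint nonempty color sets other than `(I, J)` and `(J, I)`. That poset maps to `Q_{t-3}`:
pick a color `δ` on a side with at least two colors, say `J`; send the pairs containing `δ`,
together with `(I, J ∖ δ)` and its swap, to `±(t-2)` according to the side of `δ`, and
recurse on the remaining pairs, which are those of the smaller instance `(I, J ∖ δ)`.
Hence `Xind(Hom(K₂,G)) ≤ t-3`, contradicting `Xind(Hom(K₂,G)) = t-2`.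
-/

/-- `φ : P → ℤ` represents an order-preserving `ℤ₂`-map from the `ℤ₂`-poset
`(P, neg)` to `Q_s`, the poset on `{±1,…,±(s+1)}` where `x < y` iff `|x| < |y|`,
with involution `z ↦ -z`. -/
def IsQMap {P : Type*} [PartialOrder P] (neg : P → P) (s : ℕ) (φ : P → ℤ) : Prop :=
  (∀ p, 1 ≤ |φ p| ∧ |φ p| ≤ (s : ℤ) + 1) ∧ (∀ p, φ (neg p) = -φ p) ∧
    ∀ p q : P, p ≤ q → (φ p = φ q ∨ |φ p| < |φ q|)

/-- The cross-index `Xind(P)` of a `ℤ₂`-poset: the least `s` such that there is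
an order-preserving `ℤ₂`-map `P → Q_s`. -/
noncomputable def Xind (P : Type*) [PartialOrder P] (neg : P → P) : ℕ :=
  sInf {s | ∃ φ : P → ℤ, IsQMap neg s φ}

/-- The Hom complex `Hom(K₂,G)` as a poset: pairs `(A,B)` of nonempty disjoint
vertex subsets such that every vertex of `A` is adjacent to every vertex of `B`,
ordered by componentwise inclusion. -/
def HomPoset {V : Type*} (G : SimpleGraph V) : Type _ :=
  {AB : Finset V × Finset V // AB.1.Nonempty ∧ AB.2.Nonempty ∧ Disjoint AB.1 AB.2 ∧
    ∀ a ∈ AB.1, ∀ b ∈ AB.2, G.Adj a b}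

instance {V : Type*} (G : SimpleGraph V) : PartialOrder (HomPoset G) :=
  Subtype.partialOrder _

/-- The free involution on `Hom(K₂,G)` swapping the two sides. -/
def homNeg {V : Type*} (G : SimpleGraph V) : HomPoset G → HomPoset G :=
  fun x => ⟨(x.1.2, x.1.1), x.2.2.1, x.2.1, x.2.2.2.1.symm,
    fun a ha b hb => (x.2.2.2.2 b hb a ha).symm⟩

open Finset

namespace SplitPoset

variable {α : Type*} [DecidableEq α]

def Admissible (I J : Finset α) (p : Finset α × Finset α) : Prop :=
  p.1.Nonempty ∧ p.2.Nonempty ∧ Disjoint p.1 p.2 ∧ p.1 ∪ p.2 ⊆ I ∪ J ∧ p ≠ (I, J) ∧ p ≠ (J, I)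

/-- An `IsQMap` on the admissible pairs into `Q_{#(I ∪ J) - 3}`, with the bound stated in `ℤ`
so that it is not truncated when `#(I ∪ J) = 2`. -/
def IsCrossMap (I J : Finset α) (φ : Finset α × Finset α → ℤ) : Prop :=
  (∀ p, Admissible I J p → 1 ≤ |φ p| ∧ |φ p| ≤ (#(I ∪ J) : ℤ) - 2) ∧
  (∀ p, Admissible I J p → φ p.swap = -φ p) ∧
  ∀ p q, Admissible I J p → Admissible I J q → p ≤ q → φ p = φ q ∨ |φ p| < |φ q|

variable {I J : Finset α} {p q : Finset α × Finset α} {φ : Finset α × Finset α → ℤ}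

theorem eq_of_le_of_union_subset (hq : Disjoint q.1 q.2) (hsub : q.1 ∪ q.2 ⊆ p.1 ∪ p.2)
    (hpq : p ≤ q) : q = p := by
  have side : ∀ {A B C D : Finset α}, Disjoint A B → A ∪ B ⊆ C ∪ D → D ⊆ B → A ⊆ C :=
    fun hAB hsub hDB a ha => (mem_union.mp (hsub (mem_union_left _ ha))).resolve_right
      fun hd => disjoint_left.mp hAB ha (hDB hd)
  refine Prod.ext (le_antisymm (side hq hsub hpq.2) hpq.1) (le_antisymm ?_ hpq.2)
  exact side hq.symm (by rw [union_comm, union_comm p.2]; exact hsub) hpq.1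

theorem Admissible.swap (h : Admissible I J p) : Admissible I J p.swap := by
  obtain ⟨h1, h2, hd, hsub, hIJ, hJI⟩ := h
  refine ⟨h2, h1, hd.symm, by rwa [Prod.fst_swap, Prod.snd_swap, union_comm], ?_, ?_⟩ <;>
    rw [Ne, Prod.swap_eq_iff_eq_swap] <;> assumption

theorem admissible_comm : Admissible J I p ↔ Admissible I J p := by
  simp only [Admissible, union_comm J I]
  tauto

theorem IsCrossMap.symm (h : IsCrossMap I J φ) : IsCrossMap J I φ := by
  simpa only [IsCrossMap, admissible_comm, union_comm J I] using h

theorem not_admissible_singleton (i j : α) : ¬ Admissible {i} {j} p := by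
  rintro ⟨⟨a, ha⟩, ⟨b, hb⟩, hd, hsub, hij, hji⟩
  have ha' := hsub (mem_union_left _ ha)
  have hb' := hsub (mem_union_right _ hb)
  simp only [mem_union, mem_singleton] at ha' hb'
  rcases ha' with rfl | rfl <;> rcases hb' with rfl | rfl
  · exact disjoint_left.mp hd ha hb
  · exact hij (eq_of_le_of_union_subset hd hsub ⟨singleton_subset_iff.mpr ha,
      singleton_subset_iff.mpr hb⟩)
  · exact hji (eq_of_le_of_union_subset hd (hsub.trans (union_comm _ _).subset)
      ⟨singleton_subset_iff.mpr ha, singleton_subset_iff.mpr hb⟩)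
  · exact disjoint_left.mp hd ha hb

theorem isCrossMap_singleton (i j : α) (φ : Finset α × Finset α → ℤ) :
    IsCrossMap {i} {j} φ :=
  ⟨fun _ h => (not_admissible_singleton i j h).elim,
    fun _ h => (not_admissible_singleton i j h).elim,
    fun _ _ h => (not_admissible_singleton i j h).elim⟩

abbrev InTopLayer (δ : α) (S p : Finset α × Finset α) : Prop := δ ∈ p.1 ∨ p = S

def addTopLayer (δ : α) (S : Finset α × Finset α) (M : ℤ) (φ : Finset α × Finset α → ℤ)
    (p : Finset α × Finset α) : ℤ :=
  if InTopLayer δ S p then M else if InTopLayer δ S p.swap then -M else φ p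

variable {δ : α} {M : ℤ}

theorem Admissible.union_subset_of_notMem (hq : Admissible I (insert δ J) q) (h1 : δ ∉ q.1)
    (h2 : δ ∉ q.2) : q.1 ∪ q.2 ⊆ I ∪ J := by
  intro x hx
  have hx' := hq.2.2.2.1 hx
  rw [mem_union, mem_insert] at hx'
  rcases hx' with h | rfl | h
  · exact mem_union_left _ h
  · exact ((mem_union.mp hx).elim h1 h2).elim
  · exact mem_union_right _ h

theorem inTopLayer_of_le (hq : Admissible I (insert δ J) q) (hpq : p ≤ q)
    (hp : InTopLayer δ (I, J) p) : InTopLayer δ (I, J) q := by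
  rcases hp with hp | rfl
  · exact Or.inl (hpq.1 hp)
  by_cases h1 : δ ∈ q.1
  · exact Or.inl h1
  obtain ⟨-, -, hd, hsub, hne, -⟩ := id hq
  by_cases h2 : δ ∈ q.2
  · exact (hne (eq_of_le_of_union_subset hd hsub ⟨hpq.1, insert_subset h2 hpq.2⟩)).elim
  · exact Or.inr (eq_of_le_of_union_subset hd (hq.union_subset_of_notMem h1 h2) hpq)

theorem admissible_of_not_inTopLayer (hq : Admissible I (insert δ J) q)
    (h1 : ¬InTopLayer δ (I, J) q) (h2 : ¬InTopLayer δ (I, J) q.swap) : Admissible I J q := by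
  simp only [InTopLayer, not_or, Prod.fst_swap, Prod.swap_eq_iff_eq_swap, Prod.swap_prod_mk]
    at h1 h2
  exact ⟨hq.1, hq.2.1, hq.2.2.1, hq.union_subset_of_notMem h1.1 h2.1, h1.2, h2.2⟩

theorem not_inTopLayer_and_swap (hI : I.Nonempty) (hδJ : δ ∉ J)
    (hq : Admissible I (insert δ J) q) :
    ¬(InTopLayer δ (I, J) q ∧ InTopLayer δ (I, J) q.swap) := by
  rintro ⟨h | rfl, h' | h'⟩
  · exact disjoint_left.mp hq.2.2.1 h h'
  · rw [Prod.swap_eq_iff_eq_swap] at h'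
    subst h'
    exact hδJ h
  · exact hδJ h'
  · have hJI : J = I := congrArg Prod.fst h'
    obtain ⟨a, ha⟩ := hI
    exact disjoint_left.mp hq.2.2.1 ha (show a ∈ J from hJI ▸ ha)

theorem addTopLayer_swap (hI : I.Nonempty) (hδJ : δ ∉ J)
    (hφ : ∀ p, Admissible I J p → φ p.swap = -φ p) (hp : Admissible I (insert δ J) p) :
    addTopLayer δ (I, J) M φ p.swap = -addTopLayer δ (I, J) M φ p := by
  have hx := not_inTopLayer_and_swap hI hδJ hp
  by_cases h1 : InTopLayer δ (I, J) p <;> by_cases h2 : InTopLayer δ (I, J) p.swap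
  · exact (hx ⟨h1, h2⟩).elim
  · simp only [addTopLayer, h1, h2, Prod.swap_swap, if_true, if_false]
  · simp only [addTopLayer, h1, h2, Prod.swap_swap, if_true, if_false, neg_neg]
  · simp only [addTopLayer, h1, h2, Prod.swap_swap, if_false]
    exact hφ p (admissible_of_not_inTopLayer hp h1 h2)

theorem addTopLayer_eq_or_abs_lt (hI : I.Nonempty) (hδJ : δ ∉ J) (hM : 0 < M)
    (hlow : ∀ p, Admissible I J p → |φ p| < M)
    (hφ : ∀ p q, Admissible I J p → Admissible I J q → p ≤ q → φ p = φ q ∨ |φ p| < |φ q|)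
    (hp : Admissible I (insert δ J) p) (hq : Admissible I (insert δ J) q) (hpq : p ≤ q) :
    addTopLayer δ (I, J) M φ p = addTopLayer δ (I, J) M φ q ∨
      |addTopLayer δ (I, J) M φ p| < |addTopLayer δ (I, J) M φ q| := by
  have habsM : |M| = M := abs_of_pos hM
  by_cases h1 : InTopLayer δ (I, J) p
  · simp [addTopLayer, h1, inTopLayer_of_le hq hpq h1]
  by_cases h2 : InTopLayer δ (I, J) p.swap
  · have g2 := inTopLayer_of_le hq.swap ⟨hpq.2, hpq.1⟩ h2
    have g1 : ¬InTopLayer δ (I, J) q := fun g1 => not_inTopLayer_and_swap hI hδJ hq ⟨g1, g2⟩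
    simp only [addTopLayer, h1, h2, g1, g2, if_true, if_false, true_or]
  have hp' := admissible_of_not_inTopLayer hp h1 h2
  by_cases g1 : InTopLayer δ (I, J) q
  · right
    simp only [addTopLayer, h1, h2, g1, if_true, if_false, habsM]
    exact hlow p hp'
  by_cases g2 : InTopLayer δ (I, J) q.swap
  · right
    simp only [addTopLayer, h1, h2, g1, g2, if_true, if_false, abs_neg, habsM]
    exact hlow p hp'
  simp only [addTopLayer, h1, h2, g1, g2, if_false]
  exact hφ p q hp' (admissible_of_not_inTopLayer hq g1 g2) hpq

theorem IsCrossMap.insert_right (hφ : IsCrossMap I J φ) (hIJ : Disjoint I J) (hI : I.Nonempty)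
    (hJ : J.Nonempty) (hδI : δ ∉ I) (hδJ : δ ∉ J) :
    IsCrossMap I (insert δ J) (addTopLayer δ (I, J) (#(I ∪ J) - 1) φ) := by
  have hcard : (#(I ∪ insert δ J) : ℤ) - 2 = #(I ∪ J) - 1 := by
    rw [union_insert, card_insert_of_notMem (by simp [hδI, hδJ])]
    push_cast
    ring
  have hM : (0 : ℤ) < #(I ∪ J) - 1 := by
    have := card_union_of_disjoint hIJ
    have := hI.card_pos
    have := hJ.card_pos
    omega
  have hlow : ∀ p, Admissible I J p → |φ p| < #(I ∪ J) - 1 := fun p hp => by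
    have := (hφ.1 p hp).2
    omega
  refine ⟨fun p hp => ?_, fun p hp => addTopLayer_swap hI hδJ hφ.2.1 hp,
    fun p q hp hq => addTopLayer_eq_or_abs_lt hI hδJ hM hlow hφ.2.2 hp hq⟩
  rw [hcard]
  unfold addTopLayer
  split_ifs with h1 h2
  · rw [abs_of_pos hM]; omega
  · rw [abs_neg, abs_of_pos hM]; omega
  · have := hφ.1 p (admissible_of_not_inTopLayer hp h1 h2)
    omega

theorem exists_isCrossMap (hIJ : Disjoint I J) (hI : I.Nonempty) (hJ : J.Nonempty) :
    ∃ φ, IsCrossMap I J φ := by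
  induction hI using Finset.Nonempty.cons_induction generalizing J with
  | singleton i =>
    induction hJ using Finset.Nonempty.cons_induction with
    | singleton j => exact ⟨0, isCrossMap_singleton i j 0⟩
    | cons j J hj hJ ih =>
      rw [cons_eq_insert, disjoint_insert_right] at *
      obtain ⟨φ, hφ⟩ := ih hIJ.2
      exact ⟨_, hφ.insert_right hIJ.2 (singleton_nonempty i) hJ hIJ.1 hj⟩
  | cons a I ha hI ih =>
    rw [cons_eq_insert, disjoint_insert_left] at *
    obtain ⟨φ, hφ⟩ := ih hIJ.2 hJ
    exact ⟨_, (hφ.symm.insert_right hIJ.2.symm hJ hI hIJ.1 ha).symm⟩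

theorem IsCrossMap.isQMap_comp (hφ : IsCrossMap I J φ) {P : Type*} [PartialOrder P]
    {neg : P → P} {f : P → Finset α × Finset α} (hf : Monotone f)
    (hneg : ∀ x, f (neg x) = (f x).swap) (hadm : ∀ x, Admissible I J (f x)) :
    IsQMap neg (#(I ∪ J) - 3) (φ ∘ f) := by
  refine ⟨fun x => ?_, fun x => ?_, fun x y hxy => hφ.2.2 _ _ (hadm x) (hadm y) (hf hxy)⟩
  · have := hφ.1 _ (hadm x)
    simp only [Function.comp_apply]
    omega
  · simp only [Function.comp_apply, hneg, hφ.2.1 _ (hadm x)]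

end SplitPoset

theorem IsQMap.xind_le {P : Type*} [PartialOrder P] {neg : P → P} {s : ℕ} {φ : P → ℤ}
    (h : IsQMap neg s φ) : Xind P neg ≤ s :=
  Nat.sInf_le ⟨φ, h⟩

theorem Finset.exists_subset_card_eq_of_image_eq {V β : Type*} [DecidableEq β] {c : V → β}
    {A : Finset V} {S : Finset β} (h : A.image c = S) :
    ∃ A' ⊆ A, #A' = #S ∧ A'.image c = S := by
  obtain ⟨A', hA', hinj, himg⟩ := exists_subset_injOn_image_eq_of_surjOn (A : Set V) S
    (by rw [← h, coe_image]; exact Set.surjOn_image c A)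
  exact ⟨A', mod_cast hA', by rw [← himg, card_image_of_injOn hinj], himg⟩

namespace SimpleGraph

variable {V β : Type*} {G : SimpleGraph V}

theorem surjective_of_chromaticNumber_eq {t : ℕ} (hchi : G.chromaticNumber = t) {c : V → Fin t}
    (hc : ∀ u v, G.Adj u v → c u ≠ c v) : Function.Surjective c :=
  le_chromaticNumber_iff_forall_surjective.mp hchi.ge (Coloring.mk c fun h => hc _ _ h)

theorem nonempty_homPoset_of_one_lt_chromaticNumber (h : 1 < G.chromaticNumber) :
    Nonempty (HomPoset G) := by
  obtain ⟨u, v, huv⟩ : ∃ u v, G.Adj u v := by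
    rw [← ne_bot_iff_exists_adj]
    rintro rfl
    exact h.not_ge (chromaticNumber_le_iff_colorable.mpr (colorable_one_iff.mpr rfl))
  exact ⟨⟨({u}, {v}), singleton_nonempty u, singleton_nonempty v,
    disjoint_singleton.mpr huv.ne, by simpa using huv⟩⟩

def IsColorfulBiclique [DecidableEq β] (G : SimpleGraph V) (c : V → β) (I J : Finset β)
    (A B : Finset V) : Prop :=
  (∀ a ∈ A, ∀ b ∈ B, G.Adj a b) ∧ #A = #I ∧ #B = #J ∧ A.image c = I ∧ B.image c = J

variable [DecidableEq β] {c : V → β} {I J : Finset β}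

theorem exists_isColorfulBiclique_of_image_eq {A B : Finset V}
    (hAB : ∀ a ∈ A, ∀ b ∈ B, G.Adj a b) (hA : A.image c = I) (hB : B.image c = J) :
    ∃ A' B', G.IsColorfulBiclique c I J A' B' := by
  obtain ⟨A', hA', hA'card, hA'img⟩ := exists_subset_card_eq_of_image_eq hA
  obtain ⟨B', hB', hB'card, hB'img⟩ := exists_subset_card_eq_of_image_eq hB
  exact ⟨A', B', fun a ha b hb => hAB a (hA' ha) b (hB' hb), hA'card, hB'card, hA'img, hB'img⟩

theorem admissible_image_of_not_exists_isColorfulBiclique [Fintype β]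
    (hc : ∀ u v, G.Adj u v → c u ≠ c v) (hIJ : I ∪ J = univ)
    (hno : ¬∃ A B, G.IsColorfulBiclique c I J A B) (x : HomPoset G) :
    SplitPoset.Admissible I J (x.1.1.image c, x.1.2.image c) := by
  obtain ⟨⟨A, B⟩, hA, hB, -, hAB⟩ := x
  show SplitPoset.Admissible I J (A.image c, B.image c)
  refine ⟨hA.image c, hB.image c, Finset.disjoint_left.mpr fun k hkA hkB => ?_, by simp [hIJ],
    fun h => hno ?_, fun h => hno ?_⟩
  · obtain ⟨a, ha, rfl⟩ := mem_image.mp hkA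
    obtain ⟨b, hb, hba⟩ := mem_image.mp hkB
    exact hc a b (hAB a ha b hb) hba.symm
  · obtain ⟨hAI, hBJ⟩ := Prod.mk.inj h
    exact exists_isColorfulBiclique_of_image_eq hAB hAI hBJ
  · obtain ⟨hAJ, hBI⟩ := Prod.mk.inj h
    exact exists_isColorfulBiclique_of_image_eq (fun b hb a ha => (hAB a ha b hb).symm) hBI hAJ

end SimpleGraph

open SimpleGraph SplitPoset in
theorem colorful_Klm_crossindex_general {V : Type*} [Fintype V]
    (G : SimpleGraph V) (t : ℕ)
    (hchi : G.chromaticNumber = (t : ℕ∞))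
    (hX : Xind (HomPoset G) (homNeg G) + 2 = t)
    (c : V → Fin t) (hc : ∀ u v, G.Adj u v → c u ≠ c v)
    (I J : Finset (Fin t)) (hIJ : Disjoint I J) (hIJunion : I ∪ J = Finset.univ) :
    ∃ A B : Finset V,
      (∀ a ∈ A, ∀ b ∈ B, G.Adj a b) ∧
      A.card = I.card ∧ B.card = J.card ∧
      A.image c = I ∧ B.image c = J := by
  obtain ⟨R, -, hR⟩ := exists_subset_card_eq_of_image_eq
    (image_univ_of_surjective (surjective_of_chromaticNumber_eq hchi hc))
  rcases I.eq_empty_or_nonempty with rfl | hI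
  · rw [empty_union] at hIJunion
    exact ⟨∅, R, by simp, by simp, hIJunion ▸ hR.1, by simp, hIJunion ▸ hR.2⟩
  rcases J.eq_empty_or_nonempty with rfl | hJ
  · rw [union_empty] at hIJunion
    exact ⟨R, ∅, by simp, hIJunion ▸ hR.1, by simp, hIJunion ▸ hR.2, by simp⟩
  by_contra hno
  have hadm := admissible_image_of_not_exists_isColorfulBiclique hc hIJunion hno
  obtain ⟨φ, hφ⟩ := exists_isCrossMap hIJ hI hJ
  have hq := hφ.isQMap_comp (neg := homNeg G)
    (fun x y h => ⟨image_subset_image h.1, image_subset_image h.2⟩) (fun _ => rfl) hadm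
  have ht : #(I ∪ J) = t := by rw [hIJunion, card_univ, Fintype.card_fin]
  have h2t : #I + #J = t := by rw [← card_union_of_disjoint hIJ, ht]
  obtain ⟨x⟩ := nonempty_homPoset_of_one_lt_chromaticNumber (G := G)
    (by rw [hchi]; exact_mod_cast (by omega : 1 < t))
  -- the level of any element of `Hom(K₂,G)` lies in `[1, t - 2]`, so `t ≥ 3`
  have := hφ.1 _ (hadm x)
  have := hq.xind_le
  omega

/-- Colorful `K_{ℓ,m}` theorem via cross-index: if `χ(G) = Xind(Hom(K₂,G)) + 2 = t`,
then for every proper coloring `c : V → [t]` and every bipartition `I ∪ J = [t]`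
of the colors there is a complete bipartite subgraph with color set exactly `I`
on one side (each color once) and exactly `J` on the other side. -/
theorem colorful_Klm_crossindex {V : Type*} [Fintype V] [DecidableEq V]
    (G : SimpleGraph V) (t : ℕ)
    (hchi : G.chromaticNumber = (t : ℕ∞))
    (hX : Xind (HomPoset G) (homNeg G) + 2 = t)
    (c : V → Fin t) (hc : ∀ u v, G.Adj u v → c u ≠ c v)
    (I J : Finset (Fin t)) (hIJ : Disjoint I J) (hIJunion : I ∪ J = Finset.univ) :
    ∃ A B : Finset V,
      (∀ a ∈ A, ∀ b ∈ B, G.Adj a b) ∧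
      A.card = I.card ∧ B.card = J.card ∧
      A.image c = I ∧ B.image c = J :=
  colorful_Klm_crossindex_general G t hchi hX c hc I J hIJ hIJunion
end

section
/- Let G = (V,E) be a non-bipartite graph and let H be the join of two disjoint copies of G (all edges between the copies added). Then cd₂(H) = 2(|V| - α(G)), the minimum number of vertices of H to delete to leave an induced bipartite graph equals twice the vertex cover number of G. -/
open Finset

/-- `cd₂(G)` for a graph: the minimum number of vertices whose deletion leaves
an induced bipartite subgraph. -/
noncomputable def cd2Graph {V : Type*} [Fintype V] [DecidableEq V] (G : SimpleGraph V) : ℕ :=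
  sInf {k | ∃ U : Finset V, U.card = k ∧ ∃ c : V → Bool,
    ∀ u v : V, G.Adj u v → u ∉ U → v ∉ U → c u ≠ c v}

/-- The independence number `α(G)`: the maximum size of an independent set. -/
noncomputable def indepNum {V : Type*} [Fintype V] [DecidableEq V] (G : SimpleGraph V) : ℕ :=
  sSup {k | ∃ S : Finset V, S.card = k ∧ ∀ u ∈ S, ∀ v ∈ S, ¬ G.Adj u v}

/-- The join of two disjoint copies of `G`: the disjoint union of two copies of
`G` with all edges between the two copies added. -/
def doubleJoin {V : Type*} (G : SimpleGraph V) : SimpleGraph (V ⊕ V) where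
  Adj a b :=
    match a, b with
    | Sum.inl u, Sum.inl v => G.Adj u v
    | Sum.inr u, Sum.inr v => G.Adj u v
    | Sum.inl _, Sum.inr _ => True
    | Sum.inr _, Sum.inl _ => True
  symm := ⟨by
    intro a b h
    cases a <;> cases b <;> first | exact G.adj_symm h | trivial⟩
  loopless := ⟨by
    intro a h
    cases a <;> exact G.irrefl h⟩

/-!
Let `S` be a maximum independent set of `G`. Deleting the complement of `S` in both copies
leaves `S ⊔ S`, which is bipartite (one copy per colour class) and has `2α(G)` vertices.
Conversely, let `A ⊔ B` be a properly 2-coloured set of surviving vertices. If both `A` and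
`B` are nonempty, every vertex of `A` is adjacent to a vertex of `B`, so `A` is monochromatic
and hence independent, and likewise for `B`; so `|A| + |B| ≤ 2α(G)`. If say `A` is empty,
then `B` is a properly 2-coloured set in `G`, the union of two independent sets, so again
`|B| ≤ 2α(G)`.
-/

section cd2Graph

variable {W : Type*} [Fintype W] [DecidableEq W] {H : SimpleGraph W}

theorem cd2Graph_le_card_compl (T : Finset W) (c : W → Bool)
    (hc : ∀ u ∈ T, ∀ v ∈ T, H.Adj u v → c u ≠ c v) : cd2Graph H ≤ #Tᶜ :=
  Nat.sInf_le ⟨Tᶜ, rfl, c, fun u v huv hu hv =>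
    hc u (notMem_compl.1 hu) v (notMem_compl.1 hv) huv⟩

theorem card_sub_le_cd2Graph {m : ℕ}
    (h : ∀ (T : Finset W) (c : W → Bool),
      (∀ u ∈ T, ∀ v ∈ T, H.Adj u v → c u ≠ c v) → #T ≤ m) :
    Fintype.card W - m ≤ cd2Graph H := by
  refine le_csInf ⟨_, univ, rfl, fun _ => true, by simp⟩ ?_
  rintro _ ⟨U, rfl, c, hc⟩
  have := h Uᶜ c fun u hu v hv huv => hc u v huv (mem_compl.1 hu) (mem_compl.1 hv)
  rw [card_compl] at this
  have := U.card_le_univ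
  omega

end cd2Graph

section indepNum

variable {V : Type*}

theorem indepNum_eq_indepNum [Fintype V] [DecidableEq V] (G : SimpleGraph V) :
    indepNum G = G.indepNum := by
  unfold indepNum SimpleGraph.indepNum
  congr 1
  ext k
  refine exists_congr fun S =>
    ⟨fun ⟨hcard, hS⟩ => ⟨fun u hu v hv _ => hS u hu v hv, hcard⟩,
      fun ⟨hS, hcard⟩ => ⟨hcard, fun u hu v hv huv => ?_⟩⟩
  obtain rfl | hne := eq_or_ne u v
  · exact G.irrefl huv
  · exact hS hu hv hne huv

variable {G : SimpleGraph V}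

theorem isIndepSet_of_forall_eq {s : Finset V} {c : V → Bool} {b : Bool}
    (hc : ∀ u ∈ s, ∀ v ∈ s, G.Adj u v → c u ≠ c v) (hb : ∀ u ∈ s, c u = b) :
    G.IsIndepSet s := fun u hu v hv _ huv =>
  hc u hu v hv huv ((hb u hu).trans (hb v hv).symm)

variable [Finite V]

theorem card_le_two_mul_indepNum {s : Finset V} {c : V → Bool}
    (hc : ∀ u ∈ s, ∀ v ∈ s, G.Adj u v → c u ≠ c v) : #s ≤ 2 * G.indepNum := by
  have hcolour (b : Bool) : #(s.filter (c · = b)) ≤ G.indepNum :=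
    (isIndepSet_of_forall_eq (b := b)
      (fun u hu v hv => hc u (mem_filter.1 hu).1 v (mem_filter.1 hv).1)
      (fun u hu => (mem_filter.1 hu).2)).card_le_indepNum
  have := card_filter_add_card_filter_not (s := s) (c · = true)
  simp only [Bool.not_eq_true] at this
  linarith [hcolour true, hcolour false]

theorem card_add_card_le_two_mul_indepNum {s t : Finset V} {c d : V → Bool}
    (hc : ∀ u ∈ s, ∀ v ∈ s, G.Adj u v → c u ≠ c v)
    (hd : ∀ u ∈ t, ∀ v ∈ t, G.Adj u v → d u ≠ d v)
    (hcd : ∀ u ∈ s, ∀ v ∈ t, c u ≠ d v) : #s + #t ≤ 2 * G.indepNum := by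
  rcases s.eq_empty_or_nonempty with rfl | ⟨a, ha⟩
  · simpa using card_le_two_mul_indepNum hd
  rcases t.eq_empty_or_nonempty with rfl | ⟨b, hb⟩
  · simpa using card_le_two_mul_indepNum hc
  have hs : G.IsIndepSet s := isIndepSet_of_forall_eq hc fun u hu => Bool.eq_not.2 (hcd u hu b hb)
  have ht : G.IsIndepSet t :=
    isIndepSet_of_forall_eq hd fun v hv => Bool.eq_not.2 (hcd a ha v hv).symm
  linarith [hs.card_le_indepNum, ht.card_le_indepNum]

end indepNum

section doubleJoin

variable {V : Type*} {G : SimpleGraph V}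

theorem card_le_two_mul_indepNum_of_doubleJoin [Finite V] {T : Finset (V ⊕ V)}
    {c : V ⊕ V → Bool} (hc : ∀ u ∈ T, ∀ v ∈ T, (doubleJoin G).Adj u v → c u ≠ c v) :
    #T ≤ 2 * G.indepNum := by
  rw [← card_toLeft_add_card_toRight]
  exact card_add_card_le_two_mul_indepNum (c := c ∘ Sum.inl) (d := c ∘ Sum.inr)
    (fun u hu v hv => hc _ (mem_toLeft.1 hu) _ (mem_toLeft.1 hv))
    (fun u hu v hv => hc _ (mem_toRight.1 hu) _ (mem_toRight.1 hv))
    (fun u hu v hv => hc _ (mem_toLeft.1 hu) _ (mem_toRight.1 hv) trivial)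

theorem sumElim_ne_of_doubleJoin_adj {S : Finset V} (hS : G.IsIndepSet S) :
    ∀ u ∈ S.disjSum S, ∀ v ∈ S.disjSum S, (doubleJoin G).Adj u v →
      Sum.elim (fun _ => false) (fun _ => true) u ≠
        Sum.elim (fun _ => false) (fun _ => true) v := by
  rintro (u | u) hu (v | v) hv huv <;> simp only [inl_mem_disjSum, inr_mem_disjSum] at hu hv
  · exact (hS hu hv (G.ne_of_adj huv) huv).elim
  · simp
  · simp
  · exact (hS hu hv (G.ne_of_adj huv) huv).elim

end doubleJoin

theorem cd2_doubleJoin_general {V : Type*} [Fintype V] [DecidableEq V]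
    (G : SimpleGraph V) :
    cd2Graph (doubleJoin G) = 2 * (Fintype.card V - indepNum G) := by
  rw [indepNum_eq_indepNum]
  refine le_antisymm ?_ ?_
  · obtain ⟨S, hS, hcard⟩ := G.exists_isNIndepSet_indepNum
    calc cd2Graph (doubleJoin G) ≤ #(S.disjSum S)ᶜ :=
          cd2Graph_le_card_compl _ _ (sumElim_ne_of_doubleJoin_adj hS)
      _ = 2 * (Fintype.card V - G.indepNum) := by
          rw [card_compl, card_disjSum, Fintype.card_sum, hcard]
          omega
  · have := card_sub_le_cd2Graph fun _ _ => card_le_two_mul_indepNum_of_doubleJoin (G := G)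
    rwa [Fintype.card_sum, ← two_mul, ← Nat.mul_sub] at this

/-- If `G` is non-bipartite and `H` is the join of two disjoint copies of `G`,
then `cd₂(H) = 2(|V| - α(G))`: the minimum number of vertices of `H` whose
deletion leaves an induced bipartite graph equals twice the vertex cover number
of `G`. -/
theorem cd2_doubleJoin {V : Type*} [Fintype V] [DecidableEq V]
    (G : SimpleGraph V)
    (hnb : ∀ c : V → Bool, ∃ u v : V, G.Adj u v ∧ c u = c v) :
    cd2Graph (doubleJoin G) = 2 * (Fintype.card V - indepNum G) :=
  cd2_doubleJoin_general G
end

section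
/- Let G be a graph with χ(KG(G)) = cd₂(G). Consider an optimal proper coloring of KG(G), i.e., a partition of E(G) into triangles and stars using χ(KG(G)) classes, chosen with a minimum number of triangle classes. Then every circuit (cycle) of G is either one of the triangle classes or contains at least one edge belonging to a star class. -/
open Finset

/-- The Kneser graph of a graph `G` viewed as a 2-uniform hypergraph: vertices
are the edges of `G`, two being adjacent iff they share no endpoint. -/
def KGgraph {V : Type*} [Fintype V] [DecidableEq V] (G : SimpleGraph V)
    [DecidableRel G.Adj] : SimpleGraph {e : Sym2 V // e ∈ G.edgeFinset} where
  Adj a b := ∀ v : V, ¬(v ∈ (a : Sym2 V) ∧ v ∈ (b : Sym2 V))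
  symm := by
    constructor
    intro a b h v hv
    exact h v ⟨hv.2, hv.1⟩
  loopless := by
    constructor
    intro a h
    exact h ((a : Sym2 V)).out.1 ⟨Sym2.out_fst_mem _, Sym2.out_fst_mem _⟩

/-- A proper coloring of `KG(G)` given by `c` on `Sym2 V`: disjoint edges of `G`
receive distinct colors. -/
def ProperKGColoring {V : Type*} [Fintype V] [DecidableEq V] (G : SimpleGraph V)
    [DecidableRel G.Adj] {N : ℕ} (c : Sym2 V → Fin N) : Prop :=
  ∀ e ∈ G.edgeFinset, ∀ f ∈ G.edgeFinset,
    (∀ v : V, ¬(v ∈ e ∧ v ∈ f)) → e ≠ f → c e ≠ c f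

/-- The color class of the color `i`. -/
def colorClass {V : Type*} [Fintype V] [DecidableEq V] (G : SimpleGraph V)
    [DecidableRel G.Adj] {N : ℕ} (c : Sym2 V → Fin N) (i : Fin N) : Finset (Sym2 V) :=
  G.edgeFinset.filter fun e => c e = i

/-- A set of edges forming a triangle. -/
def IsTriangleClass {V : Type*} [DecidableEq V] (S : Finset (Sym2 V)) : Prop :=
  ∃ u v w : V, u ≠ v ∧ u ≠ w ∧ v ≠ w ∧ S = {s(u, v), s(u, w), s(v, w)}

/-- A set of edges forming a star (all edges through a common vertex). -/
def IsStarClass {V : Type*} (S : Finset (Sym2 V)) : Prop :=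
  ∃ v : V, ∀ e ∈ S, v ∈ e

/-- The number of triangle color classes of a coloring. -/
noncomputable def numTriangleClasses {V : Type*} [Fintype V] [DecidableEq V]
    (G : SimpleGraph V) [DecidableRel G.Adj] {N : ℕ} (c : Sym2 V → Fin N) : ℕ :=
  Set.ncard {i : Fin N | IsTriangleClass (colorClass G c i)}

/-!
Suppose no edge of the cycle `C = v₀ v₁ … v_{k-1}` lies in a star class, so every edge of `C`
lies in a triangle class. Two edges of one class meet, so two cycle edges of the same color are
consecutive; hence, unless `C` is itself a triangle class, the edges of `C` split into runs of
one or two consecutive edges, each color forming a single run. Recolor: every class met by `C`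
becomes the star at the first vertex of its run, the edges of the class missing that vertex
being passed to the next run (in a triangle they all pass through the next run's first vertex).
This is again a proper coloring with the same palette and strictly fewer triangle classes,
contradicting minimality.
-/

section TrianglesAndStars

theorem eq_or_eq_or_eq_of_meets {V : Type*} {g : Sym2 V} (hg : ¬g.IsDiag) {a b d : V}
    (hab : a ≠ b) (had : a ≠ d) (hbd : b ≠ d)
    (h₁ : ∃ x, x ∈ g ∧ x ∈ s(a, b)) (h₂ : ∃ x, x ∈ g ∧ x ∈ s(a, d))
    (h₃ : ∃ x, x ∈ g ∧ x ∈ s(b, d)) : g = s(a, b) ∨ g = s(a, d) ∨ g = s(b, d) := by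
  induction g using Sym2.ind with
  | _ x y =>
  simp only [Sym2.mk_isDiag_iff, Sym2.mem_iff, Sym2.eq_iff] at *
  grind

variable {V : Type*} [DecidableEq V]

theorem isStarClass_or_isTriangleClass [Nonempty V] {S : Finset (Sym2 V)}
    (hS : ∀ e ∈ S, ¬e.IsDiag) (hmeet : ∀ e ∈ S, ∀ f ∈ S, ∃ x, x ∈ e ∧ x ∈ f) :
    IsStarClass S ∨ IsTriangleClass S := by
  refine or_iff_not_imp_left.mpr fun hstar => ?_
  simp only [IsStarClass, not_exists, not_forall, exists_prop] at hstar
  obtain ⟨e, he, -⟩ := hstar (Classical.arbitrary V)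
  induction e using Sym2.ind with | _ a b =>
  obtain ⟨f, hf, haf⟩ := hstar a
  obtain ⟨g, hg, hbg⟩ := hstar b
  obtain ⟨d, rfl⟩ : ∃ d, f = s(b, d) := by
    obtain ⟨x, hxf, hx⟩ := hmeet f hf _ he
    rw [Sym2.mem_iff] at hx
    obtain rfl | rfl := hx
    · exact absurd hxf haf
    · exact Sym2.mem_iff_exists.mp hxf
  obtain ⟨d', rfl⟩ : ∃ d', g = s(a, d') := by
    obtain ⟨x, hxg, hx⟩ := hmeet g hg _ he
    rw [Sym2.mem_iff] at hx
    obtain rfl | rfl := hx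
    · exact Sym2.mem_iff_exists.mp hxg
    · exact absurd hxg hbg
  have hab : a ≠ b := by simpa using hS _ he
  have hbd : b ≠ d := by simpa using hS _ hf
  have had : a ≠ d := fun h => haf (h ▸ Sym2.mem_mk_right b a)
  obtain rfl : d = d' := by
    obtain ⟨x, hxg, hxf⟩ := hmeet _ hg _ hf
    simp only [Sym2.mem_iff] at hxg hxf haf hbg
    grind
  refine ⟨a, b, d, hab, had, hbd, subset_antisymm (fun e he' => ?_) ?_⟩
  · have := eq_or_eq_or_eq_of_meets (hS e he') hab had hbd (hmeet e he' _ he) (hmeet e he' _ hg)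
      (hmeet e he' _ hf)
    simpa using this
  · simp [Finset.insert_subset_iff, *]

theorem IsStarClass.not_isTriangleClass {S : Finset (Sym2 V)} (hS : IsStarClass S) :
    ¬IsTriangleClass S := by
  obtain ⟨x, hx⟩ := hS
  rintro ⟨a, b, d, hab, had, hbd, rfl⟩
  have h1 := hx s(a, b) (by simp)
  have h2 := hx s(a, d) (by simp)
  have h3 := hx s(b, d) (by simp)
  simp only [Sym2.mem_iff] at h1 h2 h3
  grind

theorem IsTriangleClass.card_eq_three {S : Finset (Sym2 V)} (hS : IsTriangleClass S) :
    S.card = 3 := by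
  obtain ⟨a, b, d, hab, had, hbd, rfl⟩ := hS
  refine Finset.card_eq_three.mpr ⟨_, _, _, ?_, ?_, ?_, rfl⟩ <;> simp [*, eq_comm]

theorem IsTriangleClass.mem_or_mem {S : Finset (Sym2 V)} (hS : IsTriangleClass S) {a d : V}
    (ha : ∃ e ∈ S, a ∈ e) (hd : ∃ e ∈ S, d ∈ e) (had : a ≠ d) : ∀ f ∈ S, a ∈ f ∨ d ∈ f := by
  obtain ⟨x, y, z, hxy, hxz, hyz, rfl⟩ := hS
  simp only [Finset.mem_insert, Finset.mem_singleton, exists_eq_or_imp, exists_eq_left,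
    forall_eq_or_imp, forall_eq, Sym2.mem_iff] at ha hd ⊢
  grind

end TrianglesAndStars

namespace ProperKGColoring

variable {V : Type*} [Fintype V] [DecidableEq V] {G : SimpleGraph V} [DecidableRel G.Adj]
  {N : ℕ} {c : Sym2 V → Fin N}

theorem exists_mem_mem (hc : ProperKGColoring G c) {e f : Sym2 V} (he : e ∈ G.edgeFinset)
    (hf : f ∈ G.edgeFinset) (hef : c e = c f) (hne : e ≠ f) : ∃ x, x ∈ e ∧ x ∈ f := by
  by_contra h
  exact hc e he f hf (fun x hx => h ⟨x, hx⟩) hne hef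

theorem isStarClass_or_isTriangleClass [Nonempty V] (hc : ProperKGColoring G c) (i : Fin N) :
    IsStarClass (colorClass G c i) ∨ IsTriangleClass (colorClass G c i) := by
  refine _root_.isStarClass_or_isTriangleClass (fun e he => ?_) fun e he f hf => ?_
  · exact G.not_isDiag_of_mem_edgeSet
      (SimpleGraph.mem_edgeFinset.mp (Finset.mem_filter.mp he).1)
  simp only [colorClass, Finset.mem_filter] at he hf
  obtain rfl | hne := eq_or_ne e f
  · exact ⟨_, e.out_fst_mem, e.out_fst_mem⟩
  · exact hc.exists_mem_mem he.1 hf.1 (he.2.trans hf.2.symm) hne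

end ProperKGColoring

namespace SimpleGraph.Walk

variable {V : Type*} {G : SimpleGraph V} {u : V} {p : G.Walk u u}

theorem IsCycle.injective_getVert_val (hp : p.IsCycle) :
    Function.Injective fun j : ZMod p.length => p.getVert j.val := by
  have : NeZero p.length := ⟨by have := hp.three_le_length; omega⟩
  intro i j hij
  have hi := i.val_lt
  have hj := j.val_lt
  exact ZMod.val_injective _ (hp.getVert_injOn' (by simp; omega) (by simp; omega) hij)

variable [NeZero p.length]

theorem getVert_val_add_one (j : ZMod p.length) :
    p.getVert (j + 1).val = p.getVert (j.val + 1) := by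
  have hj := j.val_lt
  rw [← ZMod.natCast_zmod_val j, ← Nat.cast_add_one, ZMod.val_natCast, ZMod.val_natCast,
    Nat.mod_eq_of_lt hj]
  obtain hlt | heq := (show j.val + 1 ≤ p.length by omega).lt_or_eq
  · rw [Nat.mod_eq_of_lt hlt]
  · rw [heq, Nat.mod_self, getVert_zero, getVert_length]

theorem adj_getVert_val (j : ZMod p.length) :
    G.Adj (p.getVert j.val) (p.getVert (j + 1).val) := by
  rw [getVert_val_add_one]
  exact p.adj_getVert_succ j.val_lt

theorem mem_edges_iff_exists_zmod {e : Sym2 V} :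
    e ∈ p.edges ↔ ∃ j : ZMod p.length, e = s(p.getVert j.val, p.getVert (j + 1).val) := by
  simp only [getVert_val_add_one, List.mem_iff_getElem, getElem_edges, length_edges]
  constructor
  · rintro ⟨i, hi, rfl⟩
    exact ⟨i, by rw [ZMod.val_cast_of_lt hi]⟩
  · rintro ⟨j, rfl⟩
    exact ⟨j.val, j.val_lt, rfl⟩

end SimpleGraph.Walk

theorem ZMod.natCast_ne_zero_of_lt {a k : ℕ} (h0 : 0 < a) (h : a < k) : (a : ZMod k) ≠ 0 := by
  rw [Ne, ZMod.natCast_eq_zero_iff]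
  exact fun hdvd => absurd (Nat.le_of_dvd h0 hdvd) (by omega)

section CyclicRecoloring

variable {V : Type*} {k : ℕ} {v : ZMod k → V}

def cycleEdge (v : ZMod k → V) (j : ZMod k) : Sym2 V := s(v j, v (j + 1))

theorem mem_cycleEdge {x : V} {j : ZMod k} : x ∈ cycleEdge v j ↔ x = v j ∨ x = v (j + 1) :=
  Sym2.mem_iff

variable [Fintype V] {G : SimpleGraph V} [DecidableRel G.Adj]

theorem cycleEdge_mem_edgeFinset (hadj : ∀ j, G.Adj (v j) (v (j + 1))) (j : ZMod k) :
    cycleEdge v j ∈ G.edgeFinset :=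
  SimpleGraph.mem_edgeFinset.mpr (hadj j)

variable [DecidableEq V] {N : ℕ} {c : Sym2 V → Fin N}

theorem eq_or_eq_add_one_or_add_one_eq_of_color_cycleEdge_eq (hc : ProperKGColoring G c)
    (hv : Function.Injective v) (hadj : ∀ j, G.Adj (v j) (v (j + 1))) {i j : ZMod k}
    (h : c (cycleEdge v i) = c (cycleEdge v j)) : i = j ∨ i = j + 1 ∨ j = i + 1 := by
  by_cases hij : cycleEdge v i = cycleEdge v j
  · rcases Sym2.eq_iff.mp hij with ⟨h₁, -⟩ | ⟨h₁, -⟩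
    · exact .inl (hv h₁)
    · exact .inr (.inl (hv h₁))
  obtain ⟨x, hxi, hxj⟩ := hc.exists_mem_mem (cycleEdge_mem_edgeFinset hadj i)
    (cycleEdge_mem_edgeFinset hadj j) h hij
  rw [mem_cycleEdge] at hxi hxj
  rcases hxi with rfl | rfl <;> rcases hxj with h' | h' <;> have := hv h'
  · exact .inl this
  · exact .inr (.inl this)
  · exact .inr (.inr this.symm)
  · exact .inl (add_right_cancel this)

theorem color_cycleEdge_eq_of_three_consecutive (hc : ProperKGColoring G c)
    (hv : Function.Injective v) (hk : 3 ≤ k) (hadj : ∀ j, G.Adj (v j) (v (j + 1))) {j : ZMod k}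
    (h₁ : c (cycleEdge v j) = c (cycleEdge v (j + 1)))
    (h₂ : c (cycleEdge v (j + 1)) = c (cycleEdge v (j + 2))) :
    ∀ l, c (cycleEdge v l) = c (cycleEdge v j) := by
  have h1 : (1 : ZMod k) ≠ 0 := by exact_mod_cast ZMod.natCast_ne_zero_of_lt one_pos (by omega)
  have h2 : (2 : ZMod k) ≠ 0 := by exact_mod_cast ZMod.natCast_ne_zero_of_lt two_pos (by omega)
  -- the edges `j` and `j + 2` can only meet if the cycle closes up after three steps
  have h3 : ((3 : ℕ) : ZMod k) = 0 := by
    rcases eq_or_eq_add_one_or_add_one_eq_of_color_cycleEdge_eq hc hv hadj (h₁.trans h₂) with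
      h | h | h
    · exact absurd (by linear_combination -h) h2
    · push_cast; linear_combination -h
    · exact absurd (by linear_combination h) h1
  obtain rfl : k = 3 := Nat.le_antisymm (Nat.le_of_dvd (by norm_num)
    ((ZMod.natCast_eq_zero_iff _ _).mp h3)) hk
  intro l
  obtain h | h | h : l - j = 0 ∨ l - j = 1 ∨ l - j = 2 := by
    generalize l - j = a
    revert a
    decide
  · rw [sub_eq_zero.mp h]
  · rw [eq_add_of_sub_eq' h, h₁]
  · rw [eq_add_of_sub_eq' h, ← h₂, h₁]

def IsRunStart (c : Sym2 V → Fin N) (v : ZMod k → V) (j : ZMod k) : Prop :=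
  c (cycleEdge v j) ≠ c (cycleEdge v (j - 1))

theorem IsRunStart.eq_of_color_eq (hc : ProperKGColoring G c) (hv : Function.Injective v)
    (hadj : ∀ j, G.Adj (v j) (v (j + 1))) {i j : ZMod k} (hi : IsRunStart c v i)
    (hj : IsRunStart c v j) (h : c (cycleEdge v i) = c (cycleEdge v j)) : i = j := by
  rcases eq_or_eq_add_one_or_add_one_eq_of_color_cycleEdge_eq hc hv hadj h with h' | rfl | rfl
  · exact h'
  · exact absurd (by rwa [add_sub_cancel_right]) hi
  · exact absurd (by rw [add_sub_cancel_right]; exact h.symm) hj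

theorem exists_isRunStart (hc : ProperKGColoring G c) (hv : Function.Injective v) (hk : 3 ≤ k)
    (hadj : ∀ j, G.Adj (v j) (v (j + 1)))
    (hnc : ¬∀ j, c (cycleEdge v j) = c (cycleEdge v 0)) : ∃ j, IsRunStart c v j := by
  by_contra! h
  simp only [IsRunStart, not_not] at h
  refine hnc (color_cycleEdge_eq_of_three_consecutive hc hv hk hadj ?_ ?_)
  · simpa using (h 1).symm
  · simpa [show (2 : ZMod k) - 1 = 1 by ring] using (h 2).symm

def nextRunStart (c : Sym2 V → Fin N) (v : ZMod k → V) (j : ZMod k) : ZMod k :=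
  if c (cycleEdge v (j + 1)) = c (cycleEdge v j) then j + 2 else j + 1

theorem isRunStart_nextRunStart (hc : ProperKGColoring G c) (hv : Function.Injective v)
    (hk : 3 ≤ k) (hadj : ∀ j, G.Adj (v j) (v (j + 1)))
    (hnc : ¬∀ j, c (cycleEdge v j) = c (cycleEdge v 0)) (j : ZMod k) :
    IsRunStart c v (nextRunStart c v j) := by
  unfold nextRunStart
  split_ifs with hrun
  · rw [IsRunStart, show j + 2 - 1 = j + 1 by ring]
    intro h₂
    have hall := color_cycleEdge_eq_of_three_consecutive hc hv hk hadj hrun.symm h₂.symm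
    exact hnc fun l => (hall l).trans (hall 0).symm
  · rwa [IsRunStart, add_sub_cancel_right]

theorem mem_nextRunStart (hc : ProperKGColoring G c) (hv : Function.Injective v) (hk : 3 ≤ k)
    (hadj : ∀ j, G.Adj (v j) (v (j + 1))) {j : ZMod k}
    (htri : IsTriangleClass (colorClass G c (c (cycleEdge v j))))
    {f : Sym2 V} (hf : f ∈ colorClass G c (c (cycleEdge v j))) (hjf : v j ∉ f) :
    v (nextRunStart c v j) ∈ f := by
  have hej : cycleEdge v j ∈ colorClass G c (c (cycleEdge v j)) :=
    Finset.mem_filter.mpr ⟨cycleEdge_mem_edgeFinset hadj j, rfl⟩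
  unfold nextRunStart
  split_ifs with hrun
  · have hej' : cycleEdge v (j + 1) ∈ colorClass G c (c (cycleEdge v j)) :=
      Finset.mem_filter.mpr ⟨cycleEdge_mem_edgeFinset hadj _, hrun⟩
    have h2 : (2 : ZMod k) ≠ 0 := by exact_mod_cast ZMod.natCast_ne_zero_of_lt two_pos (by omega)
    refine (htri.mem_or_mem ⟨_, hej, mem_cycleEdge.mpr (.inl rfl)⟩
      ⟨_, hej', mem_cycleEdge.mpr (.inr (by rw [add_assoc, one_add_one_eq_two]))⟩
      (fun h => h2 ?_) f hf).resolve_left hjf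
    simpa using (hv h).symm
  · obtain ⟨x, hxf, hxj⟩ := hc.exists_mem_mem (Finset.mem_filter.mp hf).1
      (cycleEdge_mem_edgeFinset hadj j) (Finset.mem_filter.mp hf).2
      (fun h => hjf (h ▸ mem_cycleEdge.mpr (.inl rfl)))
    rcases mem_cycleEdge.mp hxj with rfl | rfl
    · exact absurd hxf hjf
    · exact hxf

structure IsCycleOfTriangleClasses (G : SimpleGraph V) [DecidableRel G.Adj]
    (c : Sym2 V → Fin N) (v : ZMod k → V) : Prop where
  proper : ProperKGColoring G c
  injective : Function.Injective v
  three_le : 3 ≤ k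
  adj : ∀ j, G.Adj (v j) (v (j + 1))
  not_monochromatic : ¬∀ j, c (cycleEdge v j) = c (cycleEdge v 0)
  isTriangleClass : ∀ j, IsTriangleClass (colorClass G c (c (cycleEdge v j)))

open Classical in
/-- The condition says that the class of `f` meets the cycle; `h.choose` is then the start of
its run, which is unique by `IsRunStart.eq_of_color_eq`. -/
noncomputable def runStarColoring (c : Sym2 V → Fin N) (v : ZMod k → V) (f : Sym2 V) : Fin N :=
  if h : ∃ j, IsRunStart c v j ∧ c (cycleEdge v j) = c f then
    if v h.choose ∈ f then c f else c (cycleEdge v (nextRunStart c v h.choose))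
  else c f

namespace IsCycleOfTriangleClasses

theorem exists_isRunStart_mem_of_runStarColoring (hC : IsCycleOfTriangleClasses G c v)
    {f : Sym2 V} (hf : f ∈ G.edgeFinset)
    (h : ∃ j, IsRunStart c v j ∧ c (cycleEdge v j) = c f) :
    ∃ j, IsRunStart c v j ∧ c (cycleEdge v j) = runStarColoring c v f ∧ v j ∈ f := by
  obtain ⟨hs, hcol⟩ := h.choose_spec
  rw [runStarColoring, dif_pos h]
  split_ifs with hmem
  · exact ⟨_, hs, hcol, hmem⟩
  · exact ⟨_, isRunStart_nextRunStart hC.proper hC.injective hC.three_le hC.adj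
      hC.not_monochromatic _, rfl, mem_nextRunStart hC.proper hC.injective hC.three_le hC.adj
      (hC.isTriangleClass _) (Finset.mem_filter.mpr ⟨hf, hcol.symm⟩) hmem⟩

theorem mem_of_runStarColoring_eq (hC : IsCycleOfTriangleClasses G c v) {j : ZMod k}
    (hj : IsRunStart c v j) {f : Sym2 V} (hf : f ∈ G.edgeFinset)
    (h : runStarColoring c v f = c (cycleEdge v j)) : v j ∈ f := by
  by_cases hf' : ∃ j, IsRunStart c v j ∧ c (cycleEdge v j) = c f
  · obtain ⟨j', hj', hcol, hmem⟩ := hC.exists_isRunStart_mem_of_runStarColoring hf hf'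
    rwa [← hj'.eq_of_color_eq hC.proper hC.injective hC.adj hj (hcol.trans h)]
  · rw [runStarColoring, dif_neg hf'] at h
    exact absurd ⟨j, hj, h.symm⟩ hf'

theorem runStarColoring_eq_iff (hC : IsCycleOfTriangleClasses G c v) {i : Fin N}
    (hi : ∀ j, IsRunStart c v j → c (cycleEdge v j) ≠ i)
    {f : Sym2 V} (hf : f ∈ G.edgeFinset) : runStarColoring c v f = i ↔ c f = i := by
  by_cases hf' : ∃ j, IsRunStart c v j ∧ c (cycleEdge v j) = c f
  · obtain ⟨j', hj', hcol, -⟩ := hC.exists_isRunStart_mem_of_runStarColoring hf hf'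
    obtain ⟨j, hj, hcf⟩ := hf'
    exact iff_of_false (fun h => hi _ hj' (hcol.trans h)) (fun h => hi _ hj (hcf.trans h))
  · rw [runStarColoring, dif_neg hf']

theorem properKGColoring_runStarColoring (hC : IsCycleOfTriangleClasses G c v) :
    ProperKGColoring G (runStarColoring c v) := by
  intro f hf g hg hdisj hne hfg
  by_cases hi : ∃ j, IsRunStart c v j ∧ c (cycleEdge v j) = runStarColoring c v f
  · obtain ⟨j, hj, hcol⟩ := hi
    exact hdisj (v j) ⟨hC.mem_of_runStarColoring_eq hj hf hcol.symm,
      hC.mem_of_runStarColoring_eq hj hg (hfg.symm.trans hcol.symm)⟩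
  · push Not at hi
    have hf' := (hC.runStarColoring_eq_iff hi hf).mp rfl
    have hg' := (hC.runStarColoring_eq_iff hi hg).mp hfg.symm
    exact hC.proper f hf g hg hdisj hne (hf'.trans hg'.symm)

theorem isStarClass_colorClass_runStarColoring (hC : IsCycleOfTriangleClasses G c v)
    {j : ZMod k} (hj : IsRunStart c v j) :
    IsStarClass (colorClass G (runStarColoring c v) (c (cycleEdge v j))) :=
  ⟨v j, fun _ hf => hC.mem_of_runStarColoring_eq hj (Finset.mem_filter.mp hf).1
    (Finset.mem_filter.mp hf).2⟩

theorem numTriangleClasses_runStarColoring_lt (hC : IsCycleOfTriangleClasses G c v) :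
    numTriangleClasses G (runStarColoring c v) < numTriangleClasses G c := by
  obtain ⟨j₀, hj₀⟩ := exists_isRunStart hC.proper hC.injective hC.three_le hC.adj
    hC.not_monochromatic
  refine Set.ncard_lt_ncard ⟨fun i hi => ?_, fun h =>
    (hC.isStarClass_colorClass_runStarColoring hj₀).not_isTriangleClass
      (h (hC.isTriangleClass j₀))⟩
  by_cases h : ∃ j, IsRunStart c v j ∧ c (cycleEdge v j) = i
  · obtain ⟨j, hj, rfl⟩ := h
    exact absurd hi (hC.isStarClass_colorClass_runStarColoring hj).not_isTriangleClass
  · push Not at h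
    have hclass : colorClass G (runStarColoring c v) i = colorClass G c i :=
      Finset.filter_congr fun _ hf => hC.runStarColoring_eq_iff h hf
    rwa [Set.mem_ofPred_eq, hclass] at hi

end IsCycleOfTriangleClasses

end CyclicRecoloring

theorem circuit_triangle_or_star_general {V : Type*} [Fintype V] [DecidableEq V]
    (G : SimpleGraph V) [DecidableRel G.Adj]
    (N : ℕ)
    (c : Sym2 V → Fin N) (hc : ProperKGColoring G c)
    (hmin : ∀ c' : Sym2 V → Fin N, ProperKGColoring G c' →
      numTriangleClasses G c ≤ numTriangleClasses G c') :
    ∀ (u : V) (p : G.Walk u u), p.IsCycle →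
      (∃ i : Fin N, IsTriangleClass (colorClass G c i) ∧
        p.edges.toFinset = colorClass G c i) ∨
      ∃ e ∈ p.edges, IsStarClass (colorClass G c (c e)) := by
  intro u p hp
  refine or_iff_not_imp_right.mpr fun hstar => ?_
  push Not at hstar
  have : NeZero p.length := ⟨by have := hp.three_le_length; omega⟩
  have : Nonempty V := ⟨u⟩
  set v : ZMod p.length → V := fun j => p.getVert j.val
  have hedges : ∀ e, e ∈ p.edges ↔ ∃ j, e = cycleEdge v j := fun _ =>
    p.mem_edges_iff_exists_zmod
  have htri : ∀ j, IsTriangleClass (colorClass G c (c (cycleEdge v j))) := fun j =>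
    (hc.isStarClass_or_isTriangleClass _).resolve_left (hstar _ ((hedges _).mpr ⟨j, rfl⟩))
  by_cases hmono : ∀ j, c (cycleEdge v j) = c (cycleEdge v 0)
  · refine ⟨_, htri 0, Finset.eq_of_subset_of_card_le (fun e he => ?_) ?_⟩
    · obtain ⟨j, rfl⟩ := (hedges e).mp (List.mem_toFinset.mp he)
      exact Finset.mem_filter.mpr ⟨cycleEdge_mem_edgeFinset p.adj_getVert_val j, hmono j⟩
    · rw [(htri 0).card_eq_three, List.toFinset_card_of_nodup hp.edges_nodup, p.length_edges]
      exact hp.three_le_length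
  · have hC : IsCycleOfTriangleClasses G c v :=
      ⟨hc, hp.injective_getVert_val, hp.three_le_length, p.adj_getVert_val, hmono, htri⟩
    exact ((hmin _ hC.properKGColoring_runStarColoring).not_gt
      hC.numTriangleClasses_runStarColoring_lt).elim

/-- Let `G` satisfy `χ(KG(G)) = cd₂(G)`, and consider an optimal proper coloring
of `KG(G)` (with `χ(KG(G))` colors) having a minimum number of triangle classes.
Then every circuit of `G` either is one of the triangle classes, or contains an
edge belonging to a star class. -/
theorem circuit_triangle_or_star {V : Type*} [Fintype V] [DecidableEq V]
    (G : SimpleGraph V) [DecidableRel G.Adj]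
    (hcd : (KGgraph G).chromaticNumber = ((cd2Graph G : ℕ) : ℕ∞))
    (N : ℕ) (hN : (KGgraph G).chromaticNumber = (N : ℕ∞))
    (c : Sym2 V → Fin N) (hc : ProperKGColoring G c)
    (hmin : ∀ c' : Sym2 V → Fin N, ProperKGColoring G c' →
      numTriangleClasses G c ≤ numTriangleClasses G c') :
    ∀ (u : V) (p : G.Walk u u), p.IsCycle →
      (∃ i : Fin N, IsTriangleClass (colorClass G c i) ∧
        p.edges.toFinset = colorClass G c i) ∨
      ∃ e ∈ p.edges, IsStarClass (colorClass G c (c e)) :=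
  circuit_triangle_or_star_general G N c hc hmin
end
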